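/- arXiv:1903.00300 — 4 statements merged into one kernel-verified Lean document; each statement's English description precedes it below -/
import Mathlib

section
/- Up to cyclic rotation: (i) the only quiddity cycle containing two cyclically consecutive entries both equal to 1 is (1,1,1); (ii) the only quiddity cycles containing three cyclically consecutive entries equal to (1,2,1) are (1,2,1,2) and (2,1,2,1). -/
/-- Quiddity cycles: finite integer sequences, considered up to cyclic rotation, built
from `(0,0)` by repeatedly replacing two consecutive entries `a, b` by `a+1, 1, b+1`. -/
inductive IsQuiddity : List ℤ → Prop
  | base : IsQuiddity [0, 0]
  | step (l₁ l₂ : List ℤ) (a b : ℤ) :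
      IsQuiddity (l₁ ++ a :: b :: l₂) →
      IsQuiddity (l₁ ++ (a + 1) :: 1 :: (b + 1) :: l₂)
  | rot (l : List ℤ) (n : ℕ) : IsQuiddity l → IsQuiddity (l.rotate n)

open List


lemma infix_double_of_cyc {p l : List ℤ} (h : ∃ n, p <+: l.rotate n) :
    p.length ≤ l.length ∧ p <:+: l ++ l := by
  obtain ⟨n, hn⟩ := h
  rcases eq_or_ne l [] with rfl | hl
  · simp only [rotate_nil] at hn
    have : p = [] := List.prefix_nil.mp hn
    subst this; simp
  · have hm : n % l.length < l.length := Nat.mod_lt _ (List.length_pos_iff.2 hl)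
    rw [← List.rotate_mod] at hn
    constructor
    · simpa using hn.length_le
    · refine hn.isInfix.trans ?_
      refine ⟨l.take (n % l.length), l.drop (n % l.length), ?_⟩
      rw [rotate_eq_drop_append_take hm.le]
      conv_rhs => rw [← take_append_drop (n % l.length) l]
      simp only [List.append_assoc, take_append_drop]
      rw [← List.append_assoc, take_append_drop]

lemma cyc_of_infix_double {p l : List ℤ} (hlen : p.length ≤ l.length) (h : p <:+: l ++ l) :
    ∃ n, p <+: l.rotate n := by
  obtain ⟨s, t, hst⟩ := h
  have hd : (l ++ l).drop s.length = p ++ t := by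
    rw [← hst, List.append_assoc, List.drop_append]
    simp
  by_cases hi : s.length ≤ l.length
  · refine ⟨s.length, ?_⟩
    have hd2 : (l ++ l).drop s.length = l.drop s.length ++ l := by
      rw [List.drop_append]
      have : s.length - l.length = 0 := by omega
      rw [this, List.drop_zero]
    have hp : p <+: l.drop s.length ++ l := ⟨t, by rw [← hd2, hd]⟩
    have hr : l.rotate s.length <+: l.drop s.length ++ l := by
      rw [rotate_eq_drop_append_take hi]
      exact (List.prefix_append_right_inj _).2 (l.take_prefix _)
    exact List.prefix_of_prefix_length_le hp hr (by simpa using hlen)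
  · push_neg at hi
    have hlen2 : s.length ≤ l.length + l.length := by
      have := congrArg List.length hst
      simp at this
      omega
    refine ⟨s.length - l.length, ?_⟩
    have hd2 : (l ++ l).drop s.length = l.drop (s.length - l.length) := by
      rw [List.drop_append]
      have : l.drop s.length = [] := List.drop_eq_nil_of_le (by omega)
      rw [this, List.nil_append]
    have hp : p <+: l.drop (s.length - l.length) := ⟨t, by rw [← hd2, hd]⟩
    rw [rotate_eq_drop_append_take (by omega : s.length - l.length ≤ l.length)]
    exact hp.trans ((l.drop _).prefix_append _)

lemma pair_split (u : List ℤ) (v : List ℤ) (X Y : ℤ) (hX : X ≠ 1) (hY : Y ≠ 1)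
    (h : [1, 1] <:+: (u ++ X :: 1 :: Y :: v)) : [1, 1] <:+: u ∨ [1, 1] <:+: v := by
  induction u with
  | nil =>
    simp only [List.nil_append] at h
    rw [List.infix_cons_iff] at h
    rcases h with h | h
    · rw [List.cons_prefix_cons] at h; exact absurd h.1.symm hX
    rw [List.infix_cons_iff] at h
    rcases h with h | h
    · rw [List.cons_prefix_cons, List.cons_prefix_cons] at h
      exact absurd h.2.1.symm hY
    rw [List.infix_cons_iff] at h
    rcases h with h | h
    · rw [List.cons_prefix_cons] at h; exact absurd h.1.symm hY
    · exact Or.inr h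
  | cons c u ih =>
    rw [List.cons_append, List.infix_cons_iff] at h
    rcases h with h | h
    · rw [List.cons_prefix_cons] at h
      obtain ⟨hc, h⟩ := h
      match u, h with
      | [], h => rw [List.nil_append, List.cons_prefix_cons] at h; exact absurd h.1.symm hX
      | d :: u, h =>
        rw [List.cons_append, List.cons_prefix_cons] at h
        exact Or.inl ⟨[], u, by simp [hc.symm, h.1.symm]⟩
    · rcases ih h with h | h
      · exact Or.inl (h.trans ((List.suffix_cons c u).isInfix))
      · exact Or.inr h

lemma triple_split (u : List ℤ) (v : List ℤ) (X Y : ℤ) (hX : X ≠ 1) (hY : Y ≠ 1)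
    (h : [1, 2, 1] <:+: (u ++ X :: 1 :: Y :: v)) :
    [1, 2, 1] <:+: u ∨ [1, 2, 1] <:+: v ∨ (X = 2 ∧ [1] <:+ u) ∨ (Y = 2 ∧ [1] <+: v) := by
  induction u with
  | nil =>
    simp only [List.nil_append] at h
    rw [List.infix_cons_iff] at h
    rcases h with h | h
    · rw [List.cons_prefix_cons] at h; exact absurd h.1.symm hX
    rw [List.infix_cons_iff] at h
    rcases h with h | h
    · rw [List.cons_prefix_cons, List.cons_prefix_cons] at h
      exact Or.inr (Or.inr (Or.inr ⟨h.2.1.symm, h.2.2⟩))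
    rw [List.infix_cons_iff] at h
    rcases h with h | h
    · rw [List.cons_prefix_cons] at h; exact absurd h.1.symm hY
    · exact Or.inr (Or.inl h)
  | cons c u ih =>
    rw [List.cons_append, List.infix_cons_iff] at h
    rcases h with h | h
    · rw [List.cons_prefix_cons] at h
      obtain ⟨hc, h⟩ := h
      match u, h with
      | [], h =>
        rw [List.nil_append, List.cons_prefix_cons] at h
        obtain ⟨h2, h⟩ := h
        rw [List.cons_prefix_cons] at h
        exact Or.inr (Or.inr (Or.inl ⟨h2.symm, by simp [hc.symm]⟩))
      | [d], h =>
        rw [List.singleton_append, List.cons_prefix_cons, List.cons_prefix_cons] at h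
        exact absurd h.2.1.symm hX
      | d :: e :: u, h =>
        rw [List.cons_append, List.cons_append, List.cons_prefix_cons, List.cons_prefix_cons] at h
        exact Or.inl ⟨[], u, by simp [hc.symm, h.1.symm, h.2.1.symm]⟩
    · rcases ih h with h | h | h | h
      · exact Or.inl (h.trans ((List.suffix_cons c u).isInfix))
      · exact Or.inr (Or.inl h)
      · exact Or.inr (Or.inr (Or.inl ⟨h.1, h.2.trans (List.suffix_cons _ _)⟩))
      · exact Or.inr (Or.inr (Or.inr h))

lemma rotate00 (n : ℕ) : ([0, 0] : List ℤ).rotate n = [0, 0] := by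
  rw [← List.rotate_mod]
  have h : n % ([0, 0] : List ℤ).length = 0 ∨ n % ([0, 0] : List ℤ).length = 1 := by
    simp only [List.length]; omega
  rcases h with h | h <;> rw [h] <;> decide

lemma exists_rotate_rotate {l t : List ℤ} (n : ℕ) (h : ∃ k, l.rotate k = t) :
    ∃ k, (l.rotate n).rotate k = t :=
  ((List.IsRotated.symm ⟨n, rfl⟩).trans (h : l ~r t) : l.rotate n ~r t)

lemma rot_of_111 {l : List ℤ} {k : ℕ} (h : l.rotate k = [1, 1, 1]) : l = [1, 1, 1] := by
  have hlen : l.length = 3 := by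
    have := congrArg List.length h; simpa using this
  have hmem : ∀ x ∈ l, x = (1 : ℤ) := by
    intro x hx
    have : x ∈ l.rotate k := List.mem_rotate.2 hx
    rw [h] at this
    simpa using this
  have : l = List.replicate 3 (1 : ℤ) := List.eq_replicate_iff.2 ⟨hlen, hmem⟩
  simpa [List.replicate] using this

lemma rot_of_1212 {l : List ℤ} {k : ℕ} (h : l.rotate k = [1, 2, 1, 2]) :
    l = [1, 2, 1, 2] ∨ l = [2, 1, 2, 1] := by
  have h1 : ([1, 2, 1, 2] : List ℤ) ~r l := (List.IsRotated.symm ⟨k, h⟩)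
  obtain ⟨m, hm⟩ := h1
  rw [← List.rotate_mod] at hm
  have h4 : m % ([1, 2, 1, 2] : List ℤ).length = 0 ∨ m % ([1, 2, 1, 2] : List ℤ).length = 1 ∨
      m % ([1, 2, 1, 2] : List ℤ).length = 2 ∨ m % ([1, 2, 1, 2] : List ℤ).length = 3 := by
    simp only [List.length]; omega
  rcases h4 with h4 | h4 | h4 | h4 <;> rw [h4] at hm <;> rw [← hm] <;> [left; right; left; right] <;> decide

lemma rot_of_2121 {l : List ℤ} {k : ℕ} (h : l.rotate k = [2, 1, 2, 1]) :
    l = [1, 2, 1, 2] ∨ l = [2, 1, 2, 1] := by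
  have : l.rotate (k + 1) = [1, 2, 1, 2] := by
    rw [← List.rotate_rotate, h]; decide
  exact rot_of_1212 this


lemma decomp111 {l₁ l₂ : List ℤ} {a b : ℤ} (h : l₁ ++ a :: b :: l₂ = [1, 1, 1]) :
    (l₁ = [] ∧ a = 1 ∧ b = 1 ∧ l₂ = [1]) ∨ (l₁ = [1] ∧ a = 1 ∧ b = 1 ∧ l₂ = []) := by
  rcases l₁ with _ | ⟨x, l₁⟩
  · left; simp_all
  · rcases l₁ with _ | ⟨y, l₁⟩
    · right; simp_all
    · exfalso; have := congrArg List.length h; simp at this; omega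

lemma decomp1212 {l₁ l₂ : List ℤ} {a b : ℤ} (h : l₁ ++ a :: b :: l₂ = [1, 2, 1, 2]) :
    (l₁ = [] ∧ a = 1 ∧ b = 2 ∧ l₂ = [1, 2]) ∨ (l₁ = [1] ∧ a = 2 ∧ b = 1 ∧ l₂ = [2]) ∨
      (l₁ = [1, 2] ∧ a = 1 ∧ b = 2 ∧ l₂ = []) := by
  rcases l₁ with _ | ⟨x, _ | ⟨y, _ | ⟨z, l₁⟩⟩⟩
  · left; simp_all
  · right; left; simp_all
  · right; right; simp_all
  · exfalso; have := congrArg List.length h; simp at this; omega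

lemma decomp2121 {l₁ l₂ : List ℤ} {a b : ℤ} (h : l₁ ++ a :: b :: l₂ = [2, 1, 2, 1]) :
    (l₁ = [] ∧ a = 2 ∧ b = 1 ∧ l₂ = [2, 1]) ∨ (l₁ = [2] ∧ a = 1 ∧ b = 2 ∧ l₂ = [1]) ∨
      (l₁ = [2, 1] ∧ a = 2 ∧ b = 1 ∧ l₂ = []) := by
  rcases l₁ with _ | ⟨x, _ | ⟨y, _ | ⟨z, l₁⟩⟩⟩
  · left; simp_all
  · right; left; simp_all
  · right; right; simp_all
  · exfalso; have := congrArg List.length h; simp at this; omega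

/-- From a cyclic `[1,1]` occurrence in `l = l₁ ++ a :: b :: l₂`, conclude the new list
is `[1,2,1,2]` or `[2,1,2,1]`. -/
lemma onepair_case {l₁ l₂ : List ℤ} {a b : ℤ}
    (A : (∃ n, [1, 1] <+: (l₁ ++ a :: b :: l₂).rotate n) →
      ∃ n, (l₁ ++ a :: b :: l₂).rotate n = [1, 1, 1])
    (hpair : [1, 1] <:+: (l₁ ++ a :: b :: l₂) ++ (l₁ ++ a :: b :: l₂)) :
    ∃ n, (l₁ ++ (a + 1) :: 1 :: (b + 1) :: l₂).rotate n = [1, 2, 1, 2] ∨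
      (l₁ ++ (a + 1) :: 1 :: (b + 1) :: l₂).rotate n = [2, 1, 2, 1] := by
  obtain ⟨k, hk⟩ := A (cyc_of_infix_double (by simp; omega) hpair)
  rcases decomp111 (rot_of_111 hk) with ⟨h1, h2, h3, h4⟩ | ⟨h1, h2, h3, h4⟩ <;>
    subst h1 <;> subst h2 <;> subst h3 <;> subst h4
  · exact ⟨0, Or.inr (by decide)⟩
  · exact ⟨0, Or.inl (by decide)⟩
lemma last_of_suffix_singleton {c x : ℤ} {w : List ℤ} (h : [c] <:+ w ++ [x]) : c = x := by
  obtain ⟨s, hs⟩ := h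
  have h2 := (List.append_inj' hs rfl).2
  simpa using h2

lemma seam_pair {l₁ l₂ : List ℤ} {a b : ℤ} (ha : a = 1) (hsuf : [1] <:+ l₂ ++ l₁)
    (A : (∃ n, [1, 1] <+: (l₁ ++ a :: b :: l₂).rotate n) →
      ∃ n, (l₁ ++ a :: b :: l₂).rotate n = [1, 1, 1]) :
    ∃ n, (l₁ ++ (a + 1) :: 1 :: (b + 1) :: l₂).rotate n = [1, 2, 1, 2] ∨
      (l₁ ++ (a + 1) :: 1 :: (b + 1) :: l₂).rotate n = [2, 1, 2, 1] := by
  subst ha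
  apply onepair_case A
  rcases l₁.eq_nil_or_concat with rfl | ⟨u, x, rfl⟩
  · obtain ⟨w, hw⟩ := hsuf
    simp only [List.append_nil] at hw
    subst hw
    exact ⟨1 :: b :: w, b :: (w ++ [1]), by simp⟩
  · simp only [List.concat_eq_append] at *
    rw [← List.append_assoc] at hsuf
    have hx := last_of_suffix_singleton hsuf
    subst hx
    exact ⟨u, b :: l₂ ++ ((u ++ [1]) ++ 1 :: b :: l₂), by simp⟩

lemma head_pair {l₁ l₂ : List ℤ} {a b : ℤ} (hb : b = 1) (hX : a + 1 ≠ 1)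
    (hpre : [1] <+: (l₂ ++ l₁) ++ (a + 1) :: 1 :: (b + 1) :: l₂)
    (A : (∃ n, [1, 1] <+: (l₁ ++ a :: b :: l₂).rotate n) →
      ∃ n, (l₁ ++ a :: b :: l₂).rotate n = [1, 1, 1]) :
    ∃ n, (l₁ ++ (a + 1) :: 1 :: (b + 1) :: l₂).rotate n = [1, 2, 1, 2] ∨
      (l₁ ++ (a + 1) :: 1 :: (b + 1) :: l₂).rotate n = [2, 1, 2, 1] := by
  subst hb
  apply onepair_case A
  rcases l₂ with _ | ⟨c, l₂⟩
  · rcases l₁ with _ | ⟨d, l₁⟩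
    · exfalso
      simp only [List.nil_append, List.append_nil] at hpre
      rw [List.cons_prefix_cons] at hpre
      exact hX hpre.1.symm
    · simp only [List.nil_append, List.append_nil, List.cons_append] at hpre
      rw [List.cons_prefix_cons] at hpre
      obtain ⟨hd, -⟩ := hpre
      subst hd
      exact ⟨1 :: (l₁ ++ [a]), l₁ ++ [a, 1], by simp⟩
  · simp only [List.cons_append] at hpre
    rw [List.cons_prefix_cons] at hpre
    obtain ⟨hc, -⟩ := hpre
    subst hc
    refine List.IsInfix.trans ⟨l₁ ++ [a], l₂, by simp⟩ ((List.prefix_append _ _).isInfix)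

lemma triple_case {l₁ l₂ : List ℤ} {a b : ℤ}
    (B : (∃ n, [1, 2, 1] <+: (l₁ ++ a :: b :: l₂).rotate n) →
      ∃ n, (l₁ ++ a :: b :: l₂).rotate n = [1, 2, 1, 2] ∨
        (l₁ ++ a :: b :: l₂).rotate n = [2, 1, 2, 1])
    (hlen : 3 ≤ l₁.length + l₂.length + 2)
    (htr : [1, 2, 1] <:+: (l₁ ++ a :: b :: l₂) ++ (l₁ ++ a :: b :: l₂))
    (hinf : [1, 2, 1] <:+: (l₁ ++ (a + 1) :: 1 :: (b + 1) :: l₂) ++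
      (l₁ ++ (a + 1) :: 1 :: (b + 1) :: l₂)) : False := by
  obtain ⟨k, hk⟩ := B (cyc_of_infix_double (by simp; omega) htr)
  have hl : l₁ ++ a :: b :: l₂ = [1, 2, 1, 2] ∨ l₁ ++ a :: b :: l₂ = [2, 1, 2, 1] := by
    rcases hk with hk | hk
    · exact rot_of_1212 hk
    · exact rot_of_2121 hk
  rcases hl with hl | hl
  · rcases decomp1212 hl with ⟨h1, h2, h3, h4⟩ | ⟨h1, h2, h3, h4⟩ | ⟨h1, h2, h3, h4⟩ <;>
      subst h1 <;> subst h2 <;> subst h3 <;> subst h4 <;>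
      exact absurd hinf (by decide)
  · rcases decomp2121 hl with ⟨h1, h2, h3, h4⟩ | ⟨h1, h2, h3, h4⟩ | ⟨h1, h2, h3, h4⟩ <;>
      subst h1 <;> subst h2 <;> subst h3 <;> subst h4 <;>
      exact absurd hinf (by decide)
theorem quiddity_main (l : List ℤ) (h : IsQuiddity l) :
    ((∀ x ∈ l, 1 ≤ x) ∨ l = [0, 0]) ∧
    ((∃ n, [1, 1] <+: l.rotate n) → ∃ n, l.rotate n = [1, 1, 1]) ∧
    ((∃ n, [1, 2, 1] <+: l.rotate n) →
      ∃ n, l.rotate n = [1, 2, 1, 2] ∨ l.rotate n = [2, 1, 2, 1]) := by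
  induction h with
  | base =>
    refine ⟨Or.inr rfl, fun hc => ?_, fun hc => ?_⟩
    · exact absurd (infix_double_of_cyc hc).2 (by decide)
    · exact absurd (infix_double_of_cyc hc).2 (by decide)
  | rot l n _ ih =>
    obtain ⟨P, A, B⟩ := ih
    refine ⟨?_, fun hc => ?_, fun hc => ?_⟩
    · rcases P with P | P
      · exact Or.inl fun x hx => P x (List.mem_rotate.1 hx)
      · subst P; exact Or.inr (rotate00 n)
    · obtain ⟨m, hm⟩ := hc
      rw [List.rotate_rotate] at hm
      exact exists_rotate_rotate n (A ⟨n + m, hm⟩)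
    · obtain ⟨m, hm⟩ := hc
      rw [List.rotate_rotate] at hm
      obtain ⟨k, hk⟩ := B ⟨n + m, hm⟩
      rcases hk with hk | hk
      · obtain ⟨k', hk'⟩ := exists_rotate_rotate n ⟨k, hk⟩
        exact ⟨k', Or.inl hk'⟩
      · obtain ⟨k', hk'⟩ := exists_rotate_rotate n ⟨k, hk⟩
        exact ⟨k', Or.inr hk'⟩
  | step l₁ l₂ a b _ ih =>
    obtain ⟨P, A, B⟩ := ih
    rcases P with hpos | h00
    · -- all entries of l are ≥ 1
      have ha : (1 : ℤ) ≤ a := hpos a (by simp)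
      have hb : (1 : ℤ) ≤ b := hpos b (by simp)
      have hX : a + 1 ≠ 1 := by omega
      have hY : b + 1 ≠ 1 := by omega
      refine ⟨Or.inl ?_, fun hc => ?_, fun hc => ?_⟩
      · intro x hx
        simp only [List.mem_append, List.mem_cons] at hx
        rcases hx with hx | hx | hx | hx | hx
        · exact hpos x (by simp [hx])
        · omega
        · omega
        · omega
        · exact hpos x (by simp [hx])
      · -- part (i)
        exfalso
        obtain ⟨-, hinf⟩ := infix_double_of_cyc hc
        have hinf' : [1, 1] <:+: l₁ ++ (a + 1) :: 1 :: (b + 1) ::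
            ((l₂ ++ l₁) ++ (a + 1) :: 1 :: (b + 1) :: l₂) := by
          simpa only [List.append_assoc, List.cons_append] using hinf
        have hpair : [1, 1] <:+: (l₁ ++ a :: b :: l₂) ++ (l₁ ++ a :: b :: l₂) := by
          rcases pair_split _ _ _ _ hX hY hinf' with h1 | h2
          · exact h1.trans ((l₁.prefix_append (a :: b :: l₂)).trans
              ((l₁ ++ a :: b :: l₂).prefix_append _)).isInfix
          · rcases pair_split _ _ _ _ hX hY h2 with h3 | h4
            · exact h3.trans ⟨l₁ ++ [a, b], a :: b :: l₂, by simp⟩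
            · exact h4.trans (List.IsSuffix.isInfix (⟨(l₁ ++ a :: b :: l₂) ++ l₁ ++ [a, b], by simp⟩ :
                l₂ <:+ (l₁ ++ a :: b :: l₂) ++ (l₁ ++ a :: b :: l₂)))
        obtain ⟨k, hk⟩ := A (cyc_of_infix_double (by simp; omega) hpair)
        rcases decomp111 (rot_of_111 hk) with ⟨h1, h2, h3, h4⟩ | ⟨h1, h2, h3, h4⟩ <;>
          subst h1 <;> subst h2 <;> subst h3 <;> subst h4 <;>
          exact absurd hinf (by decide)
      · -- part (ii)
        obtain ⟨-, hinf⟩ := infix_double_of_cyc hc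
        have hinf' : [1, 2, 1] <:+: l₁ ++ (a + 1) :: 1 :: (b + 1) ::
            ((l₂ ++ l₁) ++ (a + 1) :: 1 :: (b + 1) :: l₂) := by
          simpa only [List.append_assoc, List.cons_append] using hinf
        rcases triple_split _ _ _ _ hX hY hinf' with h1 | h2 | ⟨ha2, hsuf⟩ | ⟨hb2, hpre⟩
        · exfalso
          have hl3 : 3 ≤ l₁.length := by simpa using h1.length_le
          exact triple_case B (by omega)
            (h1.trans ((l₁.prefix_append (a :: b :: l₂)).trans
              ((l₁ ++ a :: b :: l₂).prefix_append _)).isInfix) hinf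
        · rcases triple_split _ _ _ _ hX hY h2 with g1 | g2 | ⟨ga, gsuf⟩ | ⟨gb, gpre⟩
          · exfalso
            have hl3 : 3 ≤ l₂.length + l₁.length := by simpa using g1.length_le
            exact triple_case B (by omega)
              (g1.trans ⟨l₁ ++ [a, b], a :: b :: l₂, by simp⟩) hinf
          · exfalso
            have hl3 : 3 ≤ l₂.length := by simpa using g2.length_le
            exact triple_case B (by omega)
              (g2.trans (List.IsSuffix.isInfix (⟨(l₁ ++ a :: b :: l₂) ++ l₁ ++ [a, b], by simp⟩ :
                l₂ <:+ (l₁ ++ a :: b :: l₂) ++ (l₁ ++ a :: b :: l₂)))) hinf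
          · exact seam_pair (by omega) gsuf A
          · rcases l₂ with _ | ⟨c, l₂⟩
            · exact absurd gpre (by simp)
            · rw [List.cons_prefix_cons] at gpre
              obtain ⟨hc1, -⟩ := gpre
              subst hc1
              exact head_pair (by omega) hX ⟨(l₂ ++ l₁) ++ (a + 1) :: 1 :: (b + 1) :: 1 :: l₂, rfl⟩ A
        · exact seam_pair (by omega) (hsuf.trans (List.suffix_append l₂ l₁)) A
        · exact head_pair (by omega) hX hpre A
    · -- l = [0,0]
      have hl1 : l₁ = [] := by
        have hh := congrArg List.length h00
        simp at hh
        exact List.length_eq_zero_iff.1 (by omega)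
      subst hl1
      simp only [List.nil_append] at h00 ⊢
      injection h00 with ha h00
      injection h00 with hb h00
      subst ha; subst hb; subst h00
      refine ⟨Or.inl (by decide), fun _ => ⟨0, by decide⟩, fun hc => ?_⟩
      exact absurd (infix_double_of_cyc hc).2 (by decide)


/-- (i) Up to cyclic rotation, the only quiddity cycle containing two cyclically
consecutive entries equal to `1` is `(1,1,1)`; (ii) the only quiddity cycles containing
three cyclically consecutive entries `(1,2,1)` are `(1,2,1,2)` and `(2,1,2,1)`. -/
theorem stmt3 :
    (∀ l : List ℤ, IsQuiddity l → (∃ n, [1, 1] <+: l.rotate n) →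
      ∃ n, l.rotate n = [1, 1, 1]) ∧
    (∀ l : List ℤ, IsQuiddity l → (∃ n, [1, 2, 1] <+: l.rotate n) →
      ∃ n, l.rotate n = [1, 2, 1, 2] ∨ l.rotate n = [2, 1, 2, 1]) := by
  exact ⟨fun l h hc => (quiddity_main l h).2.1 hc, fun l h hc => (quiddity_main l h).2.2 hc⟩
end

section
/- Let (𝒜, V, ℛ) be a crystallographic arrangement of rank two and K a chamber. Then: (1) every α ∈ R^K_+ is either a simple root or the sum of two elements of R^K_+; (2) if αᵢ, α_j are distinct simple roots and k·αᵢ + α_j ∈ R^K_+ for some k ∈ ℕ₀, then ℓ·αᵢ + α_j ∈ R^K_+ for all ℓ = 0, …, k. -/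
open Set

noncomputable section

abbrev Vr (r : ℕ) := Fin r → ℝ
abbrev DualV (r : ℕ) := Module.Dual ℝ (Vr r)

/-- The complement of the union of the hyperplanes of the arrangement. -/
def ArrComplement {r : ℕ} (A : Set (Submodule ℝ (Vr r))) : Set (Vr r) :=
  {v | ∀ H ∈ A, v ∉ H}

/-- A chamber is a connected component of the complement. -/
def IsChamber {r : ℕ} (A : Set (Submodule ℝ (Vr r))) (K : Set (Vr r)) : Prop :=
  ∃ x ∈ ArrComplement A, K = connectedComponentIn (ArrComplement A) x

/-- The open simplicial cone spanned by a family of vectors. -/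
def OpenCone {r : ℕ} (b : Fin r → Vr r) : Set (Vr r) :=
  {v | ∃ a : Fin r → ℝ, (∀ i, 0 < a i) ∧ v = ∑ i, a i • b i}

/-- A linear hyperplane: the kernel of a nonzero linear form. -/
def IsHyperplane {r : ℕ} (H : Submodule ℝ (Vr r)) : Prop :=
  ∃ f : DualV r, f ≠ 0 ∧ H = LinearMap.ker f

/-- A simplicial arrangement: a finite set of linear hyperplanes all of whose
chambers are open simplicial cones. -/
def IsSimplicial {r : ℕ} (A : Set (Submodule ℝ (Vr r))) : Prop :=
  A.Finite ∧ (∀ H ∈ A, IsHyperplane H) ∧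
    ∀ K, IsChamber A K → ∃ b : Fin r → Vr r, LinearIndependent ℝ b ∧ K = OpenCone b

/-- The walls of a chamber `K`: elements of `R` that are nonnegative on `K` and whose
kernel intersected with the closure of `K` spans the kernel. -/
def Walls {r : ℕ} (R : Set (DualV r)) (K : Set (Vr r)) : Set (DualV r) :=
  {α | α ∈ R ∧ (∀ x ∈ K, 0 ≤ α x) ∧
    Submodule.span ℝ ((LinearMap.ker α : Set (Vr r)) ∩ closure K) = LinearMap.ker α}

/-- A crystallographic arrangement `(𝒜, V, ℛ)`. -/
def IsCrystArr {r : ℕ} (A : Set (Submodule ℝ (Vr r))) (R : Set (DualV r)) : Prop :=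
  R.Finite ∧ IsSimplicial A ∧ A = (fun α => LinearMap.ker α) '' R ∧
    (∀ α ∈ R, {β | ∃ c : ℝ, β = c • α} ∩ R = {α, -α}) ∧
    ∀ K, IsChamber A K → ∀ α ∈ R, α ∈ Submodule.span ℤ (Walls R K)

/-- `w` is an ordered enumeration of the walls of the chamber `K`. -/
def IsWallBasis {r : ℕ} (R : Set (DualV r)) (K : Set (Vr r)) (w : Fin r → DualV r) : Prop :=
  Function.Injective w ∧ Set.range w = Walls R K

/-- The roots of `R` at a chamber, in integer coordinates with respect to
the wall basis `w`. -/
def RootsAt {r : ℕ} (R : Set (DualV r)) (w : Fin r → DualV r) : Set (Fin r → ℤ) :=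
  {c | (∑ i, (c i : ℝ) • w i) ∈ R}

/-- The positive roots at a chamber. -/
def PosRootsAt {r : ℕ} (R : Set (DualV r)) (w : Fin r → DualV r) : Set (Fin r → ℤ) :=
  {c ∈ RootsAt R w | ∀ i, 0 ≤ c i}

/-- The Cartan matrix entry of a root set (in coordinates):
`c_{ii} = 2` and `c_{ij} = -max {k ∈ ℕ₀ | k·αᵢ + α_j ∈ Rts}` for `i ≠ j`. -/
def cartanEntry {r : ℕ} (Rts : Set (Fin r → ℤ)) (i j : Fin r) : ℤ :=
  if i = j then 2
  else -(sSup {k : ℤ | 0 ≤ k ∧ k • Pi.single i 1 + Pi.single j 1 ∈ Rts})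

/-- Irreducibility: the arrangement is not a nontrivial product. -/
def IsIrredArr {r : ℕ} (A : Set (Submodule ℝ (Vr r))) : Prop :=
  ¬ ∃ W₁ W₂ : Submodule ℝ (Vr r), IsCompl W₁ W₂ ∧ W₁ ≠ ⊥ ∧ W₂ ≠ ⊥ ∧
      ∀ H ∈ A, W₁ ≤ H ∨ W₂ ≤ H

/-- `Vol m` of `m` integer vectors: the product of the elementary divisors of the
matrix with these columns, i.e. the gcd of all maximal minors. -/
def Vol {r : ℕ} (m : ℕ) (v : Fin m → (Fin r → ℤ)) : ℤ :=
  Finset.univ.gcd fun f : Fin m → Fin r => (Matrix.of fun i j => v j (f i)).det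

namespace CA2
open Finset

def cr (u v : Fin 2 → ℤ) : ℤ := u 0 * v 1 - u 1 * v 0

lemma cr_skew (u v : Fin 2 → ℤ) : cr u v = - cr v u := by unfold cr; ring

lemma cr_self (u : Fin 2 → ℤ) : cr u u = 0 := by unfold cr; ring

lemma cramer (u m z : Fin 2 → ℤ) (i : Fin 2) :
    cr u m * z i = cr u z * m i + cr z m * u i := by
  match i with
  | 0 => unfold cr; ring
  | 1 => unfold cr; ring

lemma fin2_ne {i j : Fin 2} (h : i ≠ j) (t : Fin 2) : t = i ∨ t = j := by
  fin_cases i <;> fin_cases j <;> fin_cases t <;> simp_all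

lemma trans_strict {a b c : Fin 2 → ℤ} (ha : ∀ i, 0 ≤ a i)
    (hc : ∀ i, 0 ≤ c i) (hb : ∀ i, 0 ≤ b i)
    (hab : 0 < cr a b) (hbc : 0 < cr b c) : 0 < cr a c := by
  have ha0 := ha 0; have ha1 := ha 1; have hb0 := hb 0; have hb1 := hb 1
  have hc0 := hc 0; have hc1 := hc 1
  by_contra hle
  push_neg at hle
  rcases lt_or_eq_of_le hb0 with hb0' | hb0'
  · have h0 := cramer a c b 0
    have h2 : cr a c * b 0 ≤ 0 := mul_nonpos_of_nonpos_of_nonneg hle hb0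
    have h3 : 0 ≤ cr a b * c 0 := mul_nonneg hab.le hc0
    have h4 : 0 ≤ cr b c * a 0 := mul_nonneg hbc.le ha0
    have hc0' : c 0 = 0 := by
      by_contra hh
      have : 0 < cr a b * c 0 := mul_pos hab (lt_of_le_of_ne hc0 (Ne.symm hh))
      linarith
    have ha0' : a 0 = 0 := by
      by_contra hh
      have : 0 < cr b c * a 0 := mul_pos hbc (lt_of_le_of_ne ha0 (Ne.symm hh))
      linarith
    unfold cr at hab
    nlinarith
  · have hb1' : 0 < b 1 := by
      rcases lt_or_eq_of_le hb1 with h | h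
      · exact h
      · exfalso; unfold cr at hab; nlinarith
    have h0 := cramer a c b 1
    have h2 : cr a c * b 1 ≤ 0 := mul_nonpos_of_nonpos_of_nonneg hle hb1
    have h3 : 0 ≤ cr a b * c 1 := mul_nonneg hab.le hc1
    have h4 : 0 ≤ cr b c * a 1 := mul_nonneg hbc.le ha1
    have hc1' : c 1 = 0 := by
      by_contra hh
      have : 0 < cr a b * c 1 := mul_pos hab (lt_of_le_of_ne hc1 (Ne.symm hh))
      linarith
    have ha1' : a 1 = 0 := by
      by_contra hh
      have : 0 < cr b c * a 1 := mul_pos hbc (lt_of_le_of_ne ha1 (Ne.symm hh))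
      linarith
    unfold cr at hbc
    nlinarith

def ht (c : Fin 2 → ℤ) : ℤ := c 0 + c 1

lemma ht_def (c : Fin 2 → ℤ) : ht c = c 0 + c 1 := rfl

def Hyps (S : Finset (Fin 2 → ℤ)) : Prop :=
  (∀ c ∈ S, (∀ i, 0 ≤ c i) ∧ c ≠ 0) ∧
  (∀ i : Fin 2, Pi.single i 1 ∈ S) ∧
  (∀ u ∈ S, ∀ v ∈ S, cr u v = 0 → u = v) ∧
  (∀ u ∈ S, ∀ v ∈ S, 0 < cr u v →
      (∀ s ∈ S, ¬(0 < cr u s ∧ 0 < cr s v)) → cr u v = 1)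

def Claims (S : Finset (Fin 2 → ℤ)) : Prop :=
  (∀ c ∈ S, (∃ i, c = Pi.single i 1) ∨ ∃ a ∈ S, ∃ b ∈ S, c = a + b) ∧
  (∀ i j : Fin 2, i ≠ j → ∀ k : ℕ, ((k:ℤ) • Pi.single i 1 + Pi.single j 1) ∈ S →
      ∀ ℓ : ℕ, ℓ ≤ k → ((ℓ:ℤ) • Pi.single i 1 + Pi.single j 1) ∈ S)

lemma nsTrans {S : Finset (Fin 2 → ℤ)} (hS : Hyps S) {a b c : Fin 2 → ℤ}
    (ha : a ∈ S) (hb : b ∈ S) (hc : c ∈ S)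
    (hab : cr a b ≤ 0) (hbc : cr b c ≤ 0) : cr a c ≤ 0 := by
  obtain ⟨h0, _, hray, _⟩ := hS
  rcases eq_or_lt_of_le hab with h | h
  · rw [hray a ha b hb h]; exact hbc
  · rcases eq_or_lt_of_le hbc with h' | h'
    · rw [← hray b hb c hc h']; exact hab
    · have h1 : 0 < cr b a := by rw [cr_skew]; omega
      have h2 : 0 < cr c b := by rw [cr_skew]; omega
      have := trans_strict (h0 c hc).1 (h0 a ha).1 (h0 b hb).1 h2 h1
      rw [cr_skew] at this; omega

lemma exists_top {S : Finset (Fin 2 → ℤ)} (hS : Hyps S) (P : Finset (Fin 2 → ℤ))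
    (hne : P.Nonempty) (hPS : P ⊆ S) : ∃ u ∈ P, ∀ s ∈ P, cr u s ≤ 0 := by
  classical
  induction hne using Finset.Nonempty.cons_induction with
  | singleton a =>
      refine ⟨a, by simp, ?_⟩
      intro s hs
      have : s = a := by simpa using hs
      subst this; rw [cr_self]
  | cons a Q ha hQ ih =>
      have hQS : Q ⊆ S := fun x hx => hPS (mem_cons_of_mem hx)
      have haS : a ∈ S := hPS (mem_cons_self a Q)
      obtain ⟨u, huQ, hu⟩ := ih hQS
      by_cases h : cr u a ≤ 0
      · refine ⟨u, mem_cons_of_mem huQ, ?_⟩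
        intro s hs
        rcases mem_cons.mp hs with rfl | hs
        · exact h
        · exact hu s hs
      · push_neg at h
        refine ⟨a, mem_cons_self a Q, ?_⟩
        intro s hs
        rcases mem_cons.mp hs with rfl | hs
        · rw [cr_self]
        · have hau : cr a u ≤ 0 := by rw [cr_skew]; omega
          exact nsTrans hS haS (hQS huQ) (hQS hs) hau (hu s hs)

lemma exists_bot {S : Finset (Fin 2 → ℤ)} (hS : Hyps S) (P : Finset (Fin 2 → ℤ))
    (hne : P.Nonempty) (hPS : P ⊆ S) : ∃ v ∈ P, ∀ s ∈ P, cr s v ≤ 0 := by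
  classical
  induction hne using Finset.Nonempty.cons_induction with
  | singleton a =>
      refine ⟨a, by simp, ?_⟩
      intro s hs
      have : s = a := by simpa using hs
      subst this; rw [cr_self]
  | cons a Q ha hQ ih =>
      have hQS : Q ⊆ S := fun x hx => hPS (mem_cons_of_mem hx)
      have haS : a ∈ S := hPS (mem_cons_self a Q)
      obtain ⟨v, hvQ, hv⟩ := ih hQS
      by_cases h : cr a v ≤ 0
      · refine ⟨v, mem_cons_of_mem hvQ, ?_⟩
        intro s hs
        rcases mem_cons.mp hs with rfl | hs
        · exact h
        · exact hv s hs
      · push_neg at h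
        refine ⟨a, mem_cons_self a Q, ?_⟩
        intro s hs
        rcases mem_cons.mp hs with rfl | hs
        · rw [cr_self]
        · have hva : cr v a ≤ 0 := by rw [cr_skew]; omega
          exact nsTrans hS (hQS hs) (hQS hvQ) haS (hv s hs) hva

lemma sum2 {i j : Fin 2} (hij : i ≠ j) (f : Fin 2 → ℤ) : f i + f j = f 0 + f 1 := by
  fin_cases i <;> fin_cases j <;> simp_all <;> ring

lemma cr_single {i j : Fin 2} (hij : i ≠ j) (p : Fin 2 → ℤ) (hpj : p j = 0) :
    cr p (Pi.single i 1) = 0 := by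
  rcases fin2_ne hij 0 with h0 | h0 <;> rcases fin2_ne hij 1 with h1 | h1
  · exact absurd (h0.trans h1.symm) (by decide)
  · subst h0; subst h1
    simp [cr, Pi.single_eq_same, Pi.single_eq_of_ne (show (1:Fin 2) ≠ 0 by decide), hpj]
  · subst h0; subst h1
    simp [cr, Pi.single_eq_same, Pi.single_eq_of_ne (show (0:Fin 2) ≠ 1 by decide), hpj]
  · exact absurd (h0.trans h1.symm) (by decide)

lemma vk_apply_i {i j : Fin 2} (hij : i ≠ j) (k : ℤ) :
    ((k • Pi.single i 1 + Pi.single j 1 : Fin 2 → ℤ)) i = k := by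
  simp [Pi.single_eq_same, Pi.single_eq_of_ne hij]

lemma vk_apply_j {i j : Fin 2} (hij : i ≠ j) (k : ℤ) :
    ((k • Pi.single i 1 + Pi.single j 1 : Fin 2 → ℤ)) j = 1 := by
  simp [Pi.single_eq_same, Pi.single_eq_of_ne hij.symm]

theorem comb_main (N : ℕ) : ∀ S : Finset (Fin 2 → ℤ), Hyps S →
    S.sum ht ≤ (N:ℤ) → Claims S := by
  induction N using Nat.strong_induction_on with
  | _ N IH =>
  intro S hS hsum
  have h0 := hS.1
  have he := hS.2.1
  have hray := hS.2.2.1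
  have hadj := hS.2.2.2
  have hpos : ∀ c ∈ S, 1 ≤ c 0 + c 1 := by
    intro c hc
    obtain ⟨i, hi⟩ := Function.ne_iff.mp (h0 c hc).2
    have h00 := (h0 c hc).1 0
    have h01 := (h0 c hc).1 1
    rcases fin2_ne (show (0:Fin 2) ≠ 1 by decide) i with rfl | rfl
    · simp only [Pi.zero_apply] at hi; omega
    · simp only [Pi.zero_apply] at hi; omega
  obtain ⟨m, hmS, hmax'⟩ := S.exists_max_image ht ⟨_, he 0⟩
  have hmax : ∀ c ∈ S, c 0 + c 1 ≤ m 0 + m 1 := by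
    intro c hc; have := hmax' c hc; rw [ht_def, ht_def] at this; exact this
  by_cases hm2 : 2 ≤ m 0 + m 1
  swap
  · -- small case: all elements simple
    have csimple : ∀ c ∈ S, ∃ i, c = Pi.single i 1 := by
      intro c hc
      have h00 := (h0 c hc).1 0
      have h01 := (h0 c hc).1 1
      have hle := hmax c hc
      have h1 := hpos c hc
      have h1m := hpos m hmS
      have : (c 0 = 1 ∧ c 1 = 0) ∨ (c 0 = 0 ∧ c 1 = 1) := by omega
      rcases this with ⟨ha, hb⟩ | ⟨ha, hb⟩
      · exact ⟨0, by funext t; rcases fin2_ne (show (0:Fin 2) ≠ 1 by decide) t with rfl | rfl <;>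
          simp [Pi.single_eq_same, Pi.single_eq_of_ne, ha, hb]⟩
      · exact ⟨1, by funext t; rcases fin2_ne (show (0:Fin 2) ≠ 1 by decide) t with rfl | rfl <;>
          simp [Pi.single_eq_same, Pi.single_eq_of_ne, ha, hb]⟩
    constructor
    · intro c hc; exact Or.inl (csimple c hc)
    · intro i j hij k hk ℓ hℓ
      have hki := vk_apply_i hij (k:ℤ)
      have hkj := vk_apply_j hij (k:ℤ)
      have hsum2 := sum2 hij ((k:ℤ) • Pi.single i 1 + Pi.single j 1)
      have h1 := hmax _ hk
      have h1m := hpos m hmS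
      have hk0 : k = 0 := by
        have : (k:ℤ) + 1 ≤ 1 := by omega
        omega
      subst hk0
      have hl0 : ℓ = 0 := by omega
      subst hl0
      exact hk
  · -- main case
    have hm0 : 1 ≤ m 0 := by
      by_contra hh
      have h00 := (h0 m hmS).1 0
      have hcr : cr m (Pi.single 1 1) = 0 := by
        unfold cr; simp [Pi.single_eq_same, Pi.single_eq_of_ne]; omega
      have := hray m hmS _ (he 1) hcr
      rw [this] at hm2
      simp [Pi.single_eq_same, Pi.single_eq_of_ne] at hm2
    have hm1 : 1 ≤ m 1 := by
      by_contra hh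
      have h01 := (h0 m hmS).1 1
      have hcr : cr m (Pi.single 0 1) = 0 := by
        unfold cr; simp [Pi.single_eq_same, Pi.single_eq_of_ne]; omega
      have := hray m hmS _ (he 0) hcr
      rw [this] at hm2
      simp [Pi.single_eq_same, Pi.single_eq_of_ne] at hm2
    set P := S.filter (fun s => 0 < cr s m) with hP
    set Q := S.filter (fun s => 0 < cr m s) with hQ
    have hPne : P.Nonempty := by
      refine ⟨Pi.single 0 1, mem_filter.mpr ⟨he 0, ?_⟩⟩
      unfold cr; simp [Pi.single_eq_same, Pi.single_eq_of_ne]; omega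
    have hQne : Q.Nonempty := by
      refine ⟨Pi.single 1 1, mem_filter.mpr ⟨he 1, ?_⟩⟩
      unfold cr; simp [Pi.single_eq_same, Pi.single_eq_of_ne]; omega
    obtain ⟨u, huP, hu⟩ := exists_top hS P hPne (filter_subset _ _)
    obtain ⟨v, hvQ, hv⟩ := exists_bot hS Q hQne (filter_subset _ _)
    have huS : u ∈ S := (mem_filter.mp huP).1
    have hum : 0 < cr u m := (mem_filter.mp huP).2
    have hvS : v ∈ S := (mem_filter.mp hvQ).1
    have hmv : 0 < cr m v := (mem_filter.mp hvQ).2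
    have hum_adj : ∀ s ∈ S, ¬(0 < cr u s ∧ 0 < cr s m) := by
      rintro s hs ⟨h2, h3⟩
      have := hu s (mem_filter.mpr ⟨hs, h3⟩)
      omega
    have hmv_adj : ∀ s ∈ S, ¬(0 < cr m s ∧ 0 < cr s v) := by
      rintro s hs ⟨h2, h3⟩
      have := hv s (mem_filter.mpr ⟨hs, h2⟩)
      omega
    have hum1 : cr u m = 1 := hadj u huS m hmS hum hum_adj
    have hmv1 : cr m v = 1 := hadj m hmS v hvS hmv hmv_adj
    have hD : 0 < cr u v :=
      trans_strict (h0 u huS).1 (h0 v hvS).1 (h0 m hmS).1 hum hmv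
    have hvc : ∀ t, v t = cr u v * m t - u t := by
      intro t
      have hcram := cramer u m v t
      have h2 : cr v m = -1 := by rw [cr_skew, hmv1]
      rw [hum1, h2] at hcram
      omega
    have hu1 := hpos u huS
    have hv1 := hpos v hvS
    have humax := hmax u huS
    have hvmax := hmax v hvS
    have hvsum : v 0 + v 1 = cr u v * (m 0 + m 1) - (u 0 + u 1) := by
      rw [hvc 0, hvc 1]; ring
    have hD2 : cr u v ≤ 2 := by nlinarith
    have hD1 : cr u v = 1 := by
      rcases (by omega : cr u v = 1 ∨ cr u v = 2) with h | h
      · exact h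
      · exfalso
        rw [h] at hvsum
        have he1 : u 0 + u 1 = m 0 + m 1 := by omega
        have he2 : v 0 + v 1 = m 0 + m 1 := by omega
        have hDeq : u 0 * v 1 - u 1 * v 0 = 2 := by unfold cr at h; omega
        have hq : (m 0 + m 1) * (u 0 - v 0) = 2 := by
          linear_combination v 0 * he1 - u 0 * he2 + hDeq
        have hd1 : 0 < u 0 - v 0 := by nlinarith
        have hd2 : m 0 + m 1 ≤ 2 := by nlinarith
        have hmm : m 0 + m 1 = 2 := by omega
        have : u 0 - v 0 = 1 := by rw [hmm] at hq; omega
        have hv0 := hvc 0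
        rw [h] at hv0
        omega
    have muv : ∀ t, u t + v t = m t := by
      intro t; have := hvc t; rw [hD1] at this; omega
    -- the smaller set
    have hS' : Hyps (S.erase m) := by
      refine ⟨fun c hc => h0 c (mem_of_mem_erase hc), ?_, 
        fun a ha b hb hcr => hray a (mem_of_mem_erase ha) b (mem_of_mem_erase hb) hcr, ?_⟩
      · intro i
        refine mem_erase.mpr ⟨?_, he i⟩
        intro hh
        have h1 : (Pi.single i 1 : Fin 2 → ℤ) 0 + (Pi.single i 1 : Fin 2 → ℤ) 1 = 1 := by
          fin_cases i <;> simp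
        rw [hh] at h1; omega
      · intro u' hu'S' v' hv'S' h1 hno
        have hu'S := mem_of_mem_erase hu'S'
        have hv'S := mem_of_mem_erase hv'S'
        by_cases hbet : 0 < cr u' m ∧ 0 < cr m v'
        · obtain ⟨hb1, hb2⟩ := hbet
          have hu'm_adj : ∀ s ∈ S, ¬(0 < cr u' s ∧ 0 < cr s m) := by
            rintro s hs ⟨h2, h3⟩
            have hsm : s ≠ m := by rintro rfl; rw [cr_self] at h3; omega
            have hsv' : 0 < cr s v' :=
              trans_strict (h0 s hs).1 (h0 v' hv'S).1 (h0 m hmS).1 h3 hb2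
            exact hno s (mem_erase.mpr ⟨hsm, hs⟩) ⟨h2, hsv'⟩
          have h4 : cr u' m = 1 := hadj u' hu'S m hmS hb1 hu'm_adj
          have hmv'_adj : ∀ s ∈ S, ¬(0 < cr m s ∧ 0 < cr s v') := by
            rintro s hs ⟨h2, h3⟩
            have hsm : s ≠ m := by rintro rfl; rw [cr_self] at h2; omega
            have hu's : 0 < cr u' s :=
              trans_strict (h0 u' hu'S).1 (h0 s hs).1 (h0 m hmS).1 hb1 h2
            exact hno s (mem_erase.mpr ⟨hsm, hs⟩) ⟨hu's, h3⟩
          have h5 : cr m v' = 1 := hadj m hmS v' hv'S hb2 hmv'_adj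
          have hu'u : u' = u := by
            rcases lt_trichotomy (cr u u') 0 with h6 | h6 | h6
            · exact absurd ⟨by rw [cr_skew]; omega, hum⟩ (hu'm_adj u huS)
            · exact (hray u huS u' hu'S h6).symm
            · exact absurd ⟨h6, hb1⟩ (hum_adj u' hu'S)
          have hv'v : v' = v := by
            rcases lt_trichotomy (cr v v') 0 with h6 | h6 | h6
            · exact absurd ⟨hb2, by rw [cr_skew]; omega⟩ (hmv_adj v' hv'S)
            · exact (hray v hvS v' hv'S h6).symm
            · exact absurd ⟨hmv, h6⟩ (hmv'_adj v hvS)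
          rw [hu'u, hv'v]; exact hD1
        · refine hadj u' hu'S v' hv'S h1 ?_
          rintro s hs ⟨h2, h3⟩
          by_cases hsm : s = m
          · subst hsm; exact hbet ⟨h2, h3⟩
          · exact hno s (mem_erase.mpr ⟨hsm, hs⟩) ⟨h2, h3⟩
    have hsum_erase : (S.erase m).sum ht + ht m = S.sum ht := Finset.sum_erase_add S _ hmS
    have hhtm : ht m = m 0 + m 1 := rfl
    have hsum_nonneg : 0 ≤ (S.erase m).sum ht :=
      Finset.sum_nonneg fun c hc => by
        have := hpos c (mem_of_mem_erase hc); rw [ht_def]; omega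
    have hN2 : 2 ≤ N := by
      have : (2:ℤ) ≤ (N:ℤ) := by omega
      exact_mod_cast this
    have hsum' : (S.erase m).sum ht ≤ ((N - 1 : ℕ) : ℤ) := by
      have hcast : ((N - 1 : ℕ) : ℤ) = (N:ℤ) - 1 := by omega
      omega
    obtain ⟨C1, C2⟩ := IH (N - 1) (by omega) (S.erase m) hS' hsum'
    constructor
    · intro c hc
      by_cases hcm : c = m
      · subst hcm
        exact Or.inr ⟨u, huS, v, hvS, by
          funext t; rw [Pi.add_apply]; have := muv t; omega⟩
      · rcases C1 c (mem_erase.mpr ⟨hcm, hc⟩) with h | ⟨a, haS, b, hbS, hab⟩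
        · exact Or.inl h
        · exact Or.inr ⟨a, mem_of_mem_erase haS, b, mem_of_mem_erase hbS, hab⟩
    · intro i j hij k hk ℓ hℓ
      rcases eq_or_lt_of_le hℓ with rfl | hlt
      · exact hk
      · by_cases hvkm : ((k:ℤ) • Pi.single i 1 + Pi.single j 1) = m
        · have hmi : m i = (k:ℤ) := by rw [← hvkm]; exact vk_apply_i hij (k:ℤ)
          have hmj : m j = 1 := by rw [← hvkm]; exact vk_apply_j hij (k:ℤ)
          have hsum2m := sum2 hij m
          have hk1 : 1 ≤ k := by
            have : (1:ℤ) ≤ (k:ℤ) := by omega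
            exact_mod_cast this
          have key : ∀ p q : Fin 2 → ℤ, p ∈ S → q ∈ S → (∀ t, p t + q t = m t) → p j = 0 →
              ((ℓ:ℤ) • Pi.single i 1 + Pi.single j 1) ∈ S := by
            intro p q hpS hqS hpq hpj
            have hpe : p = Pi.single i 1 := by
              exact hray p hpS _ (he i) (cr_single hij p hpj)
            have hpi : p i = 1 := by rw [hpe]; exact Pi.single_eq_same i 1
            have hqi : q i = (k:ℤ) - 1 := by have := hpq i; omega
            have hqj : q j = 1 := by
              have := hpq j
              have hpj' : p j = 0 := hpj
              omega
            have hq : q = (((k - 1 : ℕ)):ℤ) • Pi.single i 1 + Pi.single j 1 := by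
              have hcast : (((k - 1 : ℕ)):ℤ) = (k:ℤ) - 1 := by push_cast [hk1]; ring
              funext t
              rcases fin2_ne hij t with rfl | rfl
              · rw [vk_apply_i hij, hcast, hqi]
              · rw [vk_apply_j hij, hqj]
            have hqm : q ≠ m := by
              intro hh; rw [hh] at hqi; omega
            have hmem : (((k - 1 : ℕ)):ℤ) • Pi.single i 1 + Pi.single j 1 ∈ S.erase m := by
              rw [← hq]; exact mem_erase.mpr ⟨hqm, hqS⟩
            exact mem_of_mem_erase (C2 i j hij (k-1) hmem ℓ (by omega))
          have hcases : u j = 0 ∨ v j = 0 := by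
            have h1 := (h0 u huS).1 j
            have h2 := (h0 v hvS).1 j
            have h3 := muv j
            omega
          rcases hcases with h | h
          · exact key u v huS hvS muv h
          · exact key v u hvS huS (fun t => by have := muv t; omega) h
        · exact mem_of_mem_erase (C2 i j hij k (mem_erase.mpr ⟨hvkm, hk⟩) ℓ hℓ)


lemma possign (f : DualV 2) (C : Set (Vr 2)) (hC : IsPreconnected C)
    (hne : ∀ y ∈ C, f y ≠ 0) {y₀ : Vr 2} (hy₀ : y₀ ∈ C) (h : 0 < f y₀) :
    ∀ y ∈ C, 0 < f y := by
  intro y hy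
  by_contra hle
  push_neg at hle
  have hcont : Continuous f := f.continuous_of_finiteDimensional
  have himg : IsPreconnected (f '' C) := hC.image f hcont.continuousOn
  have h0 : (0:ℝ) ∈ Icc (f y) (f y₀) := ⟨hle, h.le⟩
  have := himg.Icc_subset (mem_image_of_mem f hy) (mem_image_of_mem f hy₀) h0
  obtain ⟨z, hzC, hz⟩ := this
  exact hne z hzC hz

lemma decomp2 (p : Vr 2) : p = p 0 • (Pi.single 0 1 : Vr 2) + p 1 • (Pi.single 1 1 : Vr 2) := by
  funext t
  match t with
  | 0 => simp [Pi.single_eq_same, Pi.single_eq_of_ne (show (0:Fin 2) ≠ 1 by decide)]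
  | 1 => simp [Pi.single_eq_same, Pi.single_eq_of_ne (show (1:Fin 2) ≠ 0 by decide)]

lemma eval2 (f : DualV 2) (p : Vr 2) :
    f p = p 0 * f (Pi.single 0 1) + p 1 * f (Pi.single 1 1) := by
  conv_lhs => rw [decomp2 p]
  simp [smul_eq_mul]

def Phi (w : Fin 2 → DualV 2) (cz : Fin 2 → ℤ) : DualV 2 := ∑ i, (cz i : ℝ) • w i

lemma Phi_eval (w : Fin 2 → DualV 2) (cz : Fin 2 → ℤ) (q : Vr 2) :
    Phi w cz q = (cz 0 : ℝ) * (w 0 q) + (cz 1 : ℝ) * (w 1 q) := by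
  simp [Phi, Fin.sum_univ_two]

lemma Phi_neg (w : Fin 2 → DualV 2) (cz : Fin 2 → ℤ) : Phi w (-cz) = - Phi w cz := by
  unfold Phi
  rw [Fin.sum_univ_two, Fin.sum_univ_two, Pi.neg_apply, Pi.neg_apply, Int.cast_neg,
    Int.cast_neg]
  module

lemma L1 {t X : ℝ} (ht : 0 < t) (h : 0 < t * X) : 0 < X := by nlinarith
lemma L2 {t X : ℝ} (ht : t < 0) (h : 0 < t * X) : X < 0 := by nlinarith
lemma L3 {t X : ℝ} (ht : 0 < t) (h : 0 ≤ t * X) : 0 ≤ X := by nlinarith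
lemma L4 {t X : ℝ} (ht : t < 0) (h : 0 ≤ t * X) : X ≤ 0 := by nlinarith
lemma L5 {t X : ℝ} (ht : 0 < t) (h : t * X < 0) : X < 0 := by nlinarith
lemma L6 {t X : ℝ} (ht : t < 0) (h : t * X < 0) : 0 < X := by nlinarith
lemma L7 {t X : ℝ} (ht : 0 < t) (h : t * X ≤ 0) : X ≤ 0 := by nlinarith
lemma L8 {t X : ℝ} (ht : t < 0) (h : t * X ≤ 0) : 0 ≤ X := by nlinarith

lemma cr_skew' (u v : Fin 2 → ℤ) : cr u v = - cr v u := by unfold cr; ring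

lemma crcast (a b : Fin 2 → ℤ) : ((cr a b : ℤ):ℝ) = (a 0:ℝ) * b 1 - (a 1:ℝ) * b 0 := by
  unfold cr; push_cast; ring

set_option maxHeartbeats 2000000 in
theorem geo (A : Set (Submodule ℝ (Vr 2))) (R : Set (DualV 2)) (h : IsCrystArr A R)
    (K : Set (Vr 2)) (hK : IsChamber A K)
    (w : Fin 2 → DualV 2) (hw : IsWallBasis R K w) :
    (∀ c ∈ PosRootsAt R w, (∀ i, 0 ≤ c i) ∧ c ≠ 0) ∧
    (∀ i : Fin 2, Pi.single i 1 ∈ PosRootsAt R w) ∧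
    (∀ u ∈ PosRootsAt R w, ∀ v ∈ PosRootsAt R w, cr u v = 0 → u = v) ∧
    (∀ u ∈ PosRootsAt R w, ∀ v ∈ PosRootsAt R w, 0 < cr u v →
      (∀ s ∈ PosRootsAt R w, ¬(0 < cr u s ∧ 0 < cr s v)) → cr u v = 1) ∧
    (PosRootsAt R w).Finite := by
  obtain ⟨hRfin, hsimp, hA, hpm, hcrys⟩ := h
  obtain ⟨x₀, hx₀, hKeq⟩ := hK
  obtain ⟨hwinj, hwrange⟩ := hw
  -- walls facts
  have hwalls : ∀ i, w i ∈ Walls R K := fun i => hwrange ▸ Set.mem_range_self i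
  have hwR : ∀ i, w i ∈ R := fun i => (hwalls i).1
  have hwnn : ∀ i, ∀ x ∈ K, 0 ≤ w i x := fun i => (hwalls i).2.1
  have hwspan : ∀ i, Submodule.span ℝ ((LinearMap.ker (w i) : Set (Vr 2)) ∩ closure K)
      = LinearMap.ker (w i) := fun i => (hwalls i).2.2
  have hWallsK : Walls R K = {w 0, w 1} := by
    rw [← hwrange]
    ext y
    constructor
    · rintro ⟨i, rfl⟩
      match i with
      | 0 => exact Or.inl rfl
      | 1 => exact Or.inr rfl
    · rintro (rfl | rfl)
      exacts [⟨0, rfl⟩, ⟨1, rfl⟩]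
  have h0R : (0 : DualV 2) ∉ R := by
    intro h0
    have hker : LinearMap.ker (0 : DualV 2) ∈ A := hA ▸ ⟨0, h0, rfl⟩
    exact hx₀ _ hker (by simp)
  have hKsub : K ⊆ ArrComplement A := hKeq ▸ connectedComponentIn_subset _ _
  have hx₀K : x₀ ∈ K := hKeq ▸ mem_connectedComponentIn hx₀
  have hKpre : IsPreconnected K := hKeq ▸ isPreconnected_connectedComponentIn
  have hnv : ∀ α ∈ R, ∀ y ∈ ArrComplement A, α y ≠ 0 := by
    intro α hα y hy
    exact fun hz => hy (LinearMap.ker α) (hA ▸ ⟨α, hα, rfl⟩) (LinearMap.mem_ker.mpr hz)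
  have hwx₀ : ∀ i, 0 < w i x₀ :=
    fun i => lt_of_le_of_ne (hwnn i x₀ hx₀K) (Ne.symm (hnv (w i) (hwR i) x₀ hx₀))
  -- proportionality is impossible
  have hprop : ∀ t : ℝ, w 1 ≠ t • w 0 := by
    intro t ht
    have hmem : w 1 ∈ ({β | ∃ c : ℝ, β = c • w 0} ∩ R) := ⟨⟨t, ht⟩, hwR 1⟩
    rw [hpm (w 0) (hwR 0)] at hmem
    rcases hmem with hh | hh
    · exact absurd (hwinj hh) (by decide)
    · have h1 := hwx₀ 1
      have h0 := hwx₀ 0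
      rw [hh] at h1
      rw [LinearMap.neg_apply] at h1
      linarith
  obtain ⟨a, ha⟩ : ∃ a, a = w 0 (Pi.single 0 1) := ⟨_, rfl⟩
  obtain ⟨b, hb⟩ : ∃ b, b = w 0 (Pi.single 1 1) := ⟨_, rfl⟩
  obtain ⟨c2, hc2⟩ : ∃ c2, c2 = w 1 (Pi.single 0 1) := ⟨_, rfl⟩
  obtain ⟨d, hd⟩ : ∃ d, d = w 1 (Pi.single 1 1) := ⟨_, rfl⟩
  have hev0 : ∀ p : Vr 2, w 0 p = p 0 * a + p 1 * b := by
    intro p; rw [ha, hb]; exact eval2 (w 0) p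
  have hev1 : ∀ p : Vr 2, w 1 p = p 0 * c2 + p 1 * d := by
    intro p; rw [hc2, hd]; exact eval2 (w 1) p
  have hD : a * d - b * c2 ≠ 0 := by
    intro hD0
    by_cases ha0 : a = 0
    · have hb0 : b ≠ 0 := by
        intro hb0
        have := hwx₀ 0
        rw [hev0 x₀, ha0, hb0] at this
        linarith
      have hc20 : c2 = 0 := by
        rw [ha0] at hD0
        have : b * c2 = 0 := by linarith
        rcases mul_eq_zero.mp this with h | h
        · exact absurd h hb0
        · exact h
      refine hprop (d / b) (LinearMap.ext fun p => ?_)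
      rw [LinearMap.smul_apply, hev0 p, hev1 p, ha0, hc20, smul_eq_mul]
      field_simp
      ring
    · refine hprop (c2 / a) (LinearMap.ext fun p => ?_)
      rw [LinearMap.smul_apply, hev0 p, hev1 p, smul_eq_mul]
      field_simp
      linear_combination p 1 * hD0
  have kerlem : ∀ z : Vr 2, w 0 z = 0 → w 1 z = 0 → z = 0 := by
    intro z h0 h1
    rw [hev0 z] at h0
    rw [hev1 z] at h1
    have hz0 : z 0 * (a * d - b * c2) = 0 := by linear_combination d * h0 - b * h1
    have hz1 : z 1 * (a * d - b * c2) = 0 := by linear_combination a * h1 - c2 * h0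
    have hz0' : z 0 = 0 := by
      rcases mul_eq_zero.mp hz0 with h | h
      exacts [h, absurd h hD]
    have hz1' : z 1 = 0 := by
      rcases mul_eq_zero.mp hz1 with h | h
      exacts [h, absurd h hD]
    rw [decomp2 z, hz0', hz1']
    simp
  obtain ⟨p1, hp1⟩ : ∃ p1 : Vr 2, p1 = (d/(a*d - b*c2)) • (Pi.single 0 1 : Vr 2)
      - (c2/(a*d - b*c2)) • (Pi.single 1 1 : Vr 2) := ⟨_, rfl⟩
  obtain ⟨p2, hp2⟩ : ∃ p2 : Vr 2, p2 = (-b/(a*d - b*c2)) • (Pi.single 0 1 : Vr 2)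
      + (a/(a*d - b*c2)) • (Pi.single 1 1 : Vr 2) := ⟨_, rfl⟩
  have hp1w0 : w 0 p1 = 1 := by
    rw [hp1, map_sub, map_smul, map_smul, ← ha, ← hb, smul_eq_mul, smul_eq_mul]
    field_simp
    exact div_self (by rw [mul_comm d a]; exact hD)
  have hp1w1 : w 1 p1 = 0 := by
    rw [hp1, map_sub, map_smul, map_smul, ← hc2, ← hd, smul_eq_mul, smul_eq_mul]
    field_simp
    ring
  have hp2w0 : w 0 p2 = 0 := by
    rw [hp2, map_add, map_smul, map_smul, ← ha, ← hb, smul_eq_mul, smul_eq_mul]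
    field_simp
    ring
  have hp2w1 : w 1 p2 = 1 := by
    rw [hp2, map_add, map_smul, map_smul, ← hc2, ← hd, smul_eq_mul, smul_eq_mul]
    field_simp
    ring
  have hdecomp : ∀ q : Vr 2, q = (w 0 q) • p1 + (w 1 q) • p2 := by
    intro q
    have h0 : w 0 (q - ((w 0 q) • p1 + (w 1 q) • p2)) = 0 := by
      rw [map_sub, map_add, map_smul, map_smul, hp1w0, hp2w0, smul_eq_mul, smul_eq_mul]
      ring
    have h1 : w 1 (q - ((w 0 q) • p1 + (w 1 q) • p2)) = 0 := by
      rw [map_sub, map_add, map_smul, map_smul, hp1w1, hp2w1, smul_eq_mul, smul_eq_mul]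
      ring
    have := kerlem _ h0 h1
    rw [sub_eq_zero] at this
    exact this
  have hPhiinj : ∀ cz dz : Fin 2 → ℤ, Phi w cz = Phi w dz → cz = dz := by
    intro cz dz hcd
    have h1 : Phi w cz p1 = Phi w dz p1 := by rw [hcd]
    have h2 : Phi w cz p2 = Phi w dz p2 := by rw [hcd]
    rw [Phi_eval, Phi_eval, hp1w0, hp1w1] at h1
    rw [Phi_eval, Phi_eval, hp2w0, hp2w1] at h2
    simp only [mul_one, mul_zero, add_zero, zero_add] at h1 h2
    have e0 : cz 0 = dz 0 := by exact_mod_cast h1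
    have e1 : cz 1 = dz 1 := by exact_mod_cast h2
    funext t
    match t with
    | 0 => exact e0
    | 1 => exact e1
  have hKchamber : IsChamber A K := ⟨x₀, hx₀, hKeq⟩
  have hcoord : ∀ α ∈ R, ∃ cz : Fin 2 → ℤ, α = Phi w cz := by
    intro α hα
    have := hcrys K hKchamber α hα
    rw [hWallsK] at this
    obtain ⟨mz, nz, hmn⟩ := Submodule.mem_span_pair.mp this
    refine ⟨![mz, nz], ?_⟩
    rw [← hmn]
    unfold Phi
    rw [Fin.sum_univ_two]
    simp only [Matrix.cons_val_zero, Matrix.cons_val_one, Matrix.head_cons]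
    module
  have hnegR : ∀ α ∈ R, -α ∈ R := by
    intro α hα
    have : -α ∈ ({α, -α} : Set (DualV 2)) := by simp
    rw [← hpm α hα] at this
    exact this.2
  -- kernel vectors of the walls inside the closure of K
  have hzwall : ∀ i i' : Fin 2, i ≠ i' → ∃ z : Vr 2, w i z = 0 ∧ z ∈ closure K ∧ 0 < w i' z := by
    intro i i' hii'
    have hker : ∀ z : Vr 2, w i z = 0 → w i' z = 0 → z = 0 := by
      intro z h1 h2
      match i, i', hii' with
      | 0, 1, _ => exact kerlem z h1 h2
      | 1, 0, _ => exact kerlem z h2 h1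
      | 0, 0, hii' => exact absurd rfl hii'
      | 1, 1, hii' => exact absurd rfl hii'
    -- pick nonzero q in ker (w i)
    obtain ⟨q, hq0, hqne⟩ : ∃ q : Vr 2, w i q = 0 ∧ q ≠ 0 := by
      match i with
      | 0 => exact ⟨p2, hp2w0, fun h => by rw [h] at hp2w1; simp at hp2w1⟩
      | 1 => exact ⟨p1, hp1w1, fun h => by rw [h] at hp1w0; simp at hp1w0⟩
    have hne : ¬((LinearMap.ker (w i) : Set (Vr 2)) ∩ closure K ⊆ {0}) := by
      intro hsub
      have hle : Submodule.span ℝ ((LinearMap.ker (w i) : Set (Vr 2)) ∩ closure K)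
          ≤ Submodule.span ℝ ({0} : Set (Vr 2)) := Submodule.span_mono hsub
      rw [hwspan i] at hle
      have : q ∈ Submodule.span ℝ ({0} : Set (Vr 2)) := hle (LinearMap.mem_ker.mpr hq0)
      rw [Submodule.span_zero_singleton] at this
      exact hqne this
    rw [Set.not_subset] at hne
    obtain ⟨z, ⟨hz1, hz2⟩, hzne⟩ := hne
    have hz1' : w i z = 0 := LinearMap.mem_ker.mp hz1
    have hznn : 0 ≤ w i' z := by
      have hcl : closure K ⊆ {y | 0 ≤ w i' y} := by
        apply closure_minimal
        · exact fun y hy => hwnn i' y hy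
        · exact IsClosed.preimage (w i').continuous_of_finiteDimensional isClosed_Ici
      exact hcl hz2
    have hzpos : w i' z ≠ 0 := by
      intro h
      exact hzne (by simpa using hker z hz1' h)
    exact ⟨z, hz1', hz2, lt_of_le_of_ne hznn (Ne.symm hzpos)⟩
  obtain ⟨z0, hz0w0, hz0cl, hz0w1⟩ := hzwall 0 1 (by decide)
  obtain ⟨z1, hz1w1, hz1cl, hz1w0⟩ := hzwall 1 0 (by decide)
  -- positivity of coordinates for roots positive at x₀
  have hposR : ∀ cz : Fin 2 → ℤ, Phi w cz ∈ R → 0 < Phi w cz x₀ → ∀ i, 0 ≤ cz i := by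
    intro cz hmem hpos
    have hKpos : ∀ y ∈ K, 0 < Phi w cz y :=
      possign _ K hKpre (fun y hy => hnv _ hmem y (hKsub hy)) hx₀K hpos
    have hcl : ∀ y ∈ closure K, 0 ≤ Phi w cz y := by
      intro y hy
      refine closure_minimal (fun y' hy' => (hKpos y' hy').le)
        (IsClosed.preimage (Phi w cz).continuous_of_finiteDimensional isClosed_Ici) hy
    have h1 : 0 ≤ (cz 1 : ℝ) := by
      have := hcl z0 hz0cl
      rw [Phi_eval, hz0w0, mul_zero, zero_add] at this
      by_contra hneg
      push_neg at hneg
      nlinarith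
    have h0 : 0 ≤ (cz 0 : ℝ) := by
      have := hcl z1 hz1cl
      rw [Phi_eval, hz1w1, mul_zero, add_zero] at this
      by_contra hneg
      push_neg at hneg
      nlinarith
    intro t
    match t with
    | 0 => exact_mod_cast h0
    | 1 => exact_mod_cast h1
  have hsigncoh : ∀ cz : Fin 2 → ℤ, Phi w cz ∈ R →
      (∀ i, 0 ≤ cz i) ∨ (∀ i, cz i ≤ 0) := by
    intro cz hmem
    rcases lt_trichotomy (Phi w cz x₀) 0 with hlt | heq | hgt
    · right
      have hmem' : Phi w (-cz) ∈ R := by rw [Phi_neg]; exact hnegR _ hmem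
      have hpos' : 0 < Phi w (-cz) x₀ := by rw [Phi_neg, LinearMap.neg_apply]; linarith
      have := hposR (-cz) hmem' hpos'
      intro i
      have := this i
      simp only [Pi.neg_apply] at this
      omega
    · exact absurd heq (hnv _ hmem x₀ hx₀)
    · exact Or.inl (hposR cz hmem hgt)
  -- membership reformulation
  have hPhisingle : ∀ i : Fin 2, Phi w (Pi.single i 1) = w i := by
    intro i
    unfold Phi
    rw [Fin.sum_univ_two]
    match i with
    | 0 =>
      rw [Pi.single_eq_same, Pi.single_eq_of_ne (show (1:Fin 2) ≠ 0 by decide)]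
      simp
    | 1 =>
      rw [Pi.single_eq_same, Pi.single_eq_of_ne (show (0:Fin 2) ≠ 1 by decide)]
      simp
  have hyp1 : ∀ c ∈ PosRootsAt R w, (∀ i, 0 ≤ c i) ∧ c ≠ 0 := by
    intro c hc
    refine ⟨hc.2, ?_⟩
    rintro rfl
    have hmem : Phi w 0 ∈ R := hc.1
    have : Phi w (0 : Fin 2 → ℤ) = 0 := by unfold Phi; simp
    rw [this] at hmem
    exact h0R hmem
  have hsingle : ∀ i : Fin 2, Pi.single i 1 ∈ PosRootsAt R w := by
    intro i
    refine ⟨?_, ?_⟩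
    · show Phi w (Pi.single i 1) ∈ R
      rw [hPhisingle i]; exact hwR i
    · intro t
      rcases eq_or_ne t i with rfl | hne
      · rw [Pi.single_eq_same]; omega
      · rw [Pi.single_eq_of_ne hne]
  have hrayu : ∀ u ∈ PosRootsAt R w, ∀ v ∈ PosRootsAt R w, cr u v = 0 → u = v := by
    intro u hu v hv hcr
    have hune : u ≠ 0 := (hyp1 u hu).2
    have hUR : Phi w u ∈ R := hu.1
    have hVR : Phi w v ∈ R := hv.1
    have hcrZ : u 0 * v 1 - u 1 * v 0 = 0 := hcr
    have hcrR : (u 0:ℝ) * v 1 - (u 1:ℝ) * v 0 = 0 := by exact_mod_cast hcrZ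
    obtain ⟨t, ht0, ht1⟩ : ∃ t:ℝ, (v 0:ℝ) = t * u 0 ∧ (v 1:ℝ) = t * u 1 := by
      by_cases h0 : u 0 = 0
      · have h1 : u 1 ≠ 0 := by
          intro h
          apply hune
          funext s
          match s with
          | 0 => exact h0
          | 1 => exact h
        have hv0 : v 0 = 0 := by
          have : u 1 * v 0 = 0 := by rw [h0] at hcrZ; omega
          rcases mul_eq_zero.mp this with h | h
          exacts [absurd h h1, h]
        refine ⟨(v 1:ℝ)/(u 1:ℝ), ?_, ?_⟩
        · rw [hv0, h0]; simp
        · have : (u 1:ℝ) ≠ 0 := Int.cast_ne_zero.mpr h1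
          field_simp
      · have hu0R : (u 0:ℝ) ≠ 0 := Int.cast_ne_zero.mpr h0
        refine ⟨(v 0:ℝ)/(u 0:ℝ), ?_, ?_⟩
        · field_simp
        · field_simp
          first
          | linear_combination hcrR
          | linear_combination -hcrR
          | linarith [hcrR]
    have hPhiVU : Phi w v = t • Phi w u := by
      apply LinearMap.ext
      intro q
      rw [Phi_eval, LinearMap.smul_apply, Phi_eval, ht0, ht1, smul_eq_mul]
      ring
    have hmem : Phi w v ∈ ({Phi w u, -(Phi w u)} : Set (DualV 2)) := by
      rw [← hpm (Phi w u) hUR]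
      exact ⟨⟨t, hPhiVU⟩, hVR⟩
    rcases hmem with hh | hh
    · exact (hPhiinj v u hh).symm
    · exfalso
      have hvu : v = -u := hPhiinj v (-u) (by rw [Phi_neg]; exact hh)
      obtain ⟨i, hi⟩ := Function.ne_iff.mp hune
      have h1 : 0 < u i := lt_of_le_of_ne ((hyp1 u hu).1 i) (Ne.symm (by simpa using hi))
      have h2 : 0 ≤ v i := (hyp1 v hv).1 i
      rw [hvu] at h2
      simp only [Pi.neg_apply] at h2
      omega
  -- positive/negative decomposition of roots
  have hsplit : ∀ α ∈ R, ∃ s ∈ PosRootsAt R w, α = Phi w s ∨ α = - Phi w s := by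
    intro α hα
    obtain ⟨cz, rfl⟩ := hcoord α hα
    rcases hsigncoh cz hα with hpos | hneg
    · exact ⟨cz, ⟨hα, hpos⟩, Or.inl rfl⟩
    · refine ⟨-cz, ⟨?_, fun i => by simpa using hneg i⟩, Or.inr (by rw [Phi_neg, neg_neg])⟩
      show Phi w (-cz) ∈ R
      rw [Phi_neg]
      exact hnegR _ hα
  have tlem : ∀ s : Fin 2 → ℤ, s ≠ 0 → ∀ X Y : ℝ, (s 0:ℝ) * X + (s 1:ℝ) * Y = 0 →
      ∃ t : ℝ, X = t * s 1 ∧ Y = -(t * s 0) := by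
    intro s hs X Y heq
    by_cases hs1 : s 1 = 0
    · have hs0 : s 0 ≠ 0 := by
        intro h
        apply hs
        funext i
        match i with
        | 0 => exact h
        | 1 => exact hs1
      have hs0R : (s 0:ℝ) ≠ 0 := Int.cast_ne_zero.mpr hs0
      have hX : X = 0 := by
        rw [hs1] at heq
        push_cast at heq
        have : (s 0:ℝ) * X = 0 := by linarith
        rcases mul_eq_zero.mp this with h | h
        exacts [absurd h hs0R, h]
      refine ⟨-Y/(s 0:ℝ), ?_, ?_⟩
      · rw [hX, hs1]; simp
      · field_simp
    · have hs1R : (s 1:ℝ) ≠ 0 := Int.cast_ne_zero.mpr hs1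
      refine ⟨X/(s 1:ℝ), ?_, ?_⟩
      · field_simp
      · field_simp
        first
        | linear_combination heq
        | linear_combination -heq
        | linarith [heq]
  have hadj : ∀ u ∈ PosRootsAt R w, ∀ v ∈ PosRootsAt R w, 0 < cr u v →
      (∀ s ∈ PosRootsAt R w, ¬(0 < cr u s ∧ 0 < cr s v)) → cr u v = 1 := by
    intro u hu v hv hcr hno
    have hUR : Phi w u ∈ R := hu.1
    have hVR : Phi w v ∈ R := hv.1
    have hcrR : (0:ℝ) < (u 0:ℝ) * v 1 - (u 1:ℝ) * v 0 := by
      have h1 : (0:ℤ) < u 0 * v 1 - u 1 * v 0 := hcr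
      exact_mod_cast h1
    obtain ⟨p, hpw0, hpw1⟩ : ∃ p : Vr 2, w 0 p = ((u 1:ℝ) + v 1) ∧ w 1 p = -((u 0:ℝ) + v 0) := by
      refine ⟨((u 1:ℝ) + v 1) • p1 + (-((u 0:ℝ) + v 0)) • p2, ?_, ?_⟩ <;>
        simp [map_add, map_smul, hp1w0, hp1w1, hp2w0, hp2w1]
    have hUp : 0 < Phi w u p := by
      rw [Phi_eval, hpw0, hpw1]
      linarith [hcrR]
    have hVp : Phi w v p < 0 := by
      rw [Phi_eval, hpw0, hpw1]
      linarith [hcrR]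
    set T : Set (Vr 2) := {q | 0 < Phi w u q ∧ Phi w v q < 0} with hTdef
    have hpT : p ∈ T := ⟨hUp, hVp⟩
    have hTsub : T ⊆ ArrComplement A := by
      rintro q ⟨hq1, hq2⟩ H hH hqH
      rw [hA] at hH
      obtain ⟨α, hαR, rfl⟩ := hH
      have hαq : α q = 0 := hqH
      obtain ⟨s, hsP, hseq⟩ := hsplit α hαR
      have hsq : Phi w s q = 0 := by
        rcases hseq with rfl | heq
        · exact hαq
        · have : (- Phi w s) q = 0 := heq ▸ hαq
          rw [LinearMap.neg_apply] at this
          linarith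
      have hs0 : s ≠ 0 := (hyp1 s hsP).2
      rw [Phi_eval] at hsq
      obtain ⟨t, htX, htY⟩ := tlem s hs0 _ _ hsq
      rw [Phi_eval] at hq1 hq2
      rw [htX, htY] at hq1 hq2
      have hq1' : 0 < t * ((cr u s : ℤ):ℝ) := by rw [crcast]; linarith [hq1]
      have hq2' : t * ((cr v s : ℤ):ℝ) < 0 := by rw [crcast]; linarith [hq2]
      rcases lt_trichotomy t 0 with ht | ht | ht
      · have hus : cr u s < 0 := by exact_mod_cast L2 ht hq1'
        have hvs : 0 < cr v s := by exact_mod_cast L6 ht hq2'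
        have h1 : 0 < cr s u := by rw [cr_skew']; omega
        have := trans_strict hv.2 hu.2 hsP.2 hvs h1
        rw [cr_skew'] at this; omega
      · rw [ht] at hq1'; simp at hq1'
      · have hus : 0 < cr u s := by exact_mod_cast L1 ht hq1'
        have hvs : cr v s < 0 := by exact_mod_cast L5 ht hq2'
        have hsv : 0 < cr s v := by rw [cr_skew']; omega
        exact hno s hsP ⟨hus, hsv⟩
    have hTopen : IsOpen T := by
      have : T = (Phi w u) ⁻¹' (Set.Ioi 0) ∩ (Phi w v) ⁻¹' (Set.Iio 0) := rfl
      rw [this]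
      exact ((isOpen_Ioi.preimage (Phi w u).continuous_of_finiteDimensional).inter
        (isOpen_Iio.preimage (Phi w v).continuous_of_finiteDimensional))
    have hTconv : Convex ℝ T := by
      have : T = {q | 0 < Phi w u q} ∩ {q | Phi w v q < 0} := rfl
      rw [this]
      exact (convex_halfSpace_gt (LinearMap.isLinear (Phi w u)) 0).inter
        (convex_halfSpace_lt (LinearMap.isLinear (Phi w v)) 0)
    have hTcc : T = connectedComponentIn (ArrComplement A) p := by
      apply Set.Subset.antisymm
      · exact (hTconv.isPreconnected).subset_connectedComponentIn hpT hTsub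
      · intro q hq
        have hccsub : connectedComponentIn (ArrComplement A) p ⊆ ArrComplement A :=
          connectedComponentIn_subset _ _
        have hpin : p ∈ connectedComponentIn (ArrComplement A) p :=
          mem_connectedComponentIn (hTsub hpT)
        refine ⟨?_, ?_⟩
        · exact possign (Phi w u) _ isPreconnected_connectedComponentIn
            (fun y hy => hnv _ hUR y (hccsub hy)) hpin hUp q hq
        · have := possign (-(Phi w u) + (Phi w u) - (Phi w v)) _ isPreconnected_connectedComponentIn
            (fun y hy => ?_) hpin ?_ q hq
          · rw [LinearMap.sub_apply, LinearMap.add_apply, LinearMap.neg_apply] at this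
            linarith
          · rw [LinearMap.sub_apply, LinearMap.add_apply, LinearMap.neg_apply]
            have := hnv _ hVR y (hccsub hy)
            intro hcon
            apply this
            linarith
          · rw [LinearMap.sub_apply, LinearMap.add_apply, LinearMap.neg_apply]
            linarith
    have hTchamber : IsChamber A T := ⟨p, hTsub hpT, hTcc⟩
    -- walls of T
    have hwallsT : ∀ α ∈ Walls R T, α = Phi w u ∨ α = -(Phi w u) ∨ α = Phi w v ∨ α = -(Phi w v) := by
      rintro α ⟨hαR, hαnn, hαspan⟩
      obtain ⟨s, hsP, hseq⟩ := hsplit α hαR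
      have hs0 : s ≠ 0 := (hyp1 s hsP).2
      obtain ⟨kz, hkz0, hkz1⟩ : ∃ kz : Vr 2, w 0 kz = (s 1:ℝ) ∧ w 1 kz = -(s 0:ℝ) := by
        refine ⟨(s 1:ℝ) • p1 + (-(s 0:ℝ)) • p2, ?_, ?_⟩ <;>
          simp [map_add, map_smul, hp1w0, hp1w1, hp2w0, hp2w1]
      have hkzker : Phi w s kz = 0 := by rw [Phi_eval, hkz0, hkz1]; ring
      have hkzne : kz ≠ 0 := by
        intro hzz
        rw [hzz, map_zero] at hkz0 hkz1
        apply hs0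
        funext i
        match i with
        | 0 =>
          have : (s 0:ℝ) = 0 := by linarith
          exact_mod_cast this
        | 1 =>
          have : (s 1:ℝ) = 0 := by exact hkz0.symm
          exact_mod_cast this
      have hαker : α kz = 0 := by
        rcases hseq with rfl | heq
        · exact hkzker
        · rw [heq, LinearMap.neg_apply, hkzker, neg_zero]
      obtain ⟨z, ⟨hzker, hzcl⟩, hzne⟩ :
          ∃ z, z ∈ (LinearMap.ker α : Set (Vr 2)) ∩ closure T ∧ z ∉ ({0} : Set (Vr 2)) := by
        rw [← Set.not_subset]
        intro hsub
        have hle : Submodule.span ℝ ((LinearMap.ker α : Set (Vr 2)) ∩ closure T)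
            ≤ Submodule.span ℝ ({0} : Set (Vr 2)) := Submodule.span_mono hsub
        rw [hαspan, Submodule.span_zero_singleton] at hle
        exact hkzne (by simpa using hle (LinearMap.mem_ker.mpr hαker))
      have hzne' : z ≠ 0 := by simpa using hzne
      have hsz : Phi w s z = 0 := by
        have hαz : α z = 0 := LinearMap.mem_ker.mp hzker
        rcases hseq with rfl | heq
        · exact hαz
        · have : (- Phi w s) z = 0 := heq ▸ hαz
          rw [LinearMap.neg_apply] at this
          linarith
      have hclu : 0 ≤ Phi w u z := by
        have hcl : closure T ⊆ {y | 0 ≤ Phi w u y} :=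
          closure_minimal (fun y hy => hy.1.le)
            (IsClosed.preimage (Phi w u).continuous_of_finiteDimensional isClosed_Ici)
        exact hcl hzcl
      have hclv : Phi w v z ≤ 0 := by
        have hcl : closure T ⊆ {y | Phi w v y ≤ 0} :=
          closure_minimal (fun y hy => hy.2.le)
            (IsClosed.preimage (Phi w v).continuous_of_finiteDimensional isClosed_Iic)
        exact hcl hzcl
      rw [Phi_eval] at hsz
      obtain ⟨t, htX, htY⟩ := tlem s hs0 _ _ hsz
      rw [Phi_eval, htX, htY] at hclu hclv
      have hclu' : 0 ≤ t * ((cr u s : ℤ):ℝ) := by rw [crcast]; linarith [hclu]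
      have hclv' : t * ((cr v s : ℤ):ℝ) ≤ 0 := by rw [crcast]; linarith [hclv]
      have htne : t ≠ 0 := by
        intro h
        apply hzne'
        have hz := hdecomp z
        rw [htX, htY, h] at hz
        simpa using hz
      have hfinal : s = u ∨ s = v := by
        rcases lt_or_gt_of_ne htne with ht | ht
        · -- t < 0 : cr u s ≤ 0 and cr s v ≤ 0
          have hus : cr u s ≤ 0 := by exact_mod_cast L4 ht hclu'
          have hsv : cr s v ≤ 0 := by
            have h3 : 0 ≤ cr v s := by exact_mod_cast L8 ht hclv'
            rw [cr_skew']; omega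
          rcases eq_or_lt_of_le hus with h | h
          · exact Or.inl (hrayu u hu s hsP h).symm
          · rcases eq_or_lt_of_le hsv with h' | h'
            · exact Or.inr (hrayu s hsP v hv h')
            · exfalso
              have h1 : 0 < cr s u := by rw [cr_skew']; omega
              have h2 : 0 < cr v s := by rw [cr_skew']; omega
              have := trans_strict hv.2 hu.2 hsP.2 h2 h1
              rw [cr_skew'] at this; omega
        · -- t > 0 : cr u s ≥ 0 and cr s v ≥ 0
          have hus : 0 ≤ cr u s := by exact_mod_cast L3 ht hclu'
          have hsv : 0 ≤ cr s v := by
            have h3 : cr v s ≤ 0 := by exact_mod_cast L7 ht hclv'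
            rw [cr_skew']; omega
          rcases eq_or_lt_of_le hus with h | h
          · exact Or.inl (hrayu u hu s hsP h.symm).symm
          · rcases eq_or_lt_of_le hsv with h' | h'
            · exact Or.inr (hrayu s hsP v hv h'.symm)
            · exact absurd ⟨h, h'⟩ (hno s hsP)
      rcases hfinal with rfl | rfl
      · rcases hseq with rfl | heq
        · exact Or.inl rfl
        · exact Or.inr (Or.inl heq)
      · rcases hseq with rfl | heq
        · exact Or.inr (Or.inr (Or.inl rfl))
        · exact Or.inr (Or.inr (Or.inr heq))
    -- crystallographic condition at T
    have hspanT : ∀ i' : Fin 2, w i' ∈ Submodule.span ℤ ({Phi w u, Phi w v} : Set (DualV 2)) := by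
      intro i'
      have h1 := hcrys T hTchamber (w i') (hwR i')
      refine Submodule.span_le.mpr ?_ h1
      intro α hα
      rcases hwallsT α hα with h | h | h | h <;> subst h
      · exact Submodule.subset_span (Or.inl rfl)
      · exact Submodule.neg_mem _ (Submodule.subset_span (Or.inl rfl))
      · exact Submodule.subset_span (Or.inr rfl)
      · exact Submodule.neg_mem _ (Submodule.subset_span (Or.inr rfl))
    have key : ∀ (mz nz : ℤ) (i' : Fin 2), mz • Phi w u + nz • Phi w v = w i' →
        (fun t' => mz * u t' + nz * v t') = (Pi.single i' 1 : Fin 2 → ℤ) := by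
      intro mz nz i' hmn
      apply hPhiinj
      have h1 : Phi w (fun t' => mz * u t' + nz * v t') = mz • Phi w u + nz • Phi w v := by
        unfold Phi
        rw [Fin.sum_univ_two, Fin.sum_univ_two, Fin.sum_univ_two]
        push_cast
        module
      rw [h1, hmn, hPhisingle i']
    obtain ⟨m0, n0, hm0⟩ := Submodule.mem_span_pair.mp (hspanT 0)
    obtain ⟨m1, n1, hm1⟩ := Submodule.mem_span_pair.mp (hspanT 1)
    have e0 := key m0 n0 0 hm0
    have e1 := key m1 n1 1 hm1
    have E1 : m0 * u 0 + n0 * v 0 = 1 := by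
      have := congrFun e0 0; rwa [Pi.single_eq_same] at this
    have E2 : m0 * u 1 + n0 * v 1 = 0 := by
      have := congrFun e0 1
      rwa [Pi.single_eq_of_ne (show (1:Fin 2) ≠ 0 by decide)] at this
    have E3 : m1 * u 0 + n1 * v 0 = 0 := by
      have := congrFun e1 0
      rwa [Pi.single_eq_of_ne (show (0:Fin 2) ≠ 1 by decide)] at this
    have E4 : m1 * u 1 + n1 * v 1 = 1 := by
      have := congrFun e1 1; rwa [Pi.single_eq_same] at this
    have hdet : (m0 * n1 - n0 * m1) * cr u v = 1 := by
      have expand : (m0 * n1 - n0 * m1) * (u 0 * v 1 - u 1 * v 0) =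
          (m0 * u 0 + n0 * v 0) * (m1 * u 1 + n1 * v 1)
            - (m0 * u 1 + n0 * v 1) * (m1 * u 0 + n1 * v 0) := by ring
      rw [E1, E2, E3, E4] at expand
      unfold cr
      omega
    have hdvd : cr u v ∣ 1 := Dvd.intro_left _ hdet
    have := Int.le_of_dvd one_pos hdvd
    omega
  have hfin : (PosRootsAt R w).Finite := by
    have hsub : PosRootsAt R w ⊆ (fun cz => Phi w cz) ⁻¹' R := fun c hc => hc.1
    refine Set.Finite.subset (Set.Finite.preimage ?_ hRfin) hsub
    intro x _ y _ hxy
    exact hPhiinj x y hxy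
  exact ⟨hyp1, hsingle, hrayu, hadj, hfin⟩


theorem stmt4' (A : Set (Submodule ℝ (Vr 2))) (R : Set (DualV 2)) (h : IsCrystArr A R)
    (K : Set (Vr 2)) (hK : IsChamber A K)
    (w : Fin 2 → DualV 2) (hw : IsWallBasis R K w) :
    (∀ c ∈ PosRootsAt R w, (∃ i, c = Pi.single i 1) ∨
      ∃ a ∈ PosRootsAt R w, ∃ b ∈ PosRootsAt R w, c = a + b) ∧
    (∀ i j : Fin 2, i ≠ j → ∀ k : ℕ,
      ((k : ℤ) • Pi.single i 1 + Pi.single j 1) ∈ PosRootsAt R w →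
      ∀ ℓ : ℕ, ℓ ≤ k → ((ℓ : ℤ) • Pi.single i 1 + Pi.single j 1) ∈ PosRootsAt R w) := by
  classical
  obtain ⟨hyp1, hsingle, hrayu, hadj, hfin⟩ := geo A R h K hK w hw
  set Sf := hfin.toFinset with hSf
  have hmem : ∀ c, c ∈ Sf ↔ c ∈ PosRootsAt R w := fun c => Set.Finite.mem_toFinset hfin
  have hH : Hyps Sf := ⟨fun c hc => hyp1 c ((hmem c).mp hc),
    fun i => (hmem _).mpr (hsingle i),
    fun u hu v hv hcr => hrayu u ((hmem u).mp hu) v ((hmem v).mp hv) hcr,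
    fun u hu v hv hcr hno => hadj u ((hmem u).mp hu) v ((hmem v).mp hv) hcr
      (fun s hs => hno s ((hmem s).mpr hs))⟩
  obtain ⟨N, hN⟩ : ∃ N : ℕ, Sf.sum ht ≤ (N:ℤ) := ⟨(Sf.sum ht).toNat, Int.self_le_toNat _⟩
  obtain ⟨C1, C2⟩ := comb_main N Sf hH hN
  constructor
  · intro c hc
    rcases C1 c ((hmem c).mpr hc) with h1 | ⟨a, haS, b, hbS, hab⟩
    · exact Or.inl h1
    · exact Or.inr ⟨a, (hmem a).mp haS, b, (hmem b).mp hbS, hab⟩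
  · intro i j hij k hk ℓ hℓ
    exact (hmem _).mp (C2 i j hij k ((hmem _).mpr hk) ℓ hℓ)

end CA2

/-- Corollary (rank two): (1) every positive root is simple or a sum of two positive
roots; (2) if `k·αᵢ + α_j` is a positive root then so is `ℓ·αᵢ + α_j` for `0 ≤ ℓ ≤ k`. -/
theorem stmt4 (A : Set (Submodule ℝ (Vr 2))) (R : Set (DualV 2)) (h : IsCrystArr A R)
    (K : Set (Vr 2)) (hK : IsChamber A K)
    (w : Fin 2 → DualV 2) (hw : IsWallBasis R K w) :
    (∀ c ∈ PosRootsAt R w, (∃ i, c = Pi.single i 1) ∨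
      ∃ a ∈ PosRootsAt R w, ∃ b ∈ PosRootsAt R w, c = a + b) ∧
    (∀ i j : Fin 2, i ≠ j → ∀ k : ℕ,
      ((k : ℤ) • Pi.single i 1 + Pi.single j 1) ∈ PosRootsAt R w →
      ∀ ℓ : ℕ, ℓ ≤ k → ((ℓ : ℤ) • Pi.single i 1 + Pi.single j 1) ∈ PosRootsAt R w) := by
  exact CA2.stmt4' A R h K hK w hw

end
end

section
/- Let (𝒜, V, ℛ) be a crystallographic arrangement, K a chamber, and X ≤ ℝ^r a linear subspace. Then there exists a linearly independent subset Δ ⊆ X ∩ R^K_+ such that every element of X ∩ R^K_+ is a linear combination of elements of Δ with coefficients in ℕ₀. -/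
open Set

noncomputable section

namespace SRAux

variable {r : ℕ}

lemma isOpen_arrComplement {A : Set (Submodule ℝ (Vr r))} (hfin : A.Finite) :
    IsOpen (ArrComplement A) := by
  have : ArrComplement A = ⋂ H ∈ A, (↑H : Set (Vr r))ᶜ := by
    ext v; simp [ArrComplement]
  rw [this]
  exact hfin.isOpen_biInter fun H _ => H.closed_of_finiteDimensional.isOpen_compl

lemma chamber_subset {A : Set (Submodule ℝ (Vr r))} {K : Set (Vr r)}
    (hK : IsChamber A K) : K ⊆ ArrComplement A := by
  obtain ⟨x, hx, rfl⟩ := hK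
  exact connectedComponentIn_subset _ _

lemma chamber_preconn {A : Set (Submodule ℝ (Vr r))} {K : Set (Vr r)}
    (hK : IsChamber A K) : IsPreconnected K := by
  obtain ⟨x, hx, rfl⟩ := hK
  exact isPreconnected_connectedComponentIn

lemma chamber_closure_inter {A : Set (Submodule ℝ (Vr r))} {K : Set (Vr r)}
    (hfin : A.Finite) (hK : IsChamber A K) :
    closure K ∩ ArrComplement A ⊆ K := by
  obtain ⟨x, hx, rfl⟩ := hK
  rintro p ⟨hpc, hpF⟩
  have hopen : IsOpen (connectedComponentIn (ArrComplement A) p) :=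
    (isOpen_arrComplement hfin).connectedComponentIn
  have hmem : p ∈ connectedComponentIn (ArrComplement A) p :=
    mem_connectedComponentIn hpF
  obtain ⟨q, hq1, hq2⟩ :=
    mem_closure_iff.1 hpc _ hopen hmem
  have h1 : connectedComponentIn (ArrComplement A) x
      = connectedComponentIn (ArrComplement A) q := connectedComponentIn_eq hq2
  have h2 : connectedComponentIn (ArrComplement A) p
      = connectedComponentIn (ArrComplement A) q := connectedComponentIn_eq hq1
  rw [h1, ← h2]
  exact hmem

/-- Linear functionals in `R` have constant sign on a chamber. -/
lemma sign_const {A : Set (Submodule ℝ (Vr r))} {K : Set (Vr r)}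
    (hK : IsChamber A K) {α : DualV r} (hker : LinearMap.ker α ∈ A) :
    (∀ x ∈ K, 0 < α x) ∨ (∀ x ∈ K, α x < 0) := by
  have hne : ∀ x ∈ K, α x ≠ 0 := by
    intro x hx h0
    exact chamber_subset hK hx _ hker (by simpa [LinearMap.mem_ker] using h0)
  by_contra hcon
  push_neg at hcon
  obtain ⟨⟨x, hx, hx2⟩, ⟨y, hy, hy2⟩⟩ := hcon
  have hx3 : α x < 0 := lt_of_le_of_ne hx2 (hne x hx)
  have hy3 : 0 < α y := lt_of_le_of_ne hy2 (Ne.symm (hne y hy))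
  have hcont : ContinuousOn (fun v => α v) K :=
    (LinearMap.continuous_of_finiteDimensional α).continuousOn
  obtain ⟨z, hz, hz0⟩ := (chamber_preconn hK).intermediate_value₂ hx hy hcont
    continuousOn_const (le_of_lt hx3) (le_of_lt hy3)
  exact hne z hz hz0

-- cone lemmas
variable {b : Fin r → Vr r}

variable {r : ℕ} {b : Fin r → Vr r}

/-- The basis determined by `r` linearly independent vectors in `ℝ^r`. -/
def coneBasis (hb : LinearIndependent ℝ b) : Module.Basis (Fin r) ℝ (Vr r) :=
  Module.Basis.mk hb (by
    have h1 : Module.finrank ℝ (Submodule.span ℝ (Set.range b)) = r := by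
      rw [finrank_span_eq_card hb, Fintype.card_fin]
    exact (Submodule.eq_top_of_finrank_eq (by simp [h1])).ge)

lemma coneBasis_apply (hb : LinearIndependent ℝ b) (i : Fin r) : coneBasis hb i = b i := by
  simp [coneBasis]

lemma coneBasis_repr_sum (hb : LinearIndependent ℝ b) (a : Fin r → ℝ) (j : Fin r) :
    (coneBasis hb).repr (∑ i, a i • b i) j = a j := by
  have h1 : ∑ i, a i • b i = (coneBasis hb).equivFun.symm a := by
    rw [Module.Basis.equivFun_symm_apply]
    exact Finset.sum_congr rfl fun i _ => by rw [coneBasis_apply]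
  rw [h1]
  have := (coneBasis hb).equivFun.apply_symm_apply a
  have h2 : (coneBasis hb).equivFun ((coneBasis hb).equivFun.symm a) j = a j := by rw [this]
  rwa [Module.Basis.equivFun_apply] at h2

lemma repr_continuous (hb : LinearIndependent ℝ b) (i : Fin r) :
    Continuous (fun v => (coneBasis hb).repr v i) :=
  LinearMap.continuous_of_finiteDimensional
    ((Finsupp.lapply i).comp ((coneBasis hb).repr : Vr r →ₗ[ℝ] (Fin r →₀ ℝ)))

lemma mem_closure_openCone (hb : LinearIndependent ℝ b) {a : Fin r → ℝ}
    (ha : ∀ i, 0 ≤ a i) : ∑ i, a i • b i ∈ closure (OpenCone b) := by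
  set s : Vr r := ∑ i, b i with hs
  have hseq : ∀ n : ℕ, (∑ i, a i • b i) + (1 / (n + 1) : ℝ) • s ∈ OpenCone b := by
    intro n
    refine ⟨fun i => a i + 1 / (n + 1), fun i => ?_, ?_⟩
    · have : (0:ℝ) < 1 / (n + 1) := by positivity
      linarith [ha i]
    · rw [hs, Finset.smul_sum, ← Finset.sum_add_distrib]
      exact Finset.sum_congr rfl fun i _ => by rw [add_smul]
  have htend : Filter.Tendsto (fun n : ℕ => (∑ i, a i • b i) + (1 / (n + 1) : ℝ) • s)
      Filter.atTop (nhds (∑ i, a i • b i)) := by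
    have h0 : Filter.Tendsto (fun n : ℕ => (1 / (n + 1) : ℝ)) Filter.atTop (nhds 0) :=
      tendsto_one_div_add_atTop_nhds_zero_nat
    have := (h0.smul_const s).const_add (∑ i, a i • b i)
    simpa using this
  exact mem_closure_of_tendsto htend (Filter.Eventually.of_forall hseq)

lemma closure_openCone_subset (hb : LinearIndependent ℝ b) {v : Vr r}
    (hv : v ∈ closure (OpenCone b)) :
    (∀ i, 0 ≤ (coneBasis hb).repr v i) ∧ v = ∑ i, ((coneBasis hb).repr v i) • b i := by
  constructor
  · intro i
    have hcl : IsClosed {u : Vr r | 0 ≤ (coneBasis hb).repr u i} :=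
      isClosed_le continuous_const (repr_continuous hb i)
    have hsub : OpenCone b ⊆ {u : Vr r | 0 ≤ (coneBasis hb).repr u i} := by
      rintro u ⟨a, hpos, rfl⟩
      simp only [mem_setOf_eq, coneBasis_repr_sum hb]
      exact le_of_lt (hpos i)
    exact closure_minimal hsub hcl hv
  · have h1 := (coneBasis hb).sum_repr v
    have h2 : ∑ i, ((coneBasis hb).repr v i) • coneBasis hb i
        = ∑ i, ((coneBasis hb).repr v i) • b i :=
      Finset.sum_congr rfl fun i _ => by rw [coneBasis_apply]
    conv_lhs => rw [← h1]
    exact h2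


lemma coneBasis_coe (hb : LinearIndependent ℝ b) : ⇑(coneBasis hb) = b :=
  funext fun i => coneBasis_apply hb i

lemma coneBasis_repr_b (hb : LinearIndependent ℝ b) (k i : Fin r) :
    (coneBasis hb).repr (b k) i = if k = i then 1 else 0 := by
  rw [← coneBasis_apply hb k, Module.Basis.repr_self, Finsupp.single_apply]

lemma wall_structure (hb : LinearIndependent ℝ b) {α : DualV r} (hα0 : α ≠ 0)
    (hnnK : ∀ x ∈ OpenCone b, 0 ≤ α x)
    (hspan : Submodule.span ℝ ((LinearMap.ker α : Set (Vr r)) ∩ closure (OpenCone b))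
      = LinearMap.ker α) :
    ∃ i0, 0 < α (b i0) ∧ ∀ j, j ≠ i0 → α (b j) = 0 := by
  have hclnn : ∀ v ∈ closure (OpenCone b), 0 ≤ α v := by
    intro v hv
    have hcl : IsClosed {u : Vr r | 0 ≤ α u} :=
      isClosed_le continuous_const (LinearMap.continuous_of_finiteDimensional α)
    exact closure_minimal hnnK hcl hv
  have hbmem : ∀ i, b i ∈ closure (OpenCone b) := by
    intro i
    have := mem_closure_openCone hb (a := fun j => if j = i then 1 else 0)
      (fun j => by positivity)
    simpa [ite_smul] using this
  have hnn : ∀ i, 0 ≤ α (b i) := fun i => hclnn _ (hbmem i)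
  -- the zero set
  set Z : Set (Fin r) := {i | α (b i) = 0} with hZ
  have hker_sub : (LinearMap.ker α : Set (Vr r)) ∩ closure (OpenCone b)
      ⊆ ↑(Submodule.span ℝ (b '' Z)) := by
    rintro x ⟨hx1, hx2⟩
    obtain ⟨hrnn, hrsum⟩ := closure_openCone_subset hb hx2
    have hx0 : α x = 0 := hx1
    have hsum0 : ∑ i, ((coneBasis hb).repr x i) * α (b i) = 0 := by
      have : α x = ∑ i, ((coneBasis hb).repr x i) * α (b i) := by
        conv_lhs => rw [hrsum]
        rw [map_sum]
        exact Finset.sum_congr rfl fun i _ => by rw [map_smul, smul_eq_mul]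
      rw [← this, hx0]
    have hterm : ∀ i ∈ Finset.univ, ((coneBasis hb).repr x i) * α (b i) = 0 := by
      rw [← Finset.sum_eq_zero_iff_of_nonneg (fun i _ => mul_nonneg (hrnn i) (hnn i))]
      exact hsum0
    have hsupp : ∀ i, i ∉ Z → (coneBasis hb).repr x i = 0 := by
      intro i hi
      have h1 := hterm i (Finset.mem_univ i)
      have h2 : α (b i) ≠ 0 := hi
      exact (mul_eq_zero.1 h1).resolve_right h2
    rw [← coneBasis_coe hb]
    apply (Module.Basis.mem_span_image (coneBasis hb)).2
    intro i hi
    by_contra hiZ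
    exact (Finsupp.mem_support_iff.1 hi) (hsupp i hiZ)
  have hker_le : LinearMap.ker α ≤ Submodule.span ℝ (b '' Z) := by
    rw [← hspan]
    exact Submodule.span_le.2 hker_sub
  -- some i0 with nonzero value
  have hex : ∃ i0, α (b i0) ≠ 0 := by
    by_contra hno
    push_neg at hno
    apply hα0
    apply Module.Basis.ext (coneBasis hb)
    intro i
    rw [coneBasis_apply hb]
    simp [hno i]
  obtain ⟨i0, hi0⟩ := hex
  refine ⟨i0, lt_of_le_of_ne (hnn i0) (Ne.symm hi0), ?_⟩
  intro j hj
  by_contra hjne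
  -- v ∈ ker α but repr v i0 ≠ 0
  set v : Vr r := α (b j) • b i0 - α (b i0) • b j with hv
  have hvker : v ∈ LinearMap.ker α := by
    simp only [LinearMap.mem_ker, hv, map_sub, map_smul, smul_eq_mul]
    ring
  have hvspan : v ∈ Submodule.span ℝ (b '' Z) := hker_le hvker
  have hrepr : (coneBasis hb).repr v i0 = α (b j) := by
    simp only [hv, map_sub, map_smul]
    have h1 := coneBasis_repr_b hb i0 i0
    have h2 := coneBasis_repr_b hb j i0
    simp only [Finsupp.coe_sub, Finsupp.coe_smul, Pi.sub_apply, Pi.smul_apply, smul_eq_mul]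
    rw [h1, h2, if_pos rfl, if_neg hj]
    ring
  rw [← coneBasis_coe hb] at hvspan
  have hsupp := (Module.Basis.mem_span_image (coneBasis hb)).1 hvspan
  have hi0Z : i0 ∈ Z := hsupp (Finsupp.mem_support_iff.2 (by rw [hrepr]; exact hjne))
  exact hi0 hi0Z

lemma b_mem_closure (hb : LinearIndependent ℝ b) (i : Fin r) :
    b i ∈ closure (OpenCone b) := by
  have := mem_closure_openCone hb (a := fun j => if j = i then 1 else 0)
    (fun j => by positivity)
  simpa [ite_smul] using this

/-- A point in a subspace avoiding all members of a finite collection of submodules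
that do not contain the subspace. -/
lemma escape {W : Submodule ℝ (Vr r)} {Hs : Set (Submodule ℝ (Vr r))} (hfin : Hs.Finite) :
    ∃ y, y ∈ W ∧ ∀ G ∈ Hs, ¬ W ≤ G → y ∉ G := by
  classical
  set Hbad : Set (Submodule ℝ (Vr r)) := {G ∈ Hs | ¬ W ≤ G} with hHbad
  have hfin' : Hbad.Finite := hfin.subset (sep_subset _ _)
  haveI : Finite ↥Hbad := hfin'.to_subtype
  set p : ↥Hbad → Subspace ℝ W := fun G => (G : Submodule ℝ (Vr r)).comap W.subtype with hp
  have hne : ∀ G, p G ≠ ⊤ := by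
    rintro ⟨G, hG1, hG2⟩ htop
    apply hG2
    intro x hx
    have : (⟨x, hx⟩ : W) ∈ p ⟨G, hG1, hG2⟩ := htop ▸ Submodule.mem_top
    exact this
  have hcov : ⋃ i, (p i : Set W) ≠ univ := by
    intro hc
    obtain ⟨i, hi⟩ := Subspace.exists_eq_top_of_iUnion_eq_univ hc
    exact hne i hi
  have hex : ∃ y0 : W, y0 ∉ ⋃ i, (p i : Set W) := by
    by_contra hno
    push_neg at hno
    exact hcov (eq_univ_iff_forall.2 hno)
  obtain ⟨y0, hy0⟩ := hex
  refine ⟨↑y0, y0.2, fun G hG hle hyG => hy0 ?_⟩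
  exact mem_iUnion.2 ⟨⟨G, hG, hle⟩, hyG⟩

/-- Two elements of a reduced root set positive at the same facet direction agree. -/
lemma prop_unique {R : Set (DualV r)}
    (hred : ∀ α ∈ R, {β | ∃ c : ℝ, β = c • α} ∩ R = {α, -α})
    {bb : Fin r → Vr r} (hbb : LinearIndependent ℝ bb) {γ γ' : DualV r}
    (hγR : γ ∈ R) (hγ'R : γ' ∈ R) (i : Fin r)
    (hp : 0 < γ (bb i)) (hz : ∀ j, j ≠ i → γ (bb j) = 0)
    (hp' : 0 < γ' (bb i)) (hz' : ∀ j, j ≠ i → γ' (bb j) = 0) : γ' = γ := by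
  have hprop : γ' = (γ' (bb i) / γ (bb i)) • γ := by
    apply Module.Basis.ext (coneBasis hbb)
    intro k
    rw [coneBasis_apply hbb]
    by_cases hk : k = i
    · subst hk
      rw [LinearMap.smul_apply, smul_eq_mul]
      field_simp
    · rw [hz' k hk, LinearMap.smul_apply, hz k hk, smul_zero]
  have hmem : γ' ∈ ({γ, -γ} : Set (DualV r)) := by
    rw [← hred γ hγR]
    exact ⟨⟨_, hprop⟩, hγ'R⟩
  rcases hmem with h | h
  · exact h
  · exfalso
    have := congrArg (fun f : DualV r => f (bb i)) h
    simp only [LinearMap.neg_apply] at this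
    linarith

end SRAux

set_option maxHeartbeats 4000000 in
/-- Lemma: localizations have simple roots, i.e. for every subspace `X` there is a
linearly independent subset `Δ ⊆ X ∩ R^K_+` such that every element of `X ∩ R^K_+` is
an ℕ₀-linear combination of elements of `Δ`. -/
theorem stmt6 {r : ℕ} (A : Set (Submodule ℝ (Vr r))) (R : Set (DualV r))
    (h : IsCrystArr A R) (K : Set (Vr r)) (hK : IsChamber A K)
    (w : Fin r → DualV r) (hw : IsWallBasis R K w) (X : Submodule ℝ (Vr r)) :
    ∃ Δ : Finset (Fin r → ℤ),
      (↑Δ : Set (Fin r → ℤ)) ⊆ {c ∈ PosRootsAt R w | (fun i => (c i : ℝ)) ∈ X} ∧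
      LinearIndependent ℝ (fun d : Δ => ((fun i => (((d : Fin r → ℤ)) i : ℝ)) : Vr r)) ∧
      ∀ c ∈ {c ∈ PosRootsAt R w | (fun i => (c i : ℝ)) ∈ X},
        ∃ a : (Fin r → ℤ) → ℕ, c = ∑ d ∈ Δ, (a d : ℤ) • d := by
  classical
  obtain ⟨hRfin, ⟨hAfin, hhyp, hchamb⟩, hAR, hred, hcrys⟩ := h
  obtain ⟨hwinj, hwran⟩ := hw
  -- `0` is not a root
  have hR0 : (0 : DualV r) ∉ R := by
    intro h0
    have hker : LinearMap.ker (0 : DualV r) ∈ A := by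
      rw [hAR]; exact Set.mem_image_of_mem _ h0
    obtain ⟨f, hf0, hf⟩ := hhyp _ hker
    apply hf0
    have : LinearMap.ker f = ⊤ := by rw [← hf, LinearMap.ker_zero]
    exact LinearMap.ker_eq_top.1 this
  have hRneg : ∀ α ∈ R, -α ∈ R := by
    intro α hα
    have hm : -α ∈ ({α, -α} : Set (DualV r)) := by simp
    rw [← hred α hα] at hm
    exact hm.2
  have hkerA : ∀ α ∈ R, LinearMap.ker α ∈ A := fun α hα => by
    rw [hAR]; exact Set.mem_image_of_mem _ hα
  -- simplicial basis at `K`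
  obtain ⟨b, hb, hKb⟩ := hchamb K hK
  have hwall : ∀ i, w i ∈ Walls R K := fun i => by rw [← hwran]; exact Set.mem_range_self i
  have hwR : ∀ i, w i ∈ R := fun i => (hwall i).1
  have hstr : ∀ i, ∃ i0, 0 < w i (b i0) ∧ ∀ j, j ≠ i0 → w i (b j) = 0 := by
    intro i
    have hwni : w i ≠ 0 := fun h0 => hR0 (h0 ▸ hwR i)
    obtain ⟨_, hnn, hspan⟩ := hwall i
    exact SRAux.wall_structure hb hwni (by rw [← hKb]; exact hnn) (by rw [← hKb]; exact hspan)
  choose σ hσpos hσzero using hstr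
  have hσinj : Function.Injective σ := by
    intro i j hij
    apply hwinj
    refine SRAux.prop_unique hred hb (hwR j) (hwR i) (σ j) (hσpos j) (hσzero j) ?_ ?_
    · rw [← hij]; exact hσpos i
    · rw [← hij]; exact hσzero i
  have hσbij : Function.Bijective σ := ⟨hσinj, Finite.injective_iff_surjective.1 hσinj⟩
  set lam : Fin r → ℝ := fun i => w i (b (σ i)) with hlamdef
  have hlam : ∀ i, 0 < lam i := hσpos
  have hpair : ∀ i j, w i (b j) = if σ i = j then lam i else 0 := by
    intro i j
    by_cases hj : σ i = j
    · rw [if_pos hj, hlamdef]; rw [← hj]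
    · rw [if_neg hj]
      exact hσzero i j fun hh => hj hh.symm
  -- the linear parametrization of functionals by coordinate vectors
  set Φ : (Fin r → ℝ) →ₗ[ℝ] DualV r := Fintype.linearCombination ℝ w with hΦdef
  have hΦapp : ∀ a : Fin r → ℝ, Φ a = ∑ i, a i • w i := fun a => rfl
  have hΦeval : ∀ (a : Fin r → ℝ) (j : Fin r), Φ a (b (σ j)) = a j * lam j := by
    intro a j
    rw [hΦapp, LinearMap.sum_apply, Finset.sum_eq_single j]
    · rw [LinearMap.smul_apply, hpair, if_pos rfl, smul_eq_mul]
    · intro i _ hi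
      rw [LinearMap.smul_apply, hpair, if_neg (fun hc => hi (hσinj hc)), smul_zero]
    · intro hh; exact absurd (Finset.mem_univ j) hh
  have hΦinj : Function.Injective Φ := by
    intro a a' haa
    funext j
    have h1 := hΦeval a j
    have h2 := hΦeval a' j
    rw [haa] at h1
    have h3 := h1.symm.trans h2
    exact mul_right_cancel₀ (ne_of_gt (hlam j)) h3
  set cst : (Fin r → ℤ) → Vr r := fun c i => (c i : ℝ) with hcst
  set am : (Fin r → ℤ) → DualV r := fun c => Φ (cst c) with ham
  have hamdef : ∀ c : Fin r → ℤ, am c = ∑ i, (c i : ℝ) • w i := fun c => rfl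
  have haminj : Function.Injective am := by
    intro c c' hcc
    have h1 := hΦinj hcc
    funext i
    have h2 := congrFun h1 i
    simp only [hcst] at h2
    exact_mod_cast h2
  have hmemR : ∀ c : Fin r → ℤ, c ∈ RootsAt R w ↔ am c ∈ R := fun c => Iff.rfl
  have hameval : ∀ (c : Fin r → ℤ) (j : Fin r), am c (b (σ j)) = (c j : ℝ) * lam j :=
    fun c j => hΦeval (cst c) j
  have ham0 : am 0 = 0 := by
    rw [hamdef]
    simp
  have hcoords : ∀ α, α ∈ R → ∃ c : Fin r → ℤ, am c = α := by
    intro α hα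
    have h1 := hcrys K hK α hα
    rw [← hwran] at h1
    obtain ⟨c, hc⟩ := (Submodule.mem_span_range_iff_exists_fun ℤ).1 h1
    refine ⟨c, ?_⟩
    rw [hamdef, ← hc]
    exact Finset.sum_congr rfl fun i _ => Int.cast_smul_eq_zsmul ℝ (c i) (w i)
  have hamneg : ∀ c, am (-c) = -am c := by
    intro c
    have hcc : cst (-c) = -cst c := by funext i; simp [hcst]
    show Φ (cst (-c)) = -Φ (cst c)
    rw [hcc, map_neg]
  have hbcl : ∀ i, b i ∈ closure K := by rw [hKb]; exact SRAux.b_mem_closure hb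
  have hsign : ∀ c : Fin r → ℤ, am c ∈ R → (∀ i, 0 ≤ c i) ∨ (∀ i, c i ≤ 0) := by
    intro c hcR
    rcases SRAux.sign_const hK (hkerA _ hcR) with hpos | hneg
    · left
      intro i
      have hcl : ∀ v ∈ closure K, 0 ≤ am c v := fun v hv =>
        closure_minimal (t := {u | 0 ≤ am c u}) (fun x hx => le_of_lt (hpos x hx))
          (isClosed_le continuous_const (LinearMap.continuous_of_finiteDimensional _)) hv
      have h1 := hcl _ (hbcl (σ i))
      rw [hameval] at h1
      have h2 : (0:ℝ) ≤ (c i : ℝ) := by nlinarith [hlam i]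
      exact_mod_cast h2
    · right
      intro i
      have hcl : ∀ v ∈ closure K, am c v ≤ 0 := fun v hv =>
        closure_minimal (t := {u | am c u ≤ 0}) (fun x hx => le_of_lt (hneg x hx))
          (isClosed_le (LinearMap.continuous_of_finiteDimensional _) continuous_const) hv
      have h1 := hcl _ (hbcl (σ i))
      rw [hameval] at h1
      have h2 : (c i : ℝ) ≤ 0 := by nlinarith [hlam i]
      exact_mod_cast h2
  have hne0 : ∀ c : Fin r → ℤ, am c ∈ R → c ≠ 0 := by
    intro c hcR h0
    rw [h0, ham0] at hcR
    exact hR0 hcR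
  have hposK : ∀ c : Fin r → ℤ, am c ∈ R → (∀ i, 0 ≤ c i) → ∀ x ∈ K, 0 < am c x := by
    intro c hcR hcnn x hx
    rcases SRAux.sign_const hK (hkerA _ hcR) with hpos | hneg
    · exact hpos x hx
    · exfalso
      obtain ⟨i, hi⟩ : ∃ i, c i ≠ 0 := by
        by_contra hno; push_neg at hno; exact hne0 c hcR (funext hno)
      have hipos : (0:ℝ) < (c i : ℝ) := by
        exact_mod_cast lt_of_le_of_ne (hcnn i) (Ne.symm hi)
      have hcl : ∀ v ∈ closure K, am c v ≤ 0 := fun v hv =>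
        closure_minimal (t := {u | am c u ≤ 0}) (fun x' hx' => le_of_lt (hneg x' hx'))
          (isClosed_le (LinearMap.continuous_of_finiteDimensional _) continuous_const) hv
      have h2 := hcl _ (hbcl (σ i))
      rw [hameval] at h2
      nlinarith [hlam i]
  -- the localized positive root set
  set SS : Set (Fin r → ℤ) := {c ∈ PosRootsAt R w | (fun i => (c i : ℝ)) ∈ X} with hSSdef
  have hSSsub : ∀ s ∈ SS, am s ∈ R := fun s hs => (hmemR s).1 hs.1.1
  have hSSnn : ∀ s ∈ SS, ∀ i, 0 ≤ s i := fun s hs => hs.1.2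
  have hSSX : ∀ s ∈ SS, cst s ∈ X := fun s hs => hs.2
  have hSSfin : SS.Finite := by
    apply Set.Finite.subset (Set.Finite.preimage (f := am) haminj.injOn hRfin)
    intro s hs
    exact hSSsub s hs
  haveI : Finite ↥SS := hSSfin.to_subtype
  set Y : Submodule ℝ (Vr r) := ⨅ (s : ↥SS), LinearMap.ker (am ↑s) with hYdef
  have hYmem : ∀ u : Vr r, u ∈ Y ↔ ∀ s ∈ SS, am s u = 0 := by
    intro u
    rw [hYdef]
    simp only [Submodule.mem_iInf, LinearMap.mem_ker, Subtype.forall]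
  obtain ⟨y, hyY, hygen⟩ := SRAux.escape (W := Y) hAfin
  have hyH : ∀ H ∈ A, y ∈ H → Y ≤ H := by
    intro H hH hyH0
    by_contra hnle
    exact hygen H hH hnle hyH0
  have hyzero : ∀ s ∈ SS, am s y = 0 := (hYmem y).1 hyY
  -- the base point of K
  obtain ⟨x00, hx00, hKdef⟩ := hK
  have hx0K : x00 ∈ K := by rw [hKdef]; exact mem_connectedComponentIn hx00
  have hx0F : x00 ∈ ArrComplement A := hx00
  -- choice of δ such that y + t•x00 avoids the arrangement for 0 < t ≤ δ
  have hTfin : ∀ H ∈ A, {t : ℝ | y + t • x00 ∈ H}.Finite := by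
    intro H hH
    by_cases hyH' : y ∈ H
    · apply Set.Finite.subset (Set.finite_singleton 0)
      intro t ht
      simp only [Set.mem_setOf_eq] at ht
      have h1 : t • x00 ∈ H := by
        have h2 := H.sub_mem ht hyH'
        simpa using h2
      by_contra ht0
      simp only [Set.mem_singleton_iff] at ht0
      have hx : x00 ∈ H := by
        have h3 := H.smul_mem t⁻¹ h1
        rwa [smul_smul, inv_mul_cancel₀ ht0, one_smul] at h3
      exact hx0F H hH hx
    · apply Set.Subsingleton.finite
      intro t1 ht1 t2 ht2
      by_contra hne
      have h1 : (t1 - t2) • x00 ∈ H := by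
        have h2 := H.sub_mem ht1 ht2
        have h3 : y + t1 • x00 - (y + t2 • x00) = (t1 - t2) • x00 := by
          rw [sub_smul]; abel
        rwa [h3] at h2
      have hx : x00 ∈ H := by
        have h3 := H.smul_mem (t1 - t2)⁻¹ h1
        rwa [smul_smul, inv_mul_cancel₀ (sub_ne_zero.2 hne), one_smul] at h3
      exact hx0F H hH hx
  set Tbad := ⋃ H ∈ A, {t : ℝ | y + t • x00 ∈ H} with hTbad
  have hTbadfin : Tbad.Finite := Set.Finite.biUnion hAfin hTfin
  obtain ⟨δ, hδpos, hδgood⟩ : ∃ δ : ℝ, 0 < δ ∧ ∀ t, 0 < t → t ≤ δ → t ∉ Tbad := by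
    by_cases hne : (Tbad ∩ Set.Ioi 0).Nonempty
    · have hfin2 : (Tbad ∩ Set.Ioi 0).Finite := hTbadfin.subset Set.inter_subset_left
      have hne2 : hfin2.toFinset.Nonempty := by
        rwa [Set.Finite.toFinset_nonempty]
      set m := hfin2.toFinset.min' hne2 with hm
      have hmmem : m ∈ Tbad ∩ Set.Ioi 0 := by
        have h4 := hfin2.toFinset.min'_mem hne2
        rwa [Set.Finite.mem_toFinset] at h4
      have hmpos : 0 < m := hmmem.2
      refine ⟨m / 2, by linarith, ?_⟩
      intro t ht1 ht2 htbad
      have hle : m ≤ t := by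
        have h5 : t ∈ hfin2.toFinset := by
          rw [Set.Finite.mem_toFinset]; exact ⟨htbad, ht1⟩
        exact hfin2.toFinset.min'_le t h5
      linarith
    · refine ⟨1, one_pos, fun t ht1 _ htbad => hne ⟨t, htbad, ht1⟩⟩
  have hzgood : ∀ t : ℝ, 0 < t → t ≤ δ → y + t • x00 ∈ ArrComplement A := by
    intro t h1 h2 H hH hmem
    exact hδgood t h1 h2 (Set.mem_biUnion hH hmem)
  set z := y + δ • x00 with hzdef
  set K1 := connectedComponentIn (ArrComplement A) z with hK1def
  have hzF : z ∈ ArrComplement A := hzgood δ hδpos le_rfl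
  have hK1 : IsChamber A K1 := ⟨z, hzF, rfl⟩
  have hlinecont : Continuous (fun t : ℝ => y + t • x00) :=
    continuous_const.add (continuous_id.smul continuous_const)
  have hseg : ∀ t : ℝ, 0 < t → t ≤ δ → y + t • x00 ∈ K1 := by
    have hconn : IsPreconnected ((fun t : ℝ => y + t • x00) '' Set.Ioc 0 δ) :=
      IsPreconnected.image isPreconnected_Ioc _ hlinecont.continuousOn
    have hsub : ((fun t : ℝ => y + t • x00) '' Set.Ioc 0 δ) ⊆ ArrComplement A := by
      rintro p ⟨t, ⟨ht1, ht2⟩, rfl⟩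
      exact hzgood t ht1 ht2
    have hzmem : z ∈ ((fun t : ℝ => y + t • x00) '' Set.Ioc 0 δ) :=
      ⟨δ, ⟨hδpos, le_rfl⟩, rfl⟩
    have hsub2 := hconn.subset_connectedComponentIn hzmem hsub
    intro t h1 h2
    exact hK1def ▸ hsub2 ⟨t, ⟨h1, h2⟩, rfl⟩
  have hycl : y ∈ closure K1 := by
    have htend : Filter.Tendsto (fun t : ℝ => y + t • x00)
        (nhdsWithin 0 (Set.Ioi 0)) (nhds y) := by
      have h6 := hlinecont.tendsto 0
      simp only [zero_smul, add_zero] at h6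
      exact h6.mono_left nhdsWithin_le_nhds
    apply mem_closure_of_tendsto htend
    filter_upwards [Ioc_mem_nhdsGT hδpos] with t ht
    exact hseg t ht.1 ht.2
  -- roots vanishing on Y are localized roots (up to sign)
  have hYker : ∀ g, g ∈ R → Y ≤ LinearMap.ker g → ∃ s ∈ SS, am s = g ∨ am s = -g := by
    intro g hgR hYg
    have h1 : ⨅ (s : ↥SS), LinearMap.ker (am ↑s) ≤ LinearMap.ker g := by
      rw [← hYdef]; exact hYg
    have h2 : g ∈ Submodule.span ℝ (Set.range fun s : ↥SS => am ↑s) :=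
      mem_span_of_iInf_ker_le_ker h1
    obtain ⟨cg, hcg⟩ := hcoords g hgR
    have hrange : (Set.range fun s : ↥SS => am ↑s) = Φ '' (cst '' SS) := by
      ext β
      constructor
      · rintro ⟨s, rfl⟩
        exact ⟨cst ↑s, Set.mem_image_of_mem _ s.2, rfl⟩
      · rintro ⟨v, ⟨s, hs, rfl⟩, rfl⟩
        exact ⟨⟨s, hs⟩, rfl⟩
    have h3 : g ∈ Submodule.map Φ (Submodule.span ℝ (cst '' SS)) := by
      rw [← Submodule.span_image, ← hrange]
      exact h2
    obtain ⟨u, hu, hug⟩ := Submodule.mem_map.1 h3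
    have huc : u = cst cg := hΦinj (by rw [hug, ← hcg])
    have hcgX : cst cg ∈ X := by
      have hle : Submodule.span ℝ (cst '' SS) ≤ X := by
        apply Submodule.span_le.2
        rintro _ ⟨s, hs, rfl⟩
        exact hSSX s hs
      exact hle (huc ▸ hu)
    have hcgR : am cg ∈ R := by rw [hcg]; exact hgR
    rcases hsign cg hcgR with hnn | hnp
    · refine ⟨cg, ⟨⟨(hmemR cg).2 hcgR, hnn⟩, hcgX⟩, Or.inl hcg⟩
    · refine ⟨-cg, ⟨⟨(hmemR (-cg)).2 ?_, fun i => by simpa using hnp i⟩, ?_⟩, Or.inr ?_⟩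
      · rw [hamneg]
        exact hRneg _ hcgR
      · show cst (-cg) ∈ X
        have hnegc : cst (-cg) = -cst cg := by funext i; simp [hcst]
        rw [hnegc]
        exact X.neg_mem hcgX
      · rw [hamneg, hcg]
  -- the simplicial structure at K1
  obtain ⟨b1, hb1, hK1b⟩ := hchamb K1 hK1
  have hb1cl : ∀ j, b1 j ∈ closure K1 := by rw [hK1b]; exact SRAux.b_mem_closure hb1
  have hzK1 : z ∈ K1 := by rw [hK1def]; exact mem_connectedComponentIn hzF
  have hposK1 : ∀ s ∈ SS, ∀ x ∈ K1, 0 < am s x := by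
    intro s hs
    rcases SRAux.sign_const hK1 (hkerA _ (hSSsub s hs)) with hpos | hneg
    · exact hpos
    · exfalso
      have h1 := hneg z hzK1
      have h2 : am s z = δ * am s x00 := by
        rw [hzdef, map_add, map_smul, hyzero s hs, zero_add, smul_eq_mul]
      have h3 : 0 < am s x00 := hposK s (hSSsub s hs) (hSSnn s hs) x00 hx0K
      nlinarith
  have hnncl1 : ∀ s ∈ SS, ∀ v ∈ closure K1, 0 ≤ am s v := by
    intro s hs v hv
    exact closure_minimal (t := {u | 0 ≤ am s u}) (fun x hx => le_of_lt (hposK1 s hs x hx))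
      (isClosed_le continuous_const (LinearMap.continuous_of_finiteDimensional _)) hv
  -- the coordinates of y
  set t0 : Fin r → ℝ := fun i => (SRAux.coneBasis hb1).repr y i with ht0
  have hyrep := SRAux.closure_openCone_subset hb1 (by rw [← hK1b]; exact hycl)
  have ht0nn : ∀ i, 0 ≤ t0 i := hyrep.1
  have ht0sum : y = ∑ i, t0 i • b1 i := hyrep.2
  set T : Set (Fin r) := {i | 0 < t0 i} with hT
  have hTzero : ∀ i, i ∉ T → t0 i = 0 := fun i hi => le_antisymm (not_lt.1 hi) (ht0nn i)
  -- localized roots vanish on the b1 i for i ∈ T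
  have hbT : ∀ s ∈ SS, ∀ i ∈ T, am s (b1 i) = 0 := by
    intro s hs
    have h1 : am s y = 0 := hyzero s hs
    have h2 : am s y = ∑ i, t0 i * am s (b1 i) := by
      conv_lhs => rw [ht0sum]
      rw [map_sum]
      exact Finset.sum_congr rfl fun i _ => by rw [map_smul, smul_eq_mul]
    have h3 : ∀ i ∈ Finset.univ, t0 i * am s (b1 i) = 0 := by
      rw [← Finset.sum_eq_zero_iff_of_nonneg
        (fun i _ => mul_nonneg (ht0nn i) (hnncl1 s hs _ (hb1cl i)))]
      rw [← h2, h1]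
    intro i hiT
    have h4 := h3 i (Finset.mem_univ i)
    rcases mul_eq_zero.1 h4 with h5 | h5
    · exact absurd h5 (ne_of_gt hiT)
    · exact h5
  -- the key local chamber property: a ball around y intersected with the
  -- positive side of the localized roots lies in K1
  obtain ⟨ε0, hε0pos, hball⟩ :
      ∃ ε0 : ℝ, 0 < ε0 ∧ ∀ v : Vr r, dist v y < ε0 → (∀ s ∈ SS, 0 < am s v) → v ∈ K1 := by
    set U : Set (Vr r) := ⋂ H ∈ {H ∈ A | y ∉ H}, (↑H : Set (Vr r))ᶜ with hU
    have hUopen : IsOpen U :=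
      Set.Finite.isOpen_biInter (hAfin.subset (Set.sep_subset _ _))
        (fun H _ => H.closed_of_finiteDimensional.isOpen_compl)
    have hyU : y ∈ U := by
      rw [hU]
      exact Set.mem_iInter₂.2 fun H hH => hH.2
    obtain ⟨ε0, hε0pos, hballU⟩ := Metric.isOpen_iff.1 hUopen y hyU
    refine ⟨ε0, hε0pos, ?_⟩
    intro v hvdist hvpos
    set P : Set (Vr r) := Metric.ball y ε0 ∩ ⋂ (s : ↥SS), {u | 0 < am ↑s u} with hP
    have hPconv : Convex ℝ P := by
      apply Convex.inter (convex_ball y ε0)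
      apply convex_iInter
      intro s
      exact convex_halfSpace_gt (LinearMap.isLinear _) 0
    have hPsub : P ⊆ ArrComplement A := by
      rintro p ⟨hp1, hp2⟩ H hH hpH
      by_cases hyH' : y ∈ H
      · obtain ⟨g, hgR, hgker⟩ : ∃ g ∈ R, LinearMap.ker g = H := by
          rw [hAR] at hH
          obtain ⟨g, hg1, hg2⟩ := hH
          exact ⟨g, hg1, hg2⟩
        obtain ⟨s, hsSS, hsg⟩ := hYker g hgR (by rw [hgker]; exact hyH H hH hyH')
        have hps : 0 < am s p := Set.mem_iInter.1 hp2 ⟨s, hsSS⟩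
        have hgp : g p = 0 := by
          rw [← hgker] at hpH
          exact hpH
        rcases hsg with h | h
        · rw [h, hgp] at hps; exact lt_irrefl 0 hps
        · rw [h] at hps
          simp only [LinearMap.neg_apply, hgp, neg_zero] at hps
          exact lt_irrefl 0 hps
      · have hpU : p ∈ U := hballU hp1
        rw [hU] at hpU
        exact Set.mem_iInter₂.1 hpU H ⟨hH, hyH'⟩ hpH
    set tq : ℝ := min δ (ε0 / (2 * (‖x00‖ + 1))) with htq
    have htqpos : 0 < tq := lt_min hδpos (by positivity)
    set q := y + tq • x00 with hq
    have hqK1 : q ∈ K1 := hseg tq htqpos (min_le_left _ _)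
    have hqP : q ∈ P := by
      constructor
      · rw [hq, Metric.mem_ball]
        have hd : dist (y + tq • x00) y = ‖tq • x00‖ := by
          rw [dist_eq_norm]; congr 1; abel
        rw [hd, norm_smul, Real.norm_eq_abs, abs_of_pos htqpos]
        have h7 : tq ≤ ε0 / (2 * (‖x00‖ + 1)) := min_le_right _ _
        have h8 : (0:ℝ) ≤ ‖x00‖ := norm_nonneg _
        have hD : (0:ℝ) < 2 * (‖x00‖ + 1) := by positivity
        have h9 := (le_div_iff₀ hD).1 h7
        nlinarith [mul_nonneg (le_of_lt htqpos) h8]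
      · apply Set.mem_iInter.2
        rintro ⟨s, hs⟩
        show 0 < am s q
        have hq2 : am s q = tq * am s x00 := by
          rw [hq, map_add, map_smul, hyzero s hs, zero_add, smul_eq_mul]
        rw [hq2]
        exact mul_pos htqpos (hposK s (hSSsub s hs) (hSSnn s hs) x00 hx0K)
    have hvP : v ∈ P := by
      constructor
      · exact Metric.mem_ball.2 hvdist
      · exact Set.mem_iInter.2 fun s => hvpos ↑s s.2
    have hPK1 : P ⊆ K1 := by
      have h10 : connectedComponentIn (ArrComplement A) z
          = connectedComponentIn (ArrComplement A) q := connectedComponentIn_eq (hK1def ▸ hqK1)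
      rw [hK1def, h10]
      exact hPconv.isPreconnected.subset_connectedComponentIn hqP hPsub
    exact hPK1 hvP
  -- the cone C is simplicial: nonnegative coordinates off T
  have hC : ∀ v : Vr r, (∀ s ∈ SS, 0 ≤ am s v) → ∀ i, i ∉ T →
      0 ≤ (SRAux.coneBasis hb1).repr v i := by
    intro v hvnn i hiT
    have hμ : ∀ μ : ℝ, 0 < μ → 0 ≤ (SRAux.coneBasis hb1).repr v i
        + μ * (SRAux.coneBasis hb1).repr x00 i := by
      intro μ hμpos
      set vμ := v + μ • x00 with hvμ
      have hvμpos : ∀ s ∈ SS, 0 < am s vμ := by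
        intro s hs
        rw [hvμ, map_add, map_smul, smul_eq_mul]
        have hh1 := hposK s (hSSsub s hs) (hSSnn s hs) x00 hx0K
        have hh2 := hvnn s hs
        nlinarith
      set ε : ℝ := ε0 / (2 * (‖vμ‖ + 1)) with hε
      have hεpos : 0 < ε := by positivity
      have hp : y + ε • vμ ∈ K1 := by
        apply hball
        · have hd : dist (y + ε • vμ) y = ‖ε • vμ‖ := by
            rw [dist_eq_norm]; congr 1; abel
          rw [hd, norm_smul, Real.norm_eq_abs, abs_of_pos hεpos]
          have h8 : (0:ℝ) ≤ ‖vμ‖ := norm_nonneg _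
          have hD : (0:ℝ) < 2 * (‖vμ‖ + 1) := by positivity
          have h9 : ε * (2 * (‖vμ‖ + 1)) = ε0 := by
            rw [hε]; field_simp
          nlinarith [mul_nonneg (le_of_lt hεpos) h8]
        · intro s hs
          rw [map_add, map_smul, hyzero s hs, zero_add, smul_eq_mul]
          exact mul_pos hεpos (hvμpos s hs)
      have hpcl := SRAux.closure_openCone_subset hb1 (by rw [← hK1b]; exact subset_closure hp)
      have h11 := hpcl.1 i
      have h12 : (SRAux.coneBasis hb1).repr (y + ε • vμ) i
          = t0 i + ε * (SRAux.coneBasis hb1).repr vμ i := by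
        rw [map_add, map_smul, Finsupp.add_apply, Finsupp.smul_apply, smul_eq_mul]
      rw [h12, hTzero i hiT, zero_add] at h11
      have h13 : 0 ≤ (SRAux.coneBasis hb1).repr vμ i := by nlinarith
      have h14 : (SRAux.coneBasis hb1).repr vμ i
          = (SRAux.coneBasis hb1).repr v i + μ * (SRAux.coneBasis hb1).repr x00 i := by
        rw [hvμ, map_add, map_smul, Finsupp.add_apply, Finsupp.smul_apply, smul_eq_mul]
      rw [h14] at h13
      exact h13
    by_contra hneg
    push_neg at hneg
    set a1 := (SRAux.coneBasis hb1).repr v i with ha1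
    set a2 := (SRAux.coneBasis hb1).repr x00 i with ha2
    have h15 : a1 < 0 := hneg
    set μ := min 1 (-a1 / (2 * (|a2| + 1))) with hμdef
    have hμpos : 0 < μ := lt_min one_pos (div_pos (by linarith) (by positivity))
    have h16 := hμ μ hμpos
    have h17 : μ * a2 ≤ μ * |a2| := mul_le_mul_of_nonneg_left (le_abs_self a2) (le_of_lt hμpos)
    have h18 : μ ≤ -a1 / (2 * (|a2| + 1)) := min_le_right _ _
    have h19 : (0:ℝ) ≤ |a2| := abs_nonneg a2
    have h20 : μ * |a2| ≤ (-a1 / (2 * (|a2| + 1))) * |a2| :=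
      mul_le_mul_of_nonneg_right h18 h19
    have h21 : (-a1 / (2 * (|a2| + 1))) * |a2| ≤ -a1 / 2 := by
      rw [div_mul_eq_mul_div, div_le_div_iff₀ (by positivity) (by norm_num)]
      nlinarith
    nlinarith
  -- elements of Y are supported on T
  have hYspan : ∀ u, u ∈ Y → ∀ i, i ∉ T → (SRAux.coneBasis hb1).repr u i = 0 := by
    intro u hu i hiT
    have h1 := hC u (fun s hs => le_of_eq ((hYmem u).1 hu s hs).symm) i hiT
    have h2 := hC (-u) (fun s hs => by rw [map_neg, (hYmem u).1 hu s hs, neg_zero]) i hiT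
    rw [map_neg, Finsupp.neg_apply] at h2
    linarith
  -- the walls of K1
  have hW1fin : (Walls R K1).Finite := hRfin.subset fun γ hγ => hγ.1
  set W' : Finset (DualV r) := hW1fin.toFinset with hW'def
  have hW'mem : ∀ γ, γ ∈ W' ↔ γ ∈ Walls R K1 := fun γ => Set.Finite.mem_toFinset _
  have hstr1 : ∀ γ ∈ Walls R K1, ∃ i0, 0 < γ (b1 i0) ∧ ∀ j, j ≠ i0 → γ (b1 j) = 0 := by
    intro γ hγ
    have hγR : γ ∈ R := hγ.1
    have hγ0 : γ ≠ 0 := fun h0 => hR0 (h0 ▸ hγR)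
    obtain ⟨_, hnn, hspan⟩ := hγ
    exact SRAux.wall_structure hb1 hγ0 (by rw [← hK1b]; exact hnn) (by rw [← hK1b]; exact hspan)
  choose iw hiwpos hiwzero using hstr1
  have hiwinj : ∀ γ hγ γ' hγ', iw γ hγ = iw γ' hγ' → γ = γ' := by
    intro γ hγ γ' hγ' he
    refine (SRAux.prop_unique hred hb1 hγ'.1 hγ.1 (iw γ' hγ') (hiwpos γ' hγ') (hiwzero γ' hγ')
      ?_ ?_)
    · rw [← he]; exact hiwpos γ hγ
    · rw [← he]; exact hiwzero γ hγ
  -- the walls of K1 whose direction is not in T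
  set W2 : Finset (DualV r) :=
    W'.filter (fun γ => ∃ hγ : γ ∈ Walls R K1, iw γ hγ ∉ T) with hW2def
  have hW2walls : ∀ γ ∈ W2, γ ∈ Walls R K1 := fun γ hγ =>
    (hW'mem γ).1 (Finset.mem_of_mem_filter γ hγ)
  -- every wall in W2 is a localized positive root
  have hW2s : ∀ γ ∈ W2, ∃ s ∈ SS, am s = γ := by
    intro γ hγ2
    obtain ⟨hγW', hγex⟩ := Finset.mem_filter.1 hγ2
    obtain ⟨hγ, hiT⟩ := hγex
    have hYγ : Y ≤ LinearMap.ker γ := by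
      intro u hu
      have hrep := (SRAux.coneBasis hb1).sum_repr u
      have hsum : γ u = ∑ k, (SRAux.coneBasis hb1).repr u k * γ (b1 k) := by
        conv_lhs => rw [← hrep]
        rw [map_sum]
        refine Finset.sum_congr rfl fun k _ => ?_
        rw [map_smul, smul_eq_mul, SRAux.coneBasis_apply hb1]
      have hz : γ u = 0 := by
        rw [hsum]
        apply Finset.sum_eq_zero
        intro k _
        by_cases hkT : k ∈ T
        · have hkne : k ≠ iw γ hγ := fun hke => hiT (hke ▸ hkT)
          rw [hiwzero γ hγ k hkne, mul_zero]
        · rw [hYspan u hu k hkT, zero_mul]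
      exact hz
    obtain ⟨s, hsSS, hsg⟩ := hYker γ hγ.1 hYγ
    rcases hsg with h | h
    · exact ⟨s, hsSS, h⟩
    · exfalso
      have h1 := hnncl1 s hsSS _ (hb1cl (iw γ hγ))
      rw [h] at h1
      simp only [LinearMap.neg_apply] at h1
      have h2 := hiwpos γ hγ
      linarith
  -- a choice of localized root for each wall in W2
  set sg : DualV r → (Fin r → ℤ) :=
    fun γ => if h : ∃ s, s ∈ SS ∧ am s = γ then h.choose else 0 with hsgdef
  have hsgmem : ∀ γ ∈ W2, sg γ ∈ SS ∧ am (sg γ) = γ := by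
    intro γ hγ2
    obtain ⟨s, hsSS, hsam⟩ := hW2s γ hγ2
    have hex : ∃ s, s ∈ SS ∧ am s = γ := ⟨s, hsSS, hsam⟩
    have h1 : sg γ = hex.choose := by rw [hsgdef]; exact dif_pos hex
    rw [h1]
    exact hex.choose_spec
  have hsginj : Set.InjOn sg ↑W2 := by
    intro γ hγ γ' hγ' he
    have h1 := (hsgmem γ hγ).2
    have h2 := (hsgmem γ' hγ').2
    rw [← h1, ← h2, he]
  set Δ : Finset (Fin r → ℤ) := W2.image sg with hΔdef
  have hΔmem : ∀ d ∈ Δ, ∃ γ ∈ W2, sg γ = d := fun d hd => by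
    obtain ⟨γ, hγ, he⟩ := Finset.mem_image.1 hd
    exact ⟨γ, hγ, he⟩
  refine ⟨Δ, ?_, ?_, ?_⟩
  · -- Δ consists of localized positive roots
    intro d hd
    obtain ⟨γ, hγ, rfl⟩ := hΔmem d hd
    exact (hsgmem γ hγ).1
  · -- linear independence
    rw [Fintype.linearIndependent_iff]
    intro gcoef hsum d0
    obtain ⟨γ0, hγ0, hd0⟩ := hΔmem ↑d0 d0.2
    have hγ0W : γ0 ∈ Walls R K1 := hW2walls γ0 hγ0
    have hamd0 : am ↑d0 = γ0 := by rw [← hd0]; exact (hsgmem γ0 hγ0).2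
    have hsum' : ∑ d : ↥Δ, gcoef d • cst ↑d = 0 := hsum
    have h1 : ∑ d : ↥Δ, gcoef d • am ↑d = 0 := by
      have h2 := congrArg Φ hsum'
      rw [map_sum, map_zero] at h2
      rw [← h2]
      exact Finset.sum_congr rfl fun d _ => by rw [map_smul]
    have h3 := congrArg (fun f : DualV r => f (b1 (iw γ0 hγ0W))) h1
    simp only [LinearMap.sum_apply, LinearMap.smul_apply, smul_eq_mul,
      LinearMap.zero_apply] at h3
    rw [Finset.sum_eq_single d0] at h3
    · have h4 := hiwpos γ0 hγ0W
      rw [hamd0] at h3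
      rcases mul_eq_zero.1 h3 with h5 | h5
      · exact h5
      · exfalso; rw [h5] at h4; exact lt_irrefl 0 h4
    · intro d _ hdne
      obtain ⟨γd, hγd, hdd⟩ := hΔmem ↑d d.2
      have hγdW : γd ∈ Walls R K1 := hW2walls γd hγd
      have hamd : am ↑d = γd := by rw [← hdd]; exact (hsgmem γd hγd).2
      have hγne : γd ≠ γ0 := by
        intro he
        apply hdne
        apply Subtype.ext
        apply haminj
        rw [hamd, hamd0, he]
      have hiwne : iw γ0 hγ0W ≠ iw γd hγdW := by
        intro he
        exact hγne (hiwinj γd hγdW γ0 hγ0W he.symm)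
      rw [hamd, hiwzero γd hγdW _ hiwne, mul_zero]
    · intro hni
      exact absurd (Finset.mem_univ d0) hni
  · -- generation
    intro c hc
    have hcs : am c ∈ Submodule.span ℤ (Walls R K1) := hcrys K1 hK1 _ (hSSsub c hc)
    rw [← Set.Finite.coe_toFinset hW1fin] at hcs
    obtain ⟨m, -, hm⟩ := Submodule.mem_span_finset.1 hcs
    have hev : ∀ x : Vr r, am c x = ∑ γ ∈ W', (m γ : ℝ) * γ x := by
      intro x
      conv_lhs => rw [← hm]
      rw [LinearMap.sum_apply]
      refine Finset.sum_congr rfl fun γ _ => ?_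
      rw [LinearMap.smul_apply, zsmul_eq_mul]
    -- coefficients on walls with direction in T vanish
    have hmT : ∀ γ, ∀ hγW' : γ ∈ W', iw γ ((hW'mem γ).1 hγW') ∈ T → m γ = 0 := by
      intro γ hγW' hiT
      have hγW : γ ∈ Walls R K1 := (hW'mem γ).1 hγW'
      have h1 : am c (b1 (iw γ hγW)) = 0 := hbT c hc _ hiT
      rw [hev] at h1
      rw [Finset.sum_eq_single γ] at h1
      · rcases mul_eq_zero.1 h1 with h5 | h5
        · exact_mod_cast h5
        · exfalso
          have := hiwpos γ hγW
          rw [h5] at this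
          exact lt_irrefl 0 this
      · intro γ' hγ' hne
        have hγ'W : γ' ∈ Walls R K1 := (hW'mem γ').1 hγ'
        have hiwne : iw γ hγW ≠ iw γ' hγ'W := by
          intro he
          exact hne (hiwinj γ' hγ'W γ hγW he.symm)
        rw [hiwzero γ' hγ'W _ hiwne, mul_zero]
      · intro hni
        exact absurd hγW' hni
    -- all coefficients are nonnegative
    have hmnn : ∀ γ ∈ W', 0 ≤ m γ := by
      intro γ hγW'
      have hγW : γ ∈ Walls R K1 := (hW'mem γ).1 hγW'
      have h1 : 0 ≤ am c (b1 (iw γ hγW)) := hnncl1 c hc _ (hb1cl _)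
      rw [hev] at h1
      rw [Finset.sum_eq_single γ] at h1
      · have h4 := hiwpos γ hγW
        have h5 : (0:ℝ) ≤ (m γ : ℝ) := by nlinarith
        exact_mod_cast h5
      · intro γ' hγ' hne
        have hγ'W : γ' ∈ Walls R K1 := (hW'mem γ').1 hγ'
        have hiwne : iw γ hγW ≠ iw γ' hγ'W := by
          intro he
          exact hne (hiwinj γ' hγ'W γ hγW he.symm)
        rw [hiwzero γ' hγ'W _ hiwne, mul_zero]
      · intro hni
        exact absurd hγW' hni
    -- restrict the sum to W2
    have hmW2 : ∑ γ ∈ W2, m γ • γ = am c := by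
      rw [← hm]
      apply Finset.sum_subset (Finset.filter_subset _ _)
      intro γ hγW' hγnW2
      have hγW : γ ∈ Walls R K1 := (hW'mem γ).1 hγW'
      have hiT : iw γ hγW ∈ T := by
        by_contra hniT
        exact hγnW2 (Finset.mem_filter.2 ⟨hγW', ⟨hγW, hniT⟩⟩)
      rw [hmT γ hγW' hiT, zero_smul]
    -- identify c
    have hceq : c = ∑ γ ∈ W2, m γ • sg γ := by
      apply haminj
      rw [← hmW2]
      have h1 : cst (∑ γ ∈ W2, m γ • sg γ) = ∑ γ ∈ W2, (m γ : ℝ) • cst (sg γ) := by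
        funext i
        rw [hcst]
        simp only [Finset.sum_apply, Pi.smul_apply, smul_eq_mul]
        push_cast
        rfl
      symm
      show Φ (cst (∑ γ ∈ W2, m γ • sg γ)) = ∑ γ ∈ W2, m γ • γ
      rw [h1, map_sum]
      refine Finset.sum_congr rfl fun γ hγ2 => ?_
      rw [map_smul]
      have h2 : Φ (cst (sg γ)) = γ := (hsgmem γ hγ2).2
      rw [h2]
      exact Int.cast_smul_eq_zsmul ℝ (m γ) γ
    refine ⟨fun d => (m (am d)).toNat, ?_⟩
    rw [hceq, hΔdef, Finset.sum_image (fun x hx y hy he => hsginj hx hy he)]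
    refine Finset.sum_congr rfl fun γ hγ2 => ?_
    have h2 : am (sg γ) = γ := (hsgmem γ hγ2).2
    show m γ • sg γ = (((m (am (sg γ))).toNat : ℤ)) • sg γ
    rw [h2, Int.toNat_of_nonneg (hmnn γ (Finset.mem_of_mem_filter γ hγ2))]

end
end

section
/- Let (𝒜, V, ℛ) be a crystallographic arrangement of rank three and K a chamber with simple roots α₁, α₂, α₃. If |R^K_+ ∩ span_ℝ(α₁, α₂)| = 2 and |R^K_+ ∩ span_ℝ(α₁, α₃)| = 2, then the arrangement (𝒜, V) is reducible. -/
open Set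

noncomputable section

namespace Stmt7Aux

def mkBasis (u : Fin 3 → Vr 3) (hu : LinearIndependent ℝ u) : Module.Basis (Fin 3) ℝ (Vr 3) :=
  basisOfLinearIndependentOfCardEqFinrank hu (by simp [Module.finrank_fin_fun])

lemma mkBasis_coe (u : Fin 3 → Vr 3) (hu : LinearIndependent ℝ u) : ⇑(mkBasis u hu) = u :=
  coe_basisOfLinearIndependentOfCardEqFinrank _ _

lemma equivFun_sum (u : Fin 3 → Vr 3) (hu : LinearIndependent ℝ u) (a : Fin 3 → ℝ) :
    (mkBasis u hu).equivFun (∑ i, a i • u i) = a := by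
  have h := (mkBasis u hu).equivFun_symm_apply a
  rw [mkBasis_coe] at h
  rw [← h, LinearEquiv.apply_symm_apply]

lemma sum_equivFun' (u : Fin 3 → Vr 3) (hu : LinearIndependent ℝ u) (v : Vr 3) :
    ∑ i, (mkBasis u hu).equivFun v i • u i = v := by
  have h := (mkBasis u hu).sum_equivFun v
  rwa [mkBasis_coe] at h

lemma continuous_coord (u : Fin 3 → Vr 3) (hu : LinearIndependent ℝ u) (i : Fin 3) :
    Continuous fun v => (mkBasis u hu).equivFun v i :=
  (continuous_apply i).comp
    (LinearMap.continuous_of_finiteDimensional ((mkBasis u hu).equivFun : Vr 3 →ₗ[ℝ] (Fin 3 → ℝ)))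

lemma openCone_isOpen (u : Fin 3 → Vr 3) (hu : LinearIndependent ℝ u) : IsOpen (OpenCone u) := by
  have he : OpenCone u = ⋂ i, (fun v => (mkBasis u hu).equivFun v i) ⁻¹' Ioi 0 := by
    ext v
    simp only [mem_iInter, mem_preimage, mem_Ioi, OpenCone, mem_setOf_eq]
    constructor
    · rintro ⟨a, ha, rfl⟩ i
      rw [equivFun_sum]; exact ha i
    · intro hv
      exact ⟨fun i => (mkBasis u hu).equivFun v i, hv, (sum_equivFun' u hu v).symm⟩
  rw [he]
  exact isOpen_iInter_of_finite fun i => isOpen_Ioi.preimage (continuous_coord u hu i)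

lemma closure_openCone_subset (u : Fin 3 → Vr 3) (hu : LinearIndependent ℝ u) :
    closure (OpenCone u) ⊆ {v | ∀ i, 0 ≤ (mkBasis u hu).equivFun v i} := by
  apply closure_minimal
  · rintro v ⟨a, ha, rfl⟩ i
    rw [equivFun_sum]; exact (ha i).le
  · have he : {v : Vr 3 | ∀ i, 0 ≤ (mkBasis u hu).equivFun v i}
        = ⋂ i, (fun v => (mkBasis u hu).equivFun v i) ⁻¹' Ici 0 := by
      ext v; simp
    rw [he]
    exact isClosed_iInter fun i => isClosed_Ici.preimage (continuous_coord u hu i)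

lemma mem_closure_openCone (u : Fin 3 → Vr 3) (a : Fin 3 → ℝ) (ha : ∀ i, 0 ≤ a i) :
    (∑ i, a i • u i) ∈ closure (OpenCone u) := by
  have tend : Filter.Tendsto (fun δ : ℝ => ∑ i, (a i + δ) • u i) (nhdsWithin 0 (Ioi 0))
      (nhds (∑ i, a i • u i)) := by
    have he : (fun δ : ℝ => ∑ i, (a i + δ) • u i)
        = fun δ : ℝ => (∑ i, a i • u i) + δ • ∑ i, u i := by
      funext δ
      rw [Finset.smul_sum, ← Finset.sum_add_distrib]
      exact Finset.sum_congr rfl fun i _ => by rw [add_smul]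
    rw [he]
    have hc : Continuous fun δ : ℝ => (∑ i, a i • u i) + δ • ∑ i, u i := by continuity
    have := hc.tendsto 0
    simpa using this.mono_left nhdsWithin_le_nhds
  refine mem_closure_of_tendsto tend ?_
  filter_upwards [self_mem_nhdsWithin] with δ (hδ : (0:ℝ) < δ)
  exact ⟨fun i => a i + δ, fun i => by dsimp only; linarith [ha i], rfl⟩

lemma nonneg_on_closure (α : DualV 3) (C : Set (Vr 3)) (h : ∀ x ∈ C, 0 < α x) :
    ∀ v ∈ closure C, 0 ≤ α v := by
  intro v hv
  have hc : Continuous α := LinearMap.continuous_of_finiteDimensional α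
  exact closure_minimal (fun x hx => (h x hx).le) (isClosed_Ici.preimage hc) hv

lemma nonpos_on_closure (α : DualV 3) (C : Set (Vr 3)) (h : ∀ x ∈ C, α x < 0) :
    ∀ v ∈ closure C, α v ≤ 0 := by
  intro v hv
  have hc : Continuous α := LinearMap.continuous_of_finiteDimensional α
  exact closure_minimal (fun x hx => (h x hx).le) (isClosed_Iic.preimage hc) hv

lemma sign_constant (α : DualV 3) (C : Set (Vr 3)) (hC : IsPreconnected C)
    (hne : ∀ x ∈ C, α x ≠ 0) : (∀ x ∈ C, 0 < α x) ∨ (∀ x ∈ C, α x < 0) := by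
  by_contra hcon
  push_neg at hcon
  obtain ⟨⟨x, hx, hx0⟩, ⟨y, hy, hy0⟩⟩ := hcon
  have hxneg : α x < 0 := lt_of_le_of_ne hx0 (hne x hx)
  have hypos : 0 < α y := lt_of_le_of_ne hy0 (Ne.symm (hne y hy))
  have hc : Continuous α := LinearMap.continuous_of_finiteDimensional α
  have him : IsPreconnected (α '' C) := hC.image α hc.continuousOn
  have h0 : (0:ℝ) ∈ α '' C := by
    have := him.Icc_subset (mem_image_of_mem α hx) (mem_image_of_mem α hy)
    exact this ⟨hxneg.le, hypos.le⟩
  obtain ⟨z, hz, hz0⟩ := h0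
  exact hne z hz hz0

lemma fin3_cases (i k : Fin 3) (hik : i ≠ k) :
    ∃ j, j ≠ i ∧ j ≠ k ∧ ∀ m : Fin 3, m ≠ j → m = i ∨ m = k := by
  revert hik; revert i k; decide

end Stmt7Aux
namespace Stmt7Aux

lemma chamber_eq_of_closure_mem {A : Set (Submodule ℝ (Vr 3))} (hS : IsSimplicial A)
    {q z : Vr 3} (hq : q ∈ ArrComplement A) (hz : z ∈ ArrComplement A)
    (hcl : z ∈ closure (connectedComponentIn (ArrComplement A) q)) :
    z ∈ connectedComponentIn (ArrComplement A) q := by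
  obtain ⟨u, hu, hCz⟩ := hS.2.2 _ ⟨z, hz, rfl⟩
  have hopen : IsOpen (connectedComponentIn (ArrComplement A) z) := by
    rw [hCz]; exact openCone_isOpen u hu
  have hzz : z ∈ connectedComponentIn (ArrComplement A) z := mem_connectedComponentIn hz
  obtain ⟨v, hv1, hv2⟩ := mem_closure_iff.mp hcl _ hopen hzz
  have h1 := connectedComponentIn_eq hv1
  have h2 := connectedComponentIn_eq hv2
  rw [h2, ← h1]
  exact hzz

lemma path_closure {A : Set (Submodule ℝ (Vr 3))} {q : Vr 3} (hq : q ∈ ArrComplement A)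
    (z : ℝ → Vr 3) (hzc : Continuous z)
    (hmem : ∀ t ∈ Ioc (0:ℝ) 1, z t ∈ ArrComplement A) (hz1 : z 1 = q) :
    z 0 ∈ closure (connectedComponentIn (ArrComplement A) q) ∧
      ∀ t ∈ Ioc (0:ℝ) 1, z t ∈ connectedComponentIn (ArrComplement A) q := by
  have hpc : IsPreconnected (z '' Ioc (0:ℝ) 1) := isPreconnected_Ioc.image z hzc.continuousOn
  have hqmem : q ∈ z '' Ioc (0:ℝ) 1 := ⟨1, ⟨zero_lt_one, le_refl 1⟩, hz1⟩
  have hsub : z '' Ioc (0:ℝ) 1 ⊆ connectedComponentIn (ArrComplement A) q := by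
    have := hpc.subset_connectedComponentIn hqmem (by rintro v ⟨t, ht, rfl⟩; exact hmem t ht)
    exact this
  constructor
  · have tend : Filter.Tendsto z (nhdsWithin 0 (Ioi 0)) (nhds (z 0)) :=
      (hzc.tendsto 0).mono_left nhdsWithin_le_nhds
    refine mem_closure_of_tendsto tend ?_
    filter_upwards [Ioc_mem_nhdsGT_of_mem (by constructor <;> norm_num : (0:ℝ) ∈ Ico 0 1)]
      with t ht
    exact hsub (mem_image_of_mem z ht)
  · intro t ht
    exact hsub (mem_image_of_mem z ht)

end Stmt7Aux
namespace Stmt7Aux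

lemma openCone_comp_smul (c : Fin 3 → Vr 3) (e : Fin 3 ≃ Fin 3) (s : Fin 3 → ℝ)
    (hs : ∀ i, 0 < s i) : OpenCone (fun i => s i • c (e i)) = OpenCone c := by
  ext v
  constructor
  · rintro ⟨a, ha, rfl⟩
    refine ⟨fun j => a (e.symm j) * s (e.symm j), fun j => mul_pos (ha _) (hs _), ?_⟩
    exact Fintype.sum_equiv e _ _ (fun i => by simp [smul_smul])
  · rintro ⟨a, ha, rfl⟩
    refine ⟨fun i => a (e i) * (s i)⁻¹, fun i => mul_pos (ha _) (inv_pos.mpr (hs i)), ?_⟩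
    refine (Fintype.sum_equiv e _ _ (fun i => ?_)).symm
    rw [smul_smul, mul_assoc, inv_mul_cancel₀ (ne_of_gt (hs i)), mul_one]

lemma zero_not_mem_R {A : Set (Submodule ℝ (Vr 3))} {R : Set (DualV 3)}
    (hS : IsSimplicial A) (hAR : A = (fun α => LinearMap.ker α) '' R) : (0 : DualV 3) ∉ R := by
  intro h0
  have hmem : LinearMap.ker (0 : DualV 3) ∈ A := by rw [hAR]; exact ⟨0, h0, rfl⟩
  obtain ⟨f, hf, hker⟩ := hS.2.1 _ hmem
  apply hf
  apply LinearMap.ext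
  intro v
  have hv : v ∈ LinearMap.ker f := by
    rw [← hker, LinearMap.ker_zero]; trivial
  simpa using hv

lemma wall_dual_basis {A : Set (Submodule ℝ (Vr 3))} {R : Set (DualV 3)}
    {K : Set (Vr 3)} {w : Fin 3 → DualV 3}
    (h : IsCrystArr A R) (hK : IsChamber A K) (hw : IsWallBasis R K w) :
    ∃ b : Fin 3 → Vr 3, LinearIndependent ℝ b ∧ K = OpenCone b ∧
      ∀ i j, w i (b j) = if i = j then 1 else 0 := by
  obtain ⟨hRfin, hS, hAR, hpm, hcryst⟩ := h
  obtain ⟨hwinj, hwr⟩ := hw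
  have h0R : (0 : DualV 3) ∉ R := zero_not_mem_R hS hAR
  obtain ⟨b₀, hb₀, hKO⟩ := hS.2.2 K hK
  have wall_mem : ∀ i, w i ∈ Walls R K := fun i => hwr ▸ mem_range_self i
  have wR : ∀ i, w i ∈ R := fun i => (wall_mem i).1
  have wnn : ∀ i, ∀ x ∈ K, 0 ≤ w i x := fun i => (wall_mem i).2.1
  have wne : ∀ i, w i ≠ 0 := fun i hi => h0R (hi ▸ wR i)
  -- values on b₀ are nonnegative
  have hvnn : ∀ i j, 0 ≤ w i (b₀ j) := by
    intro i j
    have hcl : b₀ j ∈ closure K := by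
      rw [hKO]
      have := mem_closure_openCone b₀ (fun m => if m = j then 1 else 0)
        (fun m => by positivity)
      simpa using this
    have hc : Continuous (w i) := LinearMap.continuous_of_finiteDimensional _
    exact closure_minimal (fun x hx => wnn i x hx) (isClosed_Ici.preimage hc) hcl
  -- not all values zero
  have hnotall : ∀ i, ∃ j, w i (b₀ j) ≠ 0 := by
    intro i
    by_contra hall
    push_neg at hall
    apply wne i
    apply Module.Basis.ext (mkBasis b₀ hb₀)
    intro j
    rw [mkBasis_coe]
    simpa using hall j
  -- no two positive values
  have hno2 : ∀ i, ∀ j1 j2, j1 ≠ j2 → 0 < w i (b₀ j1) → 0 < w i (b₀ j2) → False := by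
    intro i j1 j2 hne h1 h2
    obtain ⟨j3, hj31, hj32, hj3⟩ := fin3_cases j1 j2 hne
    have hsub : (LinearMap.ker (w i) : Set (Vr 3)) ∩ closure K
        ⊆ (Submodule.span ℝ {b₀ j3} : Set (Vr 3)) := by
      rintro v ⟨hvker, hvcl⟩
      have hcoord : ∀ m, 0 ≤ (mkBasis b₀ hb₀).equivFun v m := by
        intro m
        apply closure_openCone_subset b₀ hb₀ _ _
        rwa [← hKO]
      set a := (mkBasis b₀ hb₀).equivFun v with ha
      have hv : v = ∑ m, a m • b₀ m := (sum_equivFun' b₀ hb₀ v).symm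
      have hzero : ∀ m, a m * w i (b₀ m) = 0 := by
        have hsum : ∑ m, a m * w i (b₀ m) = 0 := by
          have : w i v = 0 := hvker
          rw [hv] at this
          simpa [map_sum, map_smul, smul_eq_mul] using this
        have := (Finset.sum_eq_zero_iff_of_nonneg
          (fun m _ => mul_nonneg (hcoord m) (hvnn i m))).mp hsum
        exact fun m => this m (Finset.mem_univ m)
      have ha1 : a j1 = 0 := by
        have := hzero j1
        rcases mul_eq_zero.mp this with h | h
        · exact h
        · exact absurd h (ne_of_gt h1)
      have ha2 : a j2 = 0 := by
        have := hzero j2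
        rcases mul_eq_zero.mp this with h | h
        · exact h
        · exact absurd h (ne_of_gt h2)
      have hv3 : v = a j3 • b₀ j3 := by
        rw [hv, Finset.sum_eq_single j3]
        · intro m _ hm
          rcases hj3 m hm with rfl | rfl
          · rw [ha1, zero_smul]
          · rw [ha2, zero_smul]
        · intro hm; exact absurd (Finset.mem_univ j3) hm
      rw [hv3]
      exact Submodule.smul_mem _ _ (Submodule.mem_span_singleton_self _)
    have hle : LinearMap.ker (w i) ≤ Submodule.span ℝ {b₀ j3} := by
      rw [← (wall_mem i).2.2]
      exact Submodule.span_le.mpr hsub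
    -- finrank of kernel is 2
    have hsurj : Function.Surjective (w i) := by
      intro y
      obtain ⟨x, hx⟩ : ∃ x, w i x ≠ 0 := by
        by_contra hc
        push_neg at hc
        exact wne i (LinearMap.ext fun x => by simpa using hc x)
      exact ⟨(y / w i x) • x, by simp [map_smul, smul_eq_mul, div_mul_cancel₀ _ hx]⟩
    have hrank := LinearMap.finrank_range_add_finrank_ker (w i)
    rw [LinearMap.range_eq_top.mpr hsurj] at hrank
    have hker2 : Module.finrank ℝ (LinearMap.ker (w i)) = 2 := by
      have h3 : Module.finrank ℝ (Vr 3) = 3 := by simp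
      have h1' : Module.finrank ℝ (⊤ : Submodule ℝ ℝ) = 1 := by
        rw [finrank_top]; exact Module.finrank_self ℝ
      omega
    have hspan1 : Module.finrank ℝ (Submodule.span ℝ {b₀ j3}) = 1 :=
      finrank_span_singleton (hb₀.ne_zero j3)
    have := Submodule.finrank_mono hle
    rw [hker2, hspan1] at this
    omega
  -- each wall has exactly one positive value
  have B3 : ∀ i, ∃ j, 0 < w i (b₀ j) ∧ ∀ j', j' ≠ j → w i (b₀ j') = 0 := by
    intro i
    obtain ⟨j, hj⟩ := hnotall i
    have hjpos : 0 < w i (b₀ j) := lt_of_le_of_ne (hvnn i j) (Ne.symm hj)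
    refine ⟨j, hjpos, fun j' hj' => ?_⟩
    by_contra hj'0
    exact hno2 i j' j hj' (lt_of_le_of_ne (hvnn i j') (Ne.symm hj'0)) hjpos
  choose σ hσ1 hσ2 using B3
  have σinj : Function.Injective σ := by
    intro i i' hii
    by_contra hne
    have hwi' : w i' = (w i' (b₀ (σ i)) / w i (b₀ (σ i))) • w i := by
      apply Module.Basis.ext (mkBasis b₀ hb₀)
      intro j
      rw [mkBasis_coe]
      by_cases hj : j = σ i
      · subst hj
        simp only [LinearMap.smul_apply, smul_eq_mul]
        rw [div_mul_cancel₀ _ (ne_of_gt (hσ1 i))]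
      · have h1 : w i' (b₀ j) = 0 := hσ2 i' j (by rw [← hii]; exact hj)
        have h2 : w i (b₀ j) = 0 := hσ2 i j hj
        simp [h1, h2]
    have : w i' ∈ ({w i, -(w i)} : Set (DualV 3)) := by
      rw [← hpm (w i) (wR i)]
      exact ⟨⟨_, hwi'⟩, wR i'⟩
    rcases this with h | h
    · exact hne (hwinj h).symm
    · have := congrArg (fun f => f (b₀ (σ i))) h
      simp only [LinearMap.neg_apply] at this
      have hpos := hσ1 i'
      rw [← hii] at hpos
      linarith [hσ1 i]
  have σbij : Function.Bijective σ := (Finite.injective_iff_bijective).mp σinj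
  let e : Fin 3 ≃ Fin 3 := Equiv.ofBijective σ σbij
  refine ⟨fun i => (w i (b₀ (σ i)))⁻¹ • b₀ (σ i), ?_, ?_, ?_⟩
  · rw [Fintype.linearIndependent_iff]
    intro g hg i
    have := congrArg (w i) hg
    rw [map_sum, map_zero] at this
    have hterm : ∀ m, w i (g m • (w m (b₀ (σ m)))⁻¹ • b₀ (σ m))
        = if m = i then g i else 0 := by
      intro m
      by_cases hm : m = i
      · subst hm
        simp [map_smul, smul_eq_mul, inv_mul_cancel₀ (ne_of_gt (hσ1 m))]
      · have : w i (b₀ (σ m)) = 0 := hσ2 i (σ m) (fun hc => hm (σinj hc))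
        simp [map_smul, smul_eq_mul, this, hm]
    rw [Finset.sum_congr rfl (fun m _ => hterm m)] at this
    simpa using this
  · rw [hKO]
    exact (openCone_comp_smul b₀ e (fun i => (w i (b₀ (σ i)))⁻¹)
      (fun i => inv_pos.mpr (hσ1 i))).symm
  · intro i j
    by_cases hij : i = j
    · subst hij
      simp [map_smul, smul_eq_mul, inv_mul_cancel₀ (ne_of_gt (hσ1 i))]
    · have : w i (b₀ (σ j)) = 0 := hσ2 i (σ j) (fun hc => hij (σinj hc).symm)
      simp [map_smul, smul_eq_mul, this, hij]

end Stmt7Aux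
namespace Stmt7Aux

lemma eval_coords {w : Fin 3 → DualV 3} {b : Fin 3 → Vr 3}
    (hdual : ∀ i j, w i (b j) = if i = j then 1 else 0)
    (d : Fin 3 → ℝ) (j : Fin 3) : (∑ i, d i • w i) (b j) = d j := by
  rw [LinearMap.sum_apply]
  have : ∀ i, (d i • w i) (b j) = if i = j then d j else 0 := by
    intro i
    by_cases hij : i = j
    · subst hij; simp [hdual i i]
    · simp [hdual i j, hij]
  rw [Finset.sum_congr rfl fun i _ => this i]
  simp

lemma int_coords {A : Set (Submodule ℝ (Vr 3))} {R : Set (DualV 3)} {K : Set (Vr 3)}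
    {w : Fin 3 → DualV 3}
    (hcryst : ∀ K', IsChamber A K' → ∀ α ∈ R, α ∈ Submodule.span ℤ (Walls R K'))
    (hK : IsChamber A K) (hwr : Set.range w = Walls R K)
    {α : DualV 3} (hα : α ∈ R) : ∃ d : Fin 3 → ℤ, α = ∑ i, (d i : ℝ) • w i := by
  have hmem := hcryst K hK α hα
  rw [← hwr, Submodule.mem_span_range_iff_exists_fun] at hmem
  obtain ⟨d, hd⟩ := hmem
  refine ⟨d, ?_⟩
  rw [← hd]
  exact Finset.sum_congr rfl fun i _ => (Int.cast_smul_eq_zsmul ℝ (d i) (w i)).symm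

lemma root_sign {A : Set (Submodule ℝ (Vr 3))} {R : Set (DualV 3)}
    (hAR : A = (fun α => LinearMap.ker α) '' R) {α : DualV 3} (hα : α ∈ R)
    (x : Vr 3) :
    (∀ y ∈ connectedComponentIn (ArrComplement A) x, 0 < α y) ∨
    (∀ y ∈ connectedComponentIn (ArrComplement A) x, α y < 0) := by
  apply sign_constant α _ isPreconnected_connectedComponentIn
  intro y hy hy0
  have hyF : y ∈ ArrComplement A := connectedComponentIn_subset _ _ hy
  have hker : LinearMap.ker α ∈ A := by rw [hAR]; exact ⟨α, hα, rfl⟩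
  exact hyF _ hker (LinearMap.mem_ker.mpr hy0)

end Stmt7Aux
set_option maxHeartbeats 4000000 in
/-- Lemma: in rank three, if both localizations `⟨α₁,α₂⟩` and `⟨α₁,α₃⟩` contain only two
positive roots, then the arrangement is reducible. -/
theorem stmt7 (A : Set (Submodule ℝ (Vr 3))) (R : Set (DualV 3)) (h : IsCrystArr A R)
    (K : Set (Vr 3)) (hK : IsChamber A K)
    (w : Fin 3 → DualV 3) (hw : IsWallBasis R K w)
    (h12 : {c ∈ PosRootsAt R w | (fun i => (c i : ℝ)) ∈
      Submodule.span ℝ {Pi.single (0 : Fin 3) (1 : ℝ), Pi.single 1 1}}.ncard = 2)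
    (h13 : {c ∈ PosRootsAt R w | (fun i => (c i : ℝ)) ∈
      Submodule.span ℝ {Pi.single (0 : Fin 3) (1 : ℝ), Pi.single 2 1}}.ncard = 2) :
    ∃ W₁ W₂ : Submodule ℝ (Vr 3), IsCompl W₁ W₂ ∧ W₁ ≠ ⊥ ∧ W₂ ≠ ⊥ ∧
      ∀ H ∈ A, W₁ ≤ H ∨ W₂ ≤ H := by
  classical
  obtain ⟨b, hbind, hKb, hdual⟩ := Stmt7Aux.wall_dual_basis h hK hw
  obtain ⟨hRfin, hS, hAR, hpm, hcryst⟩ := h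
  obtain ⟨hwinj, hwr⟩ := hw
  have h0R : (0 : DualV 3) ∉ R := Stmt7Aux.zero_not_mem_R hS hAR
  have wR : ∀ i, w i ∈ R := fun i => (show w i ∈ Walls R K from hwr ▸ mem_range_self i).1
  obtain ⟨x₀, hx₀, hKeq⟩ := hK
  have negR : ∀ α ∈ R, -α ∈ R := by
    intro α hα
    have hset := hpm α hα
    have hmem : -α ∈ ({α, -α} : Set (DualV 3)) := by right; rfl
    rw [← hset] at hmem
    exact hmem.2
  have bclosure : ∀ j, b j ∈ closure K := by
    intro j
    rw [hKb]
    have := Stmt7Aux.mem_closure_openCone b (fun m => if m = j then 1 else 0)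
      (fun m => by positivity)
    simpa using this
  -- positive representative for each root
  have LH : ∀ α ∈ R, ∃ β ∈ R, LinearMap.ker β = LinearMap.ker α ∧
      ∃ d : Fin 3 → ℤ, β = ∑ i, (d i : ℝ) • w i ∧ (∀ i, 0 ≤ d i) ∧
        (∀ x ∈ K, 0 < β x) := by
    intro α hα
    have hkerneg : LinearMap.ker (-α) = LinearMap.ker α := by
      ext x; simp [LinearMap.mem_ker]
    have main : ∀ β ∈ R, (∀ x ∈ K, 0 < β x) → ∃ d : Fin 3 → ℤ,
        β = ∑ i, (d i : ℝ) • w i ∧ (∀ i, 0 ≤ d i) := by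
      intro β hβ hpos
      obtain ⟨d, hd⟩ := Stmt7Aux.int_coords hcryst ⟨x₀, hx₀, hKeq⟩ hwr hβ
      refine ⟨d, hd, fun i => ?_⟩
      have hnn : 0 ≤ β (b i) :=
        Stmt7Aux.nonneg_on_closure β K hpos (b i) (bclosure i)
      rw [hd, Stmt7Aux.eval_coords hdual (fun i => (d i : ℝ)) i] at hnn
      exact_mod_cast hnn
    rcases Stmt7Aux.root_sign hAR hα x₀ with hsgn | hsgn
    · have hpos : ∀ x ∈ K, 0 < α x := by rw [hKeq]; exact hsgn
      obtain ⟨d, hd, hnn⟩ := main α hα hpos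
      exact ⟨α, hα, rfl, d, hd, hnn, hpos⟩
    · have hpos : ∀ x ∈ K, 0 < (-α) x := by
        rw [hKeq]; intro x hx; simpa using hsgn x hx
      obtain ⟨d, hd, hnn⟩ := main (-α) (negR α hα) hpos
      exact ⟨-α, negR α hα, hkerneg, d, hd, hnn, hpos⟩
  -- finiteness of root coordinates
  have hRootsFin : (RootsAt R w).Finite := by
    have hinj : Set.InjOn (fun c : Fin 3 → ℤ => ∑ i, (c i : ℝ) • w i)
        ((fun c : Fin 3 → ℤ => ∑ i, (c i : ℝ) • w i) ⁻¹' R) := by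
      intro c hc c' hc' heq
      funext j
      have h1 := Stmt7Aux.eval_coords hdual (fun i => (c i : ℝ)) j
      have h2 := Stmt7Aux.eval_coords hdual (fun i => (c' i : ℝ)) j
      have heq' : (∑ i, (c i : ℝ) • w i) = ∑ i, (c' i : ℝ) • w i := heq
      have : (c j : ℝ) = (c' j : ℝ) := by rw [← h1, ← h2, heq']
      exact_mod_cast this
    exact Set.Finite.preimage hinj hRfin
  -- the two pair identities
  have hpairmem : ∀ k : Fin 3, k ≠ 0 →
      (∀ c : Fin 3 → ℤ, c = Pi.single 0 1 ∨ c = Pi.single k 1 →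
        c ∈ {c ∈ PosRootsAt R w | (fun i => (c i : ℝ)) ∈
          Submodule.span ℝ {Pi.single (0 : Fin 3) (1 : ℝ), Pi.single k 1}}) := by
    intro k hk c hc
    have hsingle : ∀ m : Fin 3, (∑ i, ((Pi.single m 1 : Fin 3 → ℤ) i : ℝ) • w i) = w m := by
      intro m
      rw [Finset.sum_eq_single m]
      · simp
      · intro i _ him; simp [Pi.single_eq_of_ne him]
      · intro hm; exact absurd (Finset.mem_univ m) hm
    have hcast : ∀ m : Fin 3, (fun i => ((Pi.single m 1 : Fin 3 → ℤ) i : ℝ))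
        = (Pi.single m 1 : Fin 3 → ℝ) := by
      intro m; funext i
      by_cases him : i = m
      · subst him; simp
      · simp [Pi.single_eq_of_ne him]
    have hnn : ∀ m : Fin 3, ∀ i, (0:ℤ) ≤ (Pi.single m 1 : Fin 3 → ℤ) i := by
      intro m i
      by_cases him : i = m
      · subst him; simp
      · simp [Pi.single_eq_of_ne him]
    rcases hc with rfl | rfl
    · refine ⟨⟨?_, hnn 0⟩, ?_⟩
      · show (∑ i, ((Pi.single 0 1 : Fin 3 → ℤ) i : ℝ) • w i) ∈ R
        rw [hsingle 0]; exact wR 0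
      · rw [hcast 0]
        exact Submodule.subset_span (by left; rfl)
    · refine ⟨⟨?_, hnn k⟩, ?_⟩
      · show (∑ i, ((Pi.single k 1 : Fin 3 → ℤ) i : ℝ) • w i) ∈ R
        rw [hsingle k]; exact wR k
      · rw [hcast k]
        exact Submodule.subset_span (by right; rfl)
  have hpair : ∀ k : Fin 3, k ≠ 0 →
      {c ∈ PosRootsAt R w | (fun i => (c i : ℝ)) ∈
        Submodule.span ℝ {Pi.single (0 : Fin 3) (1 : ℝ), Pi.single k 1}}.ncard = 2 →
      ({Pi.single 0 1, Pi.single k 1} : Set (Fin 3 → ℤ)) =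
      {c ∈ PosRootsAt R w | (fun i => (c i : ℝ)) ∈
        Submodule.span ℝ {Pi.single (0 : Fin 3) (1 : ℝ), Pi.single k 1}} := by
    intro k hk hcard
    have hne01 : (Pi.single 0 1 : Fin 3 → ℤ) ≠ Pi.single k 1 := by
      intro hcontra
      have := congrFun hcontra 0
      rw [Pi.single_eq_same, Pi.single_eq_of_ne (Ne.symm hk)] at this
      exact one_ne_zero this
    apply Set.eq_of_subset_of_ncard_le
    · rintro c (rfl | rfl)
      · exact hpairmem k hk _ (Or.inl rfl)
      · exact hpairmem k hk _ (Or.inr rfl)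
    · rw [hcard, Set.ncard_pair hne01]
    · exact Set.Finite.subset hRootsFin (fun c hc => hc.1.1)
  -- exclusion of mixed roots supported on a coordinate plane
  have EX : ∀ k : Fin 3, ∀ k' : Fin 3, k ≠ 0 → k' ≠ 0 → k ≠ k' →
      {c ∈ PosRootsAt R w | (fun i => (c i : ℝ)) ∈
        Submodule.span ℝ {Pi.single (0 : Fin 3) (1 : ℝ), Pi.single k 1}}.ncard = 2 →
      ∀ d : Fin 3 → ℤ, (∑ i, (d i : ℝ) • w i) ∈ R → (∀ i, 0 ≤ d i) →
      0 < d 0 → 0 < d k → d k' = 0 → False := by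
    intro k k' hk hk' hkk' hcard d hdR hdnn h0 hkpos hk'0
    have hdmem : d ∈ {c ∈ PosRootsAt R w | (fun i => (c i : ℝ)) ∈
        Submodule.span ℝ {Pi.single (0 : Fin 3) (1 : ℝ), Pi.single k 1}} := by
      refine ⟨⟨hdR, hdnn⟩, ?_⟩
      have hfun : (fun i => (d i : ℝ)) =
          (d 0 : ℝ) • (Pi.single 0 1 : Fin 3 → ℝ) + (d k : ℝ) • (Pi.single k 1 : Fin 3 → ℝ) := by
        funext i
        have hall : ∀ m : Fin 3, m = 0 ∨ m = k ∨ m = k' := by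
          have h3 : ∀ m : Fin 3, ∀ a b c : Fin 3, a ≠ b → b ≠ c → a ≠ c →
              m = a ∨ m = b ∨ m = c := by decide
          intro m; exact h3 m 0 k k' (Ne.symm hk) hkk' (Ne.symm hk')
        rcases hall i with rfl | rfl | rfl
        · simp [Pi.single_eq_of_ne (Ne.symm hk)]
        · simp [Pi.single_eq_of_ne hk]
        · simp [Pi.single_eq_of_ne hk', Pi.single_eq_of_ne hkk'.symm, hk'0]
      rw [hfun]
      exact Submodule.add_mem _
        (Submodule.smul_mem _ _ (Submodule.subset_span (by left; rfl)))
        (Submodule.smul_mem _ _ (Submodule.subset_span (by right; rfl)))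
    rw [← hpair k hk hcard] at hdmem
    rcases hdmem with rfl | rfl
    · rw [Pi.single_eq_of_ne hk] at hkpos
      exact lt_irrefl _ hkpos
    · rw [Pi.single_eq_of_ne (Ne.symm hk)] at h0
      exact lt_irrefl _ h0
  have EX12 : ∀ d : Fin 3 → ℤ, (∑ i, (d i : ℝ) • w i) ∈ R → (∀ i, 0 ≤ d i) →
      0 < d 0 → 0 < d 1 → d 2 = 0 → False :=
    EX 1 2 (by decide) (by decide) (by decide) h12
  have EX13 : ∀ d : Fin 3 → ℤ, (∑ i, (d i : ℝ) • w i) ∈ R → (∀ i, 0 ≤ d i) →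
      0 < d 0 → 0 < d 2 → d 1 = 0 → False :=
    EX 2 1 (by decide) (by decide) (by decide) h13
  -- classification of positive roots
  have CLS : ∀ d : Fin 3 → ℤ, (∑ i, (d i : ℝ) • w i) ∈ R → (∀ i, 0 ≤ d i) →
      (d 0 = 0 ∧ (0 < d 1 ∨ 0 < d 2)) ∨ (0 < d 0 ∧ d 1 = 0 ∧ d 2 = 0) ∨
      (0 < d 0 ∧ 0 < d 1 ∧ 0 < d 2) := by
    intro d hdR hdnn
    have hnz : ¬(d 0 = 0 ∧ d 1 = 0 ∧ d 2 = 0) := by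
      rintro ⟨h0, h1, h2⟩
      apply h0R
      have : (∑ i, (d i : ℝ) • w i) = 0 := by
        rw [Fin.sum_univ_three]
        simp [h0, h1, h2]
      rwa [this] at hdR
    rcases (hdnn 0).lt_or_eq with h0 | h0
    · rcases (hdnn 1).lt_or_eq with h1 | h1
      · rcases (hdnn 2).lt_or_eq with h2 | h2
        · exact Or.inr (Or.inr ⟨h0, h1, h2⟩)
        · exact (EX12 d hdR hdnn h0 h1 h2.symm).elim
      · rcases (hdnn 2).lt_or_eq with h2 | h2
        · exact (EX13 d hdR hdnn h0 h2 h1.symm).elim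
        · exact Or.inr (Or.inl ⟨h0, h1.symm, h2.symm⟩)
    · rcases (hdnn 1).lt_or_eq with h1 | h1
      · exact Or.inl ⟨h0.symm, Or.inl h1⟩
      · rcases (hdnn 2).lt_or_eq with h2 | h2
        · exact Or.inl ⟨h0.symm, Or.inr h2⟩
        · exact absurd ⟨h0.symm, h1.symm, h2.symm⟩ hnz
  -- bound and epsilon
  obtain ⟨M, hM⟩ : ∃ M : ℝ, ∀ β ∈ R, β (b 0) ≤ M := by
    rcases (hRfin.image (fun β : DualV 3 => β (b 0))).bddAbove with ⟨M, hM⟩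
    exact ⟨M, fun β hβ => hM (mem_image_of_mem _ hβ)⟩
  set ε : ℝ := (max M 0 + 1)⁻¹ with hεdef
  have hεpos : 0 < ε := by
    rw [hεdef]
    have : (0:ℝ) ≤ max M 0 := le_max_right M 0
    positivity
  have hsmall : ∀ d : Fin 3 → ℤ, (∑ i, (d i : ℝ) • w i) ∈ R → 0 < d 0 →
      ε * (d 0 : ℝ) < 1 := by
    intro d hdR h0
    have hval : ((d 0 : ℝ)) = (∑ i, (d i : ℝ) • w i) (b 0) :=
      (Stmt7Aux.eval_coords hdual (fun i => (d i : ℝ)) 0).symm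
    have hle : (d 0 : ℝ) ≤ max M 0 := le_trans (by rw [hval]; exact hM _ hdR) (le_max_left M 0)
    have h1 : (d 0 : ℝ) < max M 0 + 1 := by linarith
    have h2 : ε * (d 0 : ℝ) < ε * (max M 0 + 1) := by
      exact mul_lt_mul_of_pos_left h1 hεpos
    have h3 : ε * (max M 0 + 1) = 1 := by
      rw [hεdef]
      field_simp
    linarith
  -- value computation helpers
  have happly : ∀ (γ' : DualV 3) (l1 l2 l0 : ℝ),
      γ' (l1 • b 1 + l2 • b 2 + l0 • b 0)
      = l1 * γ' (b 1) + l2 * γ' (b 2) + l0 * γ' (b 0) := by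
    intro γ' l1 l2 l0
    rw [map_add, map_add, map_smul, map_smul, map_smul]
    simp [smul_eq_mul]
  have hval3 : ∀ (d' : Fin 3 → ℤ) (v : Vr 3), (∑ i, (d' i : ℝ) • w i) v
      = (d' 0 : ℝ) * w 0 v + (d' 1 : ℝ) * w 1 v + (d' 2 : ℝ) * w 2 v := by
    intro d' v
    rw [Fin.sum_univ_three]
    simp [smul_eq_mul]
  have hevalb : ∀ (β' : DualV 3) (d' : Fin 3 → ℤ), β' = (∑ i, (d' i : ℝ) • w i) →
      ∀ j, β' (b j) = (d' j : ℝ) := by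
    intro β' d' hb' j
    rw [hb']
    exact Stmt7Aux.eval_coords hdual (fun i => (d' i : ℝ)) j
  -- main goal
  refine ⟨Submodule.span ℝ {b 0}, LinearMap.ker (w 0), ⟨?_, ?_⟩, ?_, ?_, ?_⟩
  · rw [Submodule.disjoint_def]
    intro x hx1 hx2
    obtain ⟨t, rfl⟩ := Submodule.mem_span_singleton.mp hx1
    have hx2' : w 0 (t • b 0) = 0 := hx2
    rw [map_smul, hdual 0 0] at hx2'
    simp at hx2'
    rw [hx2', zero_smul]
  · rw [codisjoint_iff, eq_top_iff]
    intro v _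
    rw [Submodule.mem_sup]
    refine ⟨w 0 v • b 0, Submodule.smul_mem _ _ (Submodule.mem_span_singleton_self _),
      v - w 0 v • b 0, ?_, by abel⟩
    show w 0 (v - w 0 v • b 0) = 0
    rw [map_sub, map_smul, hdual 0 0]
    simp
  · rw [Ne, Submodule.span_singleton_eq_bot]
    intro hb0
    have h00 := hdual 0 0
    rw [hb0] at h00
    simp at h00
  · intro hbot
    have hmem : b 1 ∈ LinearMap.ker (w 0) := by
      show w 0 (b 1) = 0
      rw [hdual 0 1]; simp
    rw [hbot] at hmem
    have h11 := hdual 1 1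
    rw [show b 1 = 0 from hmem] at h11
    simp at h11
  · intro H hH
    obtain ⟨α, hα, hHα⟩ : ∃ α ∈ R, LinearMap.ker α = H := by
      rw [hAR] at hH
      obtain ⟨α, hα, hk⟩ := hH
      exact ⟨α, hα, hk⟩
    obtain ⟨β, hβR, hkerβ, d, hβsum, hdnn, hβpos⟩ := LH α hα
    have hβRsum : (∑ i, (d i : ℝ) • w i) ∈ R := hβsum ▸ hβR
    rcases CLS d hβRsum hdnn with ⟨hd0, _⟩ | ⟨hd0, hd1, hd2⟩ | ⟨hd0, hd1, hd2⟩
    · left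
      rw [← hHα, ← hkerβ, Submodule.span_le]
      rw [Set.singleton_subset_iff]
      show β (b 0) = 0
      rw [hevalb β d hβsum 0, hd0]
      simp
    · right
      rw [← hHα, ← hkerβ]
      intro x hx
      have hx0 : w 0 x = 0 := hx
      show β x = 0
      rw [hβsum, hval3, hx0, hd1, hd2]
      simp
    · -- Step F: a totally positive root leads to a contradiction
      exfalso
      set q : Vr 3 := (1:ℝ) • b 1 + (1:ℝ) • b 2 + (-(ε * 1)) • b 0 with hqdef
      -- generic membership of path points in the complement
      have hptF : ∀ l1 l2 m : ℝ, 0 < l1 → 0 < l2 → 0 < m → m ≤ l1 → m ≤ l2 →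
          (l1 • b 1 + l2 • b 2 + (-(ε * m)) • b 0) ∈ ArrComplement A := by
        intro l1 l2 m hl1 hl2 hm hml1 hml2 H' hH' hmemH'
        obtain ⟨α', hα', hH'α⟩ : ∃ α' ∈ R, LinearMap.ker α' = H' := by
          rw [hAR] at hH'
          obtain ⟨α', hα', hk'⟩ := hH'
          exact ⟨α', hα', hk'⟩
        obtain ⟨β', hβ'R, hker', d', hsum', hdnn', _⟩ := LH α' hα'
        have hmemβ' : β' (l1 • b 1 + l2 • b 2 + (-(ε * m)) • b 0) = 0 := by
          have : (l1 • b 1 + l2 • b 2 + (-(ε * m)) • b 0) ∈ LinearMap.ker β' := by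
            rw [hker', hH'α]; exact hmemH'
          exact this
        rw [happly, hevalb β' d' hsum' 0, hevalb β' d' hsum' 1, hevalb β' d' hsum' 2] at hmemβ'
        have hd'R : (∑ i, (d' i : ℝ) • w i) ∈ R := hsum' ▸ hβ'R
        rcases CLS d' hd'R hdnn' with ⟨hc0, hc12⟩ | ⟨hc0, hc1, hc2⟩ | ⟨hc0, hc1, hc2⟩
        · have hc0' : (d' 0 : ℝ) = 0 := by exact_mod_cast hc0
          rw [hc0', mul_zero, add_zero] at hmemβ'
          rcases hc12 with hc1 | hc2
          · have h1 : (1:ℝ) ≤ (d' 1 : ℝ) := by exact_mod_cast hc1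
            have h2 : (0:ℝ) ≤ (d' 2 : ℝ) := by exact_mod_cast hdnn' 2
            linarith [mul_le_mul_of_nonneg_left h1 hl1.le, mul_nonneg hl2.le h2]
          · have h1 : (0:ℝ) ≤ (d' 1 : ℝ) := by exact_mod_cast hdnn' 1
            have h2 : (1:ℝ) ≤ (d' 2 : ℝ) := by exact_mod_cast hc2
            linarith [mul_le_mul_of_nonneg_left h2 hl2.le, mul_nonneg hl1.le h1]
        · have hc1' : (d' 1 : ℝ) = 0 := by exact_mod_cast hc1
          have hc2' : (d' 2 : ℝ) = 0 := by exact_mod_cast hc2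
          have h0 : (1:ℝ) ≤ (d' 0 : ℝ) := by exact_mod_cast hc0
          rw [hc1', hc2', mul_zero, mul_zero, add_zero, zero_add] at hmemβ'
          have hp : 0 < ε * m := mul_pos hεpos hm
          nlinarith [mul_le_mul_of_nonneg_left h0 hp.le]
        · have h0 : (0:ℝ) < (d' 0 : ℝ) := by exact_mod_cast hc0
          have h1 : (1:ℝ) ≤ (d' 1 : ℝ) := by exact_mod_cast hc1
          have h2 : (1:ℝ) ≤ (d' 2 : ℝ) := by exact_mod_cast hc2
          have hsm := hsmall d' hd'R hc0
          have k1 : m * (ε * (d' 0:ℝ)) < m * 1 := by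
            exact mul_lt_mul_of_pos_left hsm hm
          have k2 : m * (1:ℝ) ≤ m * (d' 1 : ℝ) := by
            exact mul_le_mul_of_nonneg_left h1 hm.le
          have k3 : m * (d' 1:ℝ) ≤ l1 * (d' 1:ℝ) := by
            apply mul_le_mul_of_nonneg_right hml1
            linarith
          have k4 : (0:ℝ) < l2 * (d' 2:ℝ) := by nlinarith
          nlinarith [k1, k2, k3, k4]
      have hqF : q ∈ ArrComplement A := by
        rw [hqdef]
        exact hptF 1 1 1 one_pos one_pos one_pos le_rfl le_rfl
      set K' : Set (Vr 3) := connectedComponentIn (ArrComplement A) q with hK'def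
      obtain ⟨u, huind, hK'O⟩ := hS.2.2 K' ⟨q, hqF, rfl⟩
      -- values of the walls at q
      have hwq0 : w 0 q = -ε := by
        rw [hqdef, happly, hdual 0 1, hdual 0 2, hdual 0 0]
        simp
      have hwq1 : w 1 q = 1 := by
        rw [hqdef, happly, hdual 1 1, hdual 1 2, hdual 1 0]
        simp
      have hwq2 : w 2 q = 1 := by
        rw [hqdef, happly, hdual 2 1, hdual 2 2, hdual 2 0]
        simp
      have hqK' : q ∈ K' := mem_connectedComponentIn hqF
      have hw0neg : ∀ y ∈ K', w 0 y < 0 := by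
        rcases Stmt7Aux.root_sign hAR (wR 0) q with hs' | hs'
        · exfalso
          have := hs' q hqK'
          rw [hwq0] at this
          linarith
        · exact hs'
      have hw1pos : ∀ y ∈ K', 0 < w 1 y := by
        rcases Stmt7Aux.root_sign hAR (wR 1) q with hs' | hs'
        · exact hs'
        · exfalso
          have := hs' q hqK'
          rw [hwq1] at this
          linarith
      have hw2pos : ∀ y ∈ K', 0 < w 2 y := by
        rcases Stmt7Aux.root_sign hAR (wR 2) q with hs' | hs'
        · exact hs'
        · exfalso
          have := hs' q hqK'
          rw [hwq2] at this
          linarith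
      -- b 1 and b 2 are in the closure of K'
      have hb2cl : b 2 ∈ closure K' := by
        have hpath := Stmt7Aux.path_closure hqF
          (fun t : ℝ => t • b 1 + (1:ℝ) • b 2 + (-(ε * t)) • b 0)
          (by continuity)
          (fun t ht => hptF t 1 t ht.1 one_pos ht.1 le_rfl ht.2)
          (by rw [hqdef])
        have := hpath.1
        simpa using this
      have hb1cl : b 1 ∈ closure K' := by
        have hpath := Stmt7Aux.path_closure hqF
          (fun t : ℝ => (1:ℝ) • b 1 + t • b 2 + (-(ε * t)) • b 0)
          (by continuity)
          (fun t ht => hptF 1 t t one_pos ht.1 ht.1 ht.2 le_rfl)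
          (by rw [hqdef])
        have := hpath.1
        simpa using this
      -- case on the sign of β on K'
      rcases Stmt7Aux.root_sign hAR hβR q with hg | hg
      swap
      · -- β negative on K' contradicts β (b 2) = d 2 > 0
        have hle := Stmt7Aux.nonpos_on_closure β K' hg (b 2) hb2cl
        rw [hevalb β d hβsum 2] at hle
        have : (0:ℝ) < (d 2 : ℝ) := by exact_mod_cast hd2
        linarith
      -- now β > 0 on K'
      have hucl : ∀ m', u m' ∈ closure K' := by
        intro m'
        rw [hK'O]
        have := Stmt7Aux.mem_closure_openCone u (fun i => if i = m' then 1 else 0)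
          (fun i => by positivity)
        simpa using this
      have hw0u : ∀ m', w 0 (u m') ≤ 0 :=
        fun m' => Stmt7Aux.nonpos_on_closure (w 0) K' hw0neg (u m') (hucl m')
      have hw1u : ∀ m', 0 ≤ w 1 (u m') :=
        fun m' => Stmt7Aux.nonneg_on_closure (w 1) K' hw1pos (u m') (hucl m')
      have hw2u : ∀ m', 0 ≤ w 2 (u m') :=
        fun m' => Stmt7Aux.nonneg_on_closure (w 2) K' hw2pos (u m') (hucl m')
      -- coordinates of b 1 and b 2 with respect to u
      set a1 : Fin 3 → ℝ := (Stmt7Aux.mkBasis u huind).equivFun (b 1) with ha1def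
      set a2 : Fin 3 → ℝ := (Stmt7Aux.mkBasis u huind).equivFun (b 2) with ha2def
      have ha1nn : ∀ m', 0 ≤ a1 m' := by
        intro m'
        exact Stmt7Aux.closure_openCone_subset u huind (by rw [← hK'O]; exact hb1cl) m'
      have ha2nn : ∀ m', 0 ≤ a2 m' := by
        intro m'
        exact Stmt7Aux.closure_openCone_subset u huind (by rw [← hK'O]; exact hb2cl) m'
      have hb1sum : b 1 = ∑ m', a1 m' • u m' := (Stmt7Aux.sum_equivFun' u huind (b 1)).symm
      have hb2sum : b 2 = ∑ m', a2 m' • u m' := (Stmt7Aux.sum_equivFun' u huind (b 2)).symm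
      -- vanishing products for w 0
      have hprod : ∀ (a : Fin 3 → ℝ) (v : Vr 3), v = ∑ m', a m' • u m' → (∀ m', 0 ≤ a m') →
          w 0 v = 0 → ∀ m', a m' * w 0 (u m') = 0 := by
        intro a v hv hann hv0
        have hsum0 : ∑ m', a m' * w 0 (u m') = 0 := by
          rw [hv] at hv0
          rw [map_sum] at hv0
          rw [Finset.sum_congr rfl (fun m' _ => by rw [map_smul, smul_eq_mul])] at hv0
          exact hv0
        have := (Finset.sum_eq_zero_iff_of_nonpos (fun m' _ =>
          mul_nonpos_iff.mpr (Or.inl ⟨hann m', hw0u m'⟩))).mp hsum0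
        exact fun m' => this m' (Finset.mem_univ m')
      have hw0b1 : w 0 (b 1) = 0 := by rw [hdual 0 1]; simp
      have hw0b2 : w 0 (b 2) = 0 := by rw [hdual 0 2]; simp
      have hprod1 := hprod a1 (b 1) hb1sum ha1nn hw0b1
      have hprod2 := hprod a2 (b 2) hb2sum ha2nn hw0b2
      -- there is an index where w 0 is negative on u
      obtain ⟨k, hk⟩ : ∃ k, w 0 (u k) < 0 := by
        by_contra hcon
        push_neg at hcon
        have hz : ∀ m', w 0 (u m') = 0 := fun m' => le_antisymm (hw0u m') (hcon m')
        have hw00 : w 0 = 0 := by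
          apply Module.Basis.ext (Stmt7Aux.mkBasis u huind)
          intro j
          rw [Stmt7Aux.mkBasis_coe]
          simp [hz j]
        have h00 := hdual 0 0
        rw [hw00] at h00
        simp at h00
      have ha1k : a1 k = 0 := by
        rcases mul_eq_zero.mp (hprod1 k) with h' | h'
        · exact h'
        · exact absurd h' (ne_of_lt hk)
      have ha2k : a2 k = 0 := by
        rcases mul_eq_zero.mp (hprod2 k) with h' | h'
        · exact h'
        · exact absurd h' (ne_of_lt hk)
      -- w 0 vanishes on the other two generators
      have huniq : ∀ m', m' ≠ k → w 0 (u m') = 0 := by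
        intro i hik
        by_contra hi0
        have hineg : w 0 (u i) < 0 := lt_of_le_of_ne (hw0u i) hi0
        obtain ⟨j, hji, hjk, hj⟩ := Stmt7Aux.fin3_cases i k hik
        have ha1i : a1 i = 0 := by
          rcases mul_eq_zero.mp (hprod1 i) with h' | h'
          · exact h'
          · exact absurd h' (ne_of_lt hineg)
        have ha2i : a2 i = 0 := by
          rcases mul_eq_zero.mp (hprod2 i) with h' | h'
          · exact h'
          · exact absurd h' (ne_of_lt hineg)
        have hb1j : b 1 = a1 j • u j := by
          rw [hb1sum, Finset.sum_eq_single j]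
          · intro m' _ hm'
            rcases hj m' hm' with rfl | rfl
            · rw [ha1i, zero_smul]
            · rw [ha1k, zero_smul]
          · intro hm'; exact absurd (Finset.mem_univ j) hm'
        have hb2j : b 2 = a2 j • u j := by
          rw [hb2sum, Finset.sum_eq_single j]
          · intro m' _ hm'
            rcases hj m' hm' with rfl | rfl
            · rw [ha2i, zero_smul]
            · rw [ha2k, zero_smul]
          · intro hm'; exact absurd (Finset.mem_univ j) hm'
        have e1 : a1 j * w 1 (u j) = 1 := by
          have h' : w 1 (b 1) = 1 := by rw [hdual 1 1]; simp
          rw [hb1j, map_smul, smul_eq_mul] at h'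
          exact h'
        have e2 : a2 j * w 1 (u j) = 0 := by
          have h' : w 1 (b 2) = 0 := by rw [hdual 1 2]; simp
          rw [hb2j, map_smul, smul_eq_mul] at h'
          exact h'
        have e3 : a2 j * w 2 (u j) = 1 := by
          have h' : w 2 (b 2) = 1 := by rw [hdual 2 2]; simp
          rw [hb2j, map_smul, smul_eq_mul] at h'
          exact h'
        have ha2j : a2 j ≠ 0 := by
          intro h'
          rw [h', zero_mul] at e3
          exact zero_ne_one e3
        have hw1uj : w 1 (u j) = 0 := by
          rcases mul_eq_zero.mp e2 with h' | h'
          · exact absurd h' ha2j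
          · exact h'
        rw [hw1uj, mul_zero] at e1
        exact zero_ne_one e1
      -- expansion of vectors in terms of the dual basis
      have expand : ∀ v : Vr 3, v = ∑ i, w i v • b i := by
        have heq : (∑ i, LinearMap.smulRight (w i) (b i)) = (LinearMap.id : Vr 3 →ₗ[ℝ] Vr 3) := by
          apply Module.Basis.ext (Stmt7Aux.mkBasis b hbind)
          intro j
          rw [Stmt7Aux.mkBasis_coe, LinearMap.sum_apply, LinearMap.id_apply]
          have hterm : ∀ i, LinearMap.smulRight (w i) (b i) (b j) = if i = j then b j else 0 := by
            intro i
            rw [LinearMap.smulRight_apply, hdual i j]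
            by_cases hij : i = j
            · subst hij; simp
            · simp [hij]
          rw [Finset.sum_congr rfl fun i _ => hterm i]
          simp
        intro v
        have hv := congrArg (fun f : Vr 3 →ₗ[ℝ] Vr 3 => f v) heq
        simp only [LinearMap.sum_apply, LinearMap.smulRight_apply, LinearMap.id_apply] at hv
        exact hv.symm
      -- find generators that are positive multiples of b 1 and b 2
      have hfind1 : ∃ m', m' ≠ k ∧ 0 < w 1 (u m') ∧ u m' = w 1 (u m') • b 1 := by
        have hsum1 : ∑ m', a1 m' * w 1 (u m') = 1 := by
          have hv := congrArg (w 1) hb1sum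
          rw [map_sum, Finset.sum_congr rfl
            (fun m' (_ : m' ∈ Finset.univ) => by rw [map_smul, smul_eq_mul])] at hv
          rw [← hv, hdual 1 1]
          simp
        have hsum2 : ∑ m', a1 m' * w 2 (u m') = 0 := by
          have hv := congrArg (w 2) hb1sum
          rw [map_sum, Finset.sum_congr rfl
            (fun m' (_ : m' ∈ Finset.univ) => by rw [map_smul, smul_eq_mul])] at hv
          rw [← hv, hdual 2 1]
          simp
        have hz2 : ∀ m', a1 m' * w 2 (u m') = 0 := by
          have := (Finset.sum_eq_zero_iff_of_nonneg (fun m' _ =>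
            mul_nonneg (ha1nn m') (hw2u m'))).mp hsum2
          exact fun m' => this m' (Finset.mem_univ m')
        obtain ⟨m', hm'⟩ : ∃ m', a1 m' * w 1 (u m') ≠ 0 := by
          by_contra hall
          push_neg at hall
          rw [Finset.sum_congr rfl (fun m' (_ : m' ∈ Finset.univ) => hall m')] at hsum1
          simp at hsum1
        have hane : a1 m' ≠ 0 := fun h' => hm' (by rw [h', zero_mul])
        have hwm' : 0 < w 1 (u m') := by
          rcases (hw1u m').lt_or_eq with h' | h'
          · exact h'
          · exact absurd (by rw [← h', mul_zero]) hm'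
        have hm'k : m' ≠ k := by
          intro h'
          rw [h', ha1k, zero_mul] at hm'
          exact hm' rfl
        have hw2m' : w 2 (u m') = 0 := by
          rcases mul_eq_zero.mp (hz2 m') with h' | h'
          · exact absurd h' hane
          · exact h'
        have hw0m' : w 0 (u m') = 0 := huniq m' hm'k
        have hexp := expand (u m')
        rw [Fin.sum_univ_three, hw0m', hw2m'] at hexp
        simp only [zero_smul, zero_add, add_zero] at hexp
        exact ⟨m', hm'k, hwm', hexp⟩
      have hfind2 : ∃ m', m' ≠ k ∧ 0 < w 2 (u m') ∧ u m' = w 2 (u m') • b 2 := by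
        have hsum1 : ∑ m', a2 m' * w 2 (u m') = 1 := by
          have hv := congrArg (w 2) hb2sum
          rw [map_sum, Finset.sum_congr rfl
            (fun m' (_ : m' ∈ Finset.univ) => by rw [map_smul, smul_eq_mul])] at hv
          rw [← hv, hdual 2 2]
          simp
        have hsum2 : ∑ m', a2 m' * w 1 (u m') = 0 := by
          have hv := congrArg (w 1) hb2sum
          rw [map_sum, Finset.sum_congr rfl
            (fun m' (_ : m' ∈ Finset.univ) => by rw [map_smul, smul_eq_mul])] at hv
          rw [← hv, hdual 1 2]
          simp
        have hz2 : ∀ m', a2 m' * w 1 (u m') = 0 := by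
          have := (Finset.sum_eq_zero_iff_of_nonneg (fun m' _ =>
            mul_nonneg (ha2nn m') (hw1u m'))).mp hsum2
          exact fun m' => this m' (Finset.mem_univ m')
        obtain ⟨m', hm'⟩ : ∃ m', a2 m' * w 2 (u m') ≠ 0 := by
          by_contra hall
          push_neg at hall
          rw [Finset.sum_congr rfl (fun m' (_ : m' ∈ Finset.univ) => hall m')] at hsum1
          simp at hsum1
        have hane : a2 m' ≠ 0 := fun h' => hm' (by rw [h', zero_mul])
        have hwm' : 0 < w 2 (u m') := by
          rcases (hw2u m').lt_or_eq with h' | h'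
          · exact h'
          · exact absurd (by rw [← h', mul_zero]) hm'
        have hm'k : m' ≠ k := by
          intro h'
          rw [h', ha2k, zero_mul] at hm'
          exact hm' rfl
        have hw1m' : w 1 (u m') = 0 := by
          rcases mul_eq_zero.mp (hz2 m') with h' | h'
          · exact absurd h' hane
          · exact h'
        have hw0m' : w 0 (u m') = 0 := huniq m' hm'k
        have hexp := expand (u m')
        rw [Fin.sum_univ_three, hw0m', hw1m'] at hexp
        simp only [zero_smul, zero_add, add_zero] at hexp
        exact ⟨m', hm'k, hwm', hexp⟩
      -- pigeonhole: a hyperplane through u m' and u k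
      have PH : ∀ m', m' ≠ k → ∃ β' : DualV 3, β' ∈ R ∧ β' (u m') = 0 ∧ β' (u k) = 0 := by
        intro m' hm'k
        obtain ⟨j, hjm, hjk, hj⟩ := Stmt7Aux.fin3_cases m' k hm'k
        have hcoeff : ∀ t : ℝ,
            ∑ i, ((if i = m' then (1:ℝ) else 0) + (if i = k then t else 0)) • u i
            = u m' + t • u k := by
          intro t
          rw [Finset.sum_congr rfl
            (fun i (_ : i ∈ Finset.univ) => add_smul _ _ (u i)), Finset.sum_add_distrib]
          congr 1
          · simp [ite_smul]
          · simp [ite_smul]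
        have hnn : ∀ t : ℝ, 0 ≤ t →
            ∀ i, 0 ≤ ((if i = m' then (1:ℝ) else 0) + (if i = k then t else 0)) := by
          intro t ht i
          split_ifs <;> norm_num <;> linarith
        have hcl : ∀ t : ℝ, 0 ≤ t → u m' + t • u k ∈ closure K' := by
          intro t ht
          rw [hK'O]
          have := Stmt7Aux.mem_closure_openCone u _ (hnn t ht)
          rwa [hcoeff t] at this
        have hnotK' : ∀ t : ℝ, 0 < t → u m' + t • u k ∉ K' := by
          intro t ht hmem
          rw [hK'O] at hmem
          obtain ⟨av, hav, havs⟩ := hmem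
          have h2 := Stmt7Aux.equivFun_sum u huind
            (fun i => (if i = m' then (1:ℝ) else 0) + (if i = k then t else 0))
          have hae : av = fun i => ((if i = m' then (1:ℝ) else 0) + (if i = k then t else 0)) := by
            rw [← Stmt7Aux.equivFun_sum u huind av, ← h2]
            congr 1
            rw [← havs, hcoeff t]
          have havj : av j = 0 := by
            rw [hae]
            simp [hjm, hjk]
          have := hav j
          rw [havj] at this
          exact lt_irrefl 0 this
        have hhyp : ∀ t ∈ Ioc (0:ℝ) 1, ∃ H' ∈ A, u m' + t • u k ∈ H' := by
          intro t ht
          by_contra hcon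
          push_neg at hcon
          have hF' : u m' + t • u k ∈ ArrComplement A := fun H' hH' => hcon H' hH'
          exact hnotK' t ht.1
            (Stmt7Aux.chamber_eq_of_closure_mem hS hqF hF' (hcl t ht.1.le))
        choose! f hfA hfm using hhyp
        obtain ⟨t1, ht1, t2, ht2, htne, hfe⟩ :=
          (Set.Ioc_infinite zero_lt_one).exists_ne_map_eq_of_mapsTo
            (fun t ht => hfA t ht) hS.1
        have hm1 := hfm t1 ht1
        have hm2 := hfm t2 ht2
        rw [hfe] at hm1
        have hdiff : (t1 - t2) • u k ∈ f t2 := by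
          have hsub := Submodule.sub_mem _ hm1 hm2
          have heq2 : (u m' + t1 • u k) - (u m' + t2 • u k) = (t1 - t2) • u k := by
            rw [sub_smul]
            abel
          rwa [heq2] at hsub
        have huk : u k ∈ f t2 := by
          have := Submodule.smul_mem _ (t1 - t2)⁻¹ hdiff
          rwa [smul_smul, inv_mul_cancel₀ (sub_ne_zero.mpr htne), one_smul] at this
        have hum : u m' ∈ f t2 := by
          have := Submodule.sub_mem _ hm2 (Submodule.smul_mem _ t2 huk)
          simpa using this
        obtain ⟨α', hα', hfα⟩ : ∃ α' ∈ R, LinearMap.ker α' = f t2 := by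
          have hfA2 := hfA t2 ht2
          rw [hAR] at hfA2
          obtain ⟨α', hα', hk'⟩ := hfA2
          exact ⟨α', hα', hk'⟩
        refine ⟨α', hα', ?_, ?_⟩
        · have : u m' ∈ LinearMap.ker α' := by rw [hfα]; exact hum
          exact this
        · have : u k ∈ LinearMap.ker α' := by rw [hfα]; exact huk
          exact this
      obtain ⟨m1, hm1k, hw1m1, hum1⟩ := hfind1
      obtain ⟨m2, hm2k, hw2m2, hum2⟩ := hfind2
      have hw2uk : w 2 (u k) = 0 := by
        obtain ⟨β0, hβ0R, hβ0m, hβ0k⟩ := PH m1 hm1k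
        obtain ⟨β1', hβ1'R, hker1, d1, hsum1, hd1nn, _⟩ := LH β0 hβ0R
        have hβ1'm : β1' (u m1) = 0 := by
          have hmm : u m1 ∈ LinearMap.ker β0 := hβ0m
          rw [← hker1] at hmm
          exact hmm
        have hβ1'k : β1' (u k) = 0 := by
          have hmm : u k ∈ LinearMap.ker β0 := hβ0k
          rw [← hker1] at hmm
          exact hmm
        have hd11 : d1 1 = 0 := by
          have hb1v : β1' (b 1) = 0 := by
            rw [hum1, map_smul, smul_eq_mul] at hβ1'm
            rcases mul_eq_zero.mp hβ1'm with h' | h'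
            · exact absurd h' (ne_of_gt hw1m1)
            · exact h'
          rw [hevalb β1' d1 hsum1 1] at hb1v
          exact_mod_cast hb1v
        have hkey : (d1 0:ℝ) * w 0 (u k) + (d1 1:ℝ) * w 1 (u k) + (d1 2:ℝ) * w 2 (u k) = 0 := by
          rw [← hval3 d1 (u k), ← hsum1]
          exact hβ1'k
        have hd1R : (∑ i, (d1 i:ℝ) • w i) ∈ R := hsum1 ▸ hβ1'R
        rcases CLS d1 hd1R hd1nn with ⟨hc0, hc12⟩ | ⟨hc0, hc1, hc2⟩ | ⟨hc0, hc1, hc2⟩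
        · have hc2' : 0 < d1 2 := by
            rcases hc12 with h' | h'
            · exact absurd hd11 (ne_of_gt h')
            · exact h'
          have hc0' : (d1 0:ℝ) = 0 := by exact_mod_cast hc0
          have hd11' : (d1 1:ℝ) = 0 := by exact_mod_cast hd11
          rw [hc0', hd11', zero_mul, zero_mul, zero_add, zero_add] at hkey
          rcases mul_eq_zero.mp hkey with h' | h'
          · exfalso
            have : (0:ℝ) < (d1 2:ℝ) := by exact_mod_cast hc2'
            rw [h'] at this
            exact lt_irrefl 0 this
          · exact h'
        · exfalso
          have hc1' : (d1 1:ℝ) = 0 := by exact_mod_cast hc1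
          have hc2' : (d1 2:ℝ) = 0 := by exact_mod_cast hc2
          rw [hc1', hc2', zero_mul, zero_mul, add_zero, add_zero] at hkey
          rcases mul_eq_zero.mp hkey with h' | h'
          · have : (0:ℝ) < (d1 0:ℝ) := by exact_mod_cast hc0
            rw [h'] at this
            exact lt_irrefl 0 this
          · rw [h'] at hk
            exact lt_irrefl 0 hk
        · exact absurd hd11 (ne_of_gt hc1)
      have hw1uk : w 1 (u k) = 0 := by
        obtain ⟨β0, hβ0R, hβ0m, hβ0k⟩ := PH m2 hm2k
        obtain ⟨β2', hβ2'R, hker2, d2, hsum2, hd2nn, _⟩ := LH β0 hβ0R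
        have hβ2'm : β2' (u m2) = 0 := by
          have hmm : u m2 ∈ LinearMap.ker β0 := hβ0m
          rw [← hker2] at hmm
          exact hmm
        have hβ2'k : β2' (u k) = 0 := by
          have hmm : u k ∈ LinearMap.ker β0 := hβ0k
          rw [← hker2] at hmm
          exact hmm
        have hd22 : d2 2 = 0 := by
          have hb2v : β2' (b 2) = 0 := by
            rw [hum2, map_smul, smul_eq_mul] at hβ2'm
            rcases mul_eq_zero.mp hβ2'm with h' | h'
            · exact absurd h' (ne_of_gt hw2m2)
            · exact h'
          rw [hevalb β2' d2 hsum2 2] at hb2v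
          exact_mod_cast hb2v
        have hkey : (d2 0:ℝ) * w 0 (u k) + (d2 1:ℝ) * w 1 (u k) + (d2 2:ℝ) * w 2 (u k) = 0 := by
          rw [← hval3 d2 (u k), ← hsum2]
          exact hβ2'k
        have hd2R : (∑ i, (d2 i:ℝ) • w i) ∈ R := hsum2 ▸ hβ2'R
        rcases CLS d2 hd2R hd2nn with ⟨hc0, hc12⟩ | ⟨hc0, hc1, hc2⟩ | ⟨hc0, hc1, hc2⟩
        · have hc1' : 0 < d2 1 := by
            rcases hc12 with h' | h'
            · exact h'
            · exact absurd hd22 (ne_of_gt h')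
          have hc0' : (d2 0:ℝ) = 0 := by exact_mod_cast hc0
          have hd22' : (d2 2:ℝ) = 0 := by exact_mod_cast hd22
          rw [hc0', hd22', zero_mul, zero_mul, zero_add, add_zero] at hkey
          rcases mul_eq_zero.mp hkey with h' | h'
          · exfalso
            have : (0:ℝ) < (d2 1:ℝ) := by exact_mod_cast hc1'
            rw [h'] at this
            exact lt_irrefl 0 this
          · exact h'
        · exfalso
          have hc1' : (d2 1:ℝ) = 0 := by exact_mod_cast hc1
          have hc2' : (d2 2:ℝ) = 0 := by exact_mod_cast hc2
          rw [hc1', hc2', zero_mul, zero_mul, add_zero, add_zero] at hkey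
          rcases mul_eq_zero.mp hkey with h' | h'
          · have : (0:ℝ) < (d2 0:ℝ) := by exact_mod_cast hc0
            rw [h'] at this
            exact lt_irrefl 0 this
          · rw [h'] at hk
            exact lt_irrefl 0 hk
        · exact absurd hd22 (ne_of_gt hc2)
      -- final contradiction
      have hγuk : 0 ≤ β (u k) := Stmt7Aux.nonneg_on_closure β K' hg (u k) (hucl k)
      have hβuk : β (u k) = (d 0:ℝ) * w 0 (u k) := by
        rw [hβsum, hval3, hw1uk, hw2uk]
        ring
      have hd0' : (0:ℝ) < (d 0:ℝ) := by exact_mod_cast hd0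
      have : β (u k) < 0 := by
        rw [hβuk]
        exact mul_neg_of_pos_of_neg hd0' hk
      linarith

end
end
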